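/- arXiv:2009.10761 — 11 statements merged into one kernel-verified Lean document; each statement's English description precedes it below -/
import Mathlib

section
/- There is a universal constant C > 0 with the following property. Let G = (V,E) be a finite simple graph on n ≥ 2 vertices and let a* ≥ 1 be an integer such that every nonempty subgraph H of G satisfies |E(H)| ≤ a*·|V(H)|. Then for every ε ∈ (0,1) there exists a partition of V into classes H_1, …, H_k with k ≤ ⌈C·(log n)/ε⌉ such that for every i and every vertex v ∈ H_i, the number of neighbors of v lying in H_i ∪ H_{i+1} ∪ … ∪ H_k is at most ⌊(2+ε)·a*⌋. -/
open Finset SimpleGraph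

section Aux

variable {V : Type} [Fintype V] [DecidableEq V]

/-- The restriction of a graph to a vertex subset, as a graph on the same vertex type. -/
private def Gres (G : SimpleGraph V) (S : Finset V) : SimpleGraph V where
  Adj u v := G.Adj u v ∧ u ∈ S ∧ v ∈ S
  symm := ⟨fun u v ⟨h, hu, hv⟩ => ⟨h.symm, hv, hu⟩⟩
  loopless := ⟨fun v ⟨h, _, _⟩ => G.irrefl h⟩

private instance (G : SimpleGraph V) [DecidableRel G.Adj] (S : Finset V) :
    DecidableRel (Gres G S).Adj := fun _ _ => instDecidableAnd

private lemma gres_edge_card (G : SimpleGraph V) [DecidableRel G.Adj] (S : Finset V) :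
    (Gres G S).edgeFinset.card =
      ({e | e ∈ G.edgeSet ∧ ∀ x ∈ e, x ∈ S} : Set (Sym2 V)).ncard := by
  have hset : (Gres G S).edgeSet = {e | e ∈ G.edgeSet ∧ ∀ x ∈ e, x ∈ S} := by
    ext e
    induction e with
    | _ u v =>
      simp only [SimpleGraph.mem_edgeSet, Set.mem_setOf_eq, Gres, Sym2.mem_iff]
      constructor
      · rintro ⟨h, hu, hv⟩
        refine ⟨h, ?_⟩
        rintro x (rfl | rfl) <;> assumption
      · rintro ⟨h, hx⟩
        exact ⟨h, hx u (Or.inl rfl), hx v (Or.inr rfl)⟩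
  rw [← hset, ← Set.ncard_coe_finset, SimpleGraph.coe_edgeFinset]

private lemma gres_degree (G : SimpleGraph V) [DecidableRel G.Adj] (S : Finset V)
    {v : V} (hv : v ∈ S) :
    (Gres G S).degree v = ((G.neighborFinset v).filter (fun u => u ∈ S)).card := by
  rw [SimpleGraph.degree]
  congr 1
  ext u
  rw [SimpleGraph.mem_neighborFinset]
  simp only [SimpleGraph.mem_neighborFinset, Finset.mem_filter, Gres]
  tauto

/-- One step of the peeling: vertices with few (≤ d) remaining neighbors are removed,
those with many remain. -/
private def peel (G : SimpleGraph V) [DecidableRel G.Adj] (d : ℕ) : ℕ → Finset V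
  | 0 => Finset.univ
  | i + 1 => (peel G d i).filter
      (fun v => d < ((G.neighborFinset v).filter (fun u => u ∈ peel G d i)).card)

private lemma peel_anti (G : SimpleGraph V) [DecidableRel G.Adj] (d : ℕ) :
    ∀ {i j : ℕ}, i ≤ j → peel G d j ⊆ peel G d i := by
  have : Antitone (fun i => peel G d i) := by
    apply antitone_nat_of_succ_le
    intro i
    exact Finset.filter_subset _ _
  intro i j h
  exact this h

/-- The key counting step: at most a `1 - ε/3` fraction of vertices survive one peeling step. -/
private lemma shrink_step (G : SimpleGraph V) [DecidableRel G.Adj] (astar : ℕ)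
    (h1 : 1 ≤ astar)
    (hb : ∀ S : Finset V, (Gres G S).edgeFinset.card ≤ astar * S.card)
    (ε : ℝ) (hε0 : 0 < ε) (hε1 : ε < 1) (S : Finset V) :
    ((S.filter (fun v =>
        ⌊(2 + ε) * (astar : ℝ)⌋₊ < ((G.neighborFinset v).filter (fun u => u ∈ S)).card)).card : ℝ)
      ≤ (1 - ε / 3) * S.card := by
  set d : ℕ := ⌊(2 + ε) * (astar : ℝ)⌋₊ with hd
  set B : Finset V := S.filter (fun v =>
      d < ((G.neighborFinset v).filter (fun u => u ∈ S)).card) with hB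
  -- natural number inequality: (d+1) * |B| ≤ 2 * astar * |S|
  have hnat : (d + 1) * B.card ≤ 2 * (astar * S.card) := by
    have h1' : (d + 1) * B.card ≤ ∑ v ∈ B, (Gres G S).degree v := by
      calc (d + 1) * B.card = ∑ _v ∈ B, (d + 1) := by
            rw [Finset.sum_const, smul_eq_mul, mul_comm]
        _ ≤ ∑ v ∈ B, (Gres G S).degree v := by
            refine Finset.sum_le_sum ?_
            intro v hv
            rw [hB, Finset.mem_filter] at hv
            rw [gres_degree G S hv.1]
            exact hv.2
    have h2' : ∑ v ∈ B, (Gres G S).degree v ≤ ∑ v, (Gres G S).degree v :=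
      Finset.sum_le_sum_of_subset (Finset.subset_univ B)
    have h3' : ∑ v, (Gres G S).degree v = 2 * (Gres G S).edgeFinset.card :=
      SimpleGraph.sum_degrees_eq_twice_card_edges _
    have h4' : (Gres G S).edgeFinset.card ≤ astar * S.card := hb S
    omega
  -- move to the reals
  have hdR : ((2 : ℝ) + ε) * astar < (d : ℝ) + 1 := by
    have := Nat.lt_floor_add_one ((2 + ε) * (astar : ℝ))
    push_cast
    linarith
  have hastar : (1 : ℝ) ≤ (astar : ℝ) := by exact_mod_cast h1
  have hnatR : ((d : ℝ) + 1) * B.card ≤ 2 * ((astar : ℝ) * S.card) := by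
    exact_mod_cast hnat
  have hBpos : (0 : ℝ) ≤ (B.card : ℝ) := Nat.cast_nonneg _
  have hSpos : (0 : ℝ) ≤ (S.card : ℝ) := Nat.cast_nonneg _
  -- (2+ε) * astar * B ≤ 2 * astar * S, divide by astar
  have key : ((2 : ℝ) + ε) * (B.card : ℝ) ≤ 2 * (S.card : ℝ) := by
    have h5 : ((2 : ℝ) + ε) * (astar : ℝ) * B.card ≤ ((d : ℝ) + 1) * B.card := by
      apply mul_le_mul_of_nonneg_right (le_of_lt hdR) hBpos
    have h6 : ((2 : ℝ) + ε) * (astar : ℝ) * B.card ≤ 2 * ((astar : ℝ) * S.card) :=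
      le_trans h5 hnatR
    have hap : (0 : ℝ) < (astar : ℝ) := lt_of_lt_of_le one_pos hastar
    nlinarith [h6, hap]
  have h2e : (0 : ℝ) < 2 + ε := by linarith
  have hint : (0 : ℝ) ≤ (S.card : ℝ) * (ε * (1 - ε)) :=
    mul_nonneg hSpos (mul_nonneg hε0.le (by linarith))
  have h7 : (2 + ε) * (B.card : ℝ) ≤ (2 + ε) * ((1 - ε / 3) * S.card) := by nlinarith [key, hint]
  exact le_of_mul_le_mul_left h7 h2e

end Aux

/-- There is a universal constant `C > 0` such that every finite simple graph `G`
on `n ≥ 2` vertices with pseudoarboricity bound `a* ≥ 1` (every vertex subset `S` spans at most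
`a*·|S|` edges), and every `ε ∈ (0,1)`, admits a partition of the vertex set into classes
`H_1, …, H_k` (encoded as `f : V → Fin k`) with `k ≤ ⌈C·(log n)/ε⌉` such that each vertex `v`
has at most `⌊(2+ε)·a*⌋` neighbors in its own class or later classes. -/
theorem forest_decomposition_H_partition :
    ∃ C : ℝ, 0 < C ∧
      ∀ (V : Type) [Fintype V] [DecidableEq V] (G : SimpleGraph V) [DecidableRel G.Adj]
        (astar : ℕ), 1 ≤ astar →
        2 ≤ Fintype.card V →
        (∀ S : Finset V,
          ({e | e ∈ G.edgeSet ∧ ∀ x ∈ e, x ∈ S} : Set (Sym2 V)).ncard ≤ astar * S.card) →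
        ∀ ε : ℝ, 0 < ε → ε < 1 →
        ∃ (k : ℕ) (f : V → Fin k),
          k ≤ ⌈C * Real.log (Fintype.card V) / ε⌉₊ ∧
          ∀ v : V,
            ((G.neighborFinset v).filter (fun u => f v ≤ f u)).card
              ≤ ⌊(2 + ε) * (astar : ℝ)⌋₊ := by
  refine ⟨4, by norm_num, ?_⟩
  intro V _ _ G _ astar h1 hn hbound ε hε0 hε1
  classical
  set n : ℕ := Fintype.card V with hnn
  set d : ℕ := ⌊(2 + ε) * (astar : ℝ)⌋₊ with hd
  have hb : ∀ S : Finset V, (Gres G S).edgeFinset.card ≤ astar * S.card := by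
    intro S
    rw [gres_edge_card]
    exact hbound S
  -- cardinalities shrink geometrically
  have hq0 : (0 : ℝ) < 1 - ε / 3 := by linarith
  have hq1 : (1 : ℝ) - ε / 3 < 1 := by linarith
  have hcard : ∀ i : ℕ, ((peel G d i).card : ℝ) ≤ (n : ℝ) * (1 - ε / 3) ^ i := by
    intro i
    induction i with
    | zero => simp [peel, hnn]
    | succ i ih =>
      have step := shrink_step G astar h1 hb ε hε0 hε1 (peel G d i)
      calc ((peel G d (i + 1)).card : ℝ)
          ≤ (1 - ε / 3) * (peel G d i).card := step
        _ ≤ (1 - ε / 3) * ((n : ℝ) * (1 - ε / 3) ^ i) := by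
            apply mul_le_mul_of_nonneg_left ih (le_of_lt hq0)
        _ = (n : ℝ) * (1 - ε / 3) ^ (i + 1) := by ring
  set k : ℕ := ⌈(4 : ℝ) * Real.log n / ε⌉₊ with hk
  have hlogn : (0 : ℝ) < Real.log n := by
    apply Real.log_pos
    exact_mod_cast lt_of_lt_of_le one_lt_two hn
  -- peel G d k is empty
  have hkbig : (3 : ℝ) * Real.log n / ε < (k : ℝ) := by
    have h4 : (4 : ℝ) * Real.log n / ε ≤ (k : ℝ) := Nat.le_ceil _
    have : (3 : ℝ) * Real.log n / ε < 4 * Real.log n / ε := by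
      apply div_lt_div_of_pos_right (by linarith) hε0
    linarith
  have hempty : peel G d k = ∅ := by
    have hlt : ((peel G d k).card : ℝ) < 1 := by
      have hexp : (1 - ε / 3 : ℝ) ≤ Real.exp (-(ε / 3)) := by
        have := Real.add_one_le_exp (-(ε / 3))
        linarith
      have hpow : ((1 - ε / 3 : ℝ)) ^ k ≤ Real.exp (-(ε / 3)) ^ k :=
        pow_le_pow_left₀ (le_of_lt hq0) hexp k
      have hexp2 : Real.exp (-(ε / 3)) ^ k = Real.exp (-((k : ℝ) * ε / 3)) := by
        rw [← Real.exp_nat_mul]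
        congr 1
        ring
      have hlog : Real.log n < (k : ℝ) * ε / 3 := by
        have h := hkbig
        rw [div_lt_iff₀ hε0] at h
        nlinarith [hlogn, hε0]
      have hn0 : (0 : ℝ) < (n : ℝ) := by
        have : (2 : ℝ) ≤ (n : ℝ) := by exact_mod_cast hn
        linarith
      have hfinal : (n : ℝ) * Real.exp (-((k : ℝ) * ε / 3)) < 1 := by
        have hee : Real.exp (-((k : ℝ) * ε / 3)) < Real.exp (-Real.log n) :=
          Real.exp_lt_exp.mpr (by linarith)
        have hmul : (n : ℝ) * Real.exp (-((k : ℝ) * ε / 3))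
            < (n : ℝ) * Real.exp (-Real.log n) := mul_lt_mul_of_pos_left hee hn0
        rw [Real.exp_neg (Real.log (n : ℝ)), Real.exp_log hn0] at hmul
        rwa [mul_inv_cancel₀ (ne_of_gt hn0)] at hmul
      calc ((peel G d k).card : ℝ) ≤ (n : ℝ) * (1 - ε / 3) ^ k := hcard k
        _ ≤ (n : ℝ) * Real.exp (-((k : ℝ) * ε / 3)) := by
            rw [← hexp2]
            apply mul_le_mul_of_nonneg_left hpow (Nat.cast_nonneg _)
        _ < 1 := hfinal
    have : (peel G d k).card = 0 := by exact_mod_cast Nat.lt_one_iff.mp (by exact_mod_cast hlt)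
    exact Finset.card_eq_zero.mp this
  have hk1 : 1 ≤ k := by
    by_contra h
    push_neg at h
    interval_cases k
    · rw [show peel G d 0 = (Finset.univ : Finset V) from rfl] at hempty
      have : n = 0 := by
        rw [hnn, ← Finset.card_univ, hempty, Finset.card_empty]
      omega
  -- define the coloring
  have hex : ∀ v : V, ∃ i : ℕ, v ∉ peel G d (i + 1) := by
    intro v
    refine ⟨k - 1, ?_⟩
    rw [Nat.sub_add_cancel hk1, hempty]
    exact Finset.notMem_empty v
  let m : V → ℕ := fun v => Nat.find (hex v)
  have hmk : ∀ v, m v < k := by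
    intro v
    have : m v ≤ k - 1 := Nat.find_le (by
      rw [Nat.sub_add_cancel hk1, hempty]; exact Finset.notMem_empty v)
    omega
  have hmem : ∀ v, v ∈ peel G d (m v) := by
    intro v
    rcases Nat.eq_zero_or_pos (m v) with h0 | hpos
    · rw [h0]
      exact Finset.mem_univ v
    · obtain ⟨j, hj⟩ := Nat.exists_eq_succ_of_ne_zero (Nat.pos_iff_ne_zero.mp hpos)
      have hj' : Nat.find (hex v) = j + 1 := hj
      have := Nat.find_min (hex v) (m := j) (by omega)
      rw [hj]
      simpa using this
  have hdeg : ∀ v, ((G.neighborFinset v).filter (fun u => u ∈ peel G d (m v))).card ≤ d := by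
    intro v
    have hnot : v ∉ peel G d (m v + 1) := Nat.find_spec (hex v)
    by_contra h
    push_neg at h
    apply hnot
    rw [show peel G d (m v + 1) = (peel G d (m v)).filter
        (fun w => d < ((G.neighborFinset w).filter (fun u => u ∈ peel G d (m v))).card) from rfl]
    exact Finset.mem_filter.mpr ⟨hmem v, h⟩
  refine ⟨k, fun v => ⟨m v, hmk v⟩, le_refl _, ?_⟩
  intro v
  refine le_trans (Finset.card_le_card ?_) (hdeg v)
  intro u hu
  rw [Finset.mem_filter] at hu ⊢
  refine ⟨hu.1, ?_⟩
  have hle : m v ≤ m u := hu.2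
  exact peel_anti G d hle (hmem u)
end

section
/- Let G = (V,E) be a finite simple graph admitting an acyclic orientation in which every vertex has outdegree at most t (an assignment of a direction to each edge such that the resulting directed graph has no directed cycle and each vertex has at most t outgoing edges). Suppose each edge e is given a finite palette Q(e) of colors with |Q(e)| ≥ t. Then there is a choice φ(e) ∈ Q(e) for every edge e such that for each color c the set of edges with φ(e) = c contains no cycle (i.e., φ is a list forest decomposition). -/
/-- If a finite simple graph `G` has an acyclic orientation (encoded by `σ`
assigning to each edge its source endpoint, with no directed cycle) in which every vertex has
outdegree at most `t`, and every edge has a palette of at least `t` colors, then `G` has a list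
forest decomposition: each edge gets a color from its palette so that every color class is
acyclic. -/
theorem list_forest_decomposition_of_acyclic_orientation
    {V 𝒞 : Type*} [Fintype V] (G : SimpleGraph V)
    (t : ℕ) (σ : Sym2 V → V)
    (hσ : ∀ e ∈ G.edgeSet, σ e ∈ e)
    (hacyc : ∀ v : V, ¬ Relation.TransGen (fun u w => G.Adj u w ∧ σ s(u, w) = u) v v)
    (hout : ∀ v : V, ({e | e ∈ G.edgeSet ∧ σ e = v} : Set (Sym2 V)).ncard ≤ t)
    (Q : Sym2 V → Finset 𝒞) (hQ : ∀ e ∈ G.edgeSet, t ≤ (Q e).card) :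
    ∃ φ : Sym2 V → Option 𝒞,
      (∀ e ∈ G.edgeSet, ∃ c ∈ Q e, φ e = some c) ∧
      ∀ c : 𝒞,
        (SimpleGraph.fromEdgeSet {e | e ∈ G.edgeSet ∧ φ e = some c}).IsAcyclic := by
  classical
  set O : V → Set (Sym2 V) := fun v => {e | e ∈ G.edgeSet ∧ σ e = v} with hOdef
  -- system of distinct representatives for the out-edges of each vertex
  have hSDR : ∀ v : V, ∃ f : O v → 𝒞, Function.Injective f ∧ ∀ e : O v, f e ∈ Q e.1 := by
    intro v
    haveI : Fintype (O v) := (Set.toFinite (O v)).fintype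
    apply (Finset.all_card_le_biUnion_card_iff_exists_injective (fun e : O v => Q e.1)).mp
    intro s
    rcases s.eq_empty_or_nonempty with rfl | ⟨i, hi⟩
    · simp
    · calc s.card ≤ Fintype.card (O v) := s.card_le_univ
        _ = (O v).ncard := by rw [← Nat.card_coe_set_eq, Nat.card_eq_fintype_card]
        _ ≤ t := hout v
        _ ≤ (Q i.1).card := hQ i.1 i.2.1
        _ ≤ (s.biUnion fun e : O v => Q e.1).card :=
            Finset.card_le_card (Finset.subset_biUnion_of_mem (fun e : O v => Q e.1) hi)
  choose f hfinj hfmem using hSDR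
  refine ⟨fun e => if h : e ∈ G.edgeSet then some (f (σ e) ⟨e, h, rfl⟩) else none, ?_, ?_⟩
  · intro e he
    exact ⟨f (σ e) ⟨e, he, rfl⟩, hfmem (σ e) ⟨e, he, rfl⟩, dif_pos he⟩
  · intro c
    set φ : Sym2 V → Option 𝒞 :=
      fun e => if h : e ∈ G.edgeSet then some (f (σ e) ⟨e, h, rfl⟩) else none with hφdef
    have hφcanon : ∀ (u : V) (e : Sym2 V) (he : e ∈ G.edgeSet) (hu : σ e = u),
        φ e = some (f u ⟨e, he, hu⟩) := by
      intro u e he hu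
      subst hu
      simp [hφdef, dif_pos he]
    intro v p hp
    -- edges of the cycle lie in G and have color c
    have hedge : ∀ e ∈ p.edges, e ∈ G.edgeSet ∧ φ e = some c := by
      intro e he
      have := p.edges_subset_edgeSet he
      rw [SimpleGraph.edgeSet_fromEdgeSet] at this
      exact this.1
    have hnil : ¬ p.Nil := hp.not_nil
    -- injectivity of the source map on cycle edges
    have hinj : ∀ e ∈ p.edges, ∀ e' ∈ p.edges, σ e = σ e' → e = e' := by
      intro e he e' he' hσe
      obtain ⟨heG, hec⟩ := hedge e he
      obtain ⟨heG', hec'⟩ := hedge e' he'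
      rw [hφcanon (σ e) e heG rfl] at hec
      rw [hφcanon (σ e) e' heG' hσe.symm] at hec'
      have := hfinj (σ e) (Option.some_injective _ (hec.trans hec'.symm))
      exact congrArg Subtype.val this
    -- counting: σ maps cycle edges bijectively onto cycle vertices (support tail)
    have hmapsto : ∀ e ∈ p.edges, σ e ∈ p.support.tail := by
      intro e he
      have heG := (hedge e he).1
      have hmem : σ e ∈ p.support := by
        induction e with
        | h x y =>
          rcases Sym2.mem_iff.mp (hσ _ heG) with h | h
          · rw [h]; exact p.fst_mem_support_of_mem_edges he
          · rw [h]; exact p.snd_mem_support_of_mem_edges he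
      rw [← SimpleGraph.Walk.support_tail_of_not_nil p hnil]
      rcases List.mem_cons.mp ((SimpleGraph.Walk.cons_support_tail hnil) ▸ hmem) with h | h
      · rw [h]; exact p.tail.end_mem_support
      · exact h
    have hmem_tail : ∀ x ∈ p.support, x ∈ p.support.tail := by
      intro x hx
      rw [← SimpleGraph.Walk.support_tail_of_not_nil p hnil]
      rcases List.mem_cons.mp ((SimpleGraph.Walk.cons_support_tail hnil) ▸ hx) with h | h
      · rw [h]; exact p.tail.end_mem_support
      · exact h
    have himage : p.edges.toFinset.image σ = p.support.tail.toFinset := by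
      apply Finset.eq_of_subset_of_card_le
      · intro x hx
        obtain ⟨e, he, rfl⟩ := Finset.mem_image.mp hx
        exact List.mem_toFinset.mpr (hmapsto e (List.mem_toFinset.mp he))
      · rw [Finset.card_image_of_injOn (fun e he e' he' h =>
          hinj e (List.mem_toFinset.mp he) e' (List.mem_toFinset.mp he') h)]
        rw [List.toFinset_card_of_nodup hp.support_nodup,
          List.toFinset_card_of_nodup hp.edges_nodup]
        rw [SimpleGraph.Walk.length_edges]
        have h1 : p.support.tail.length + 1 = p.length + 1 := by
          rw [← SimpleGraph.Walk.length_support]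
          rcases p.support.eq_nil_or_concat with h | h
          · simp [SimpleGraph.Walk.support_ne_nil] at h
          · cases hs : p.support with
            | nil => exact absurd hs p.support_ne_nil
            | cons a l => simp [hs]
        omega
    -- every cycle vertex has an out-edge to another cycle vertex; contradict acyclicity
    set R : V → V → Prop := fun u w => G.Adj u w ∧ σ s(u, w) = u with hR
    have hstep : ∀ x ∈ p.support.tail, ∃ y ∈ p.support.tail, R x y := by
      intro x hx
      have : x ∈ p.edges.toFinset.image σ := himage ▸ List.mem_toFinset.mpr hx
      obtain ⟨e, he, hse⟩ := Finset.mem_image.mp this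
      have he' : e ∈ p.edges := List.mem_toFinset.mp he
      have heG := (hedge e he').1
      have hxe : x ∈ e := hse ▸ hσ e heG
      set y := Sym2.Mem.other hxe with hy
      have hey : s(x, y) = e := Sym2.other_spec hxe
      refine ⟨y, ?_, ?_, by rw [hey, hse]⟩
      · apply hmem_tail
        exact p.snd_mem_support_of_mem_edges (hey ▸ he')
      · exact G.mem_edgeSet.mp (hey ▸ heG)
    -- well-foundedness of the inverse transitive closure
    set r : V → V → Prop := fun a b => Relation.TransGen R b a with hr
    haveI : IsTrans V r := ⟨fun a b c hab hbc => Relation.TransGen.trans hbc hab⟩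
    haveI : IsIrrefl V r := ⟨fun a ha => hacyc a ha⟩
    have wf := Finite.wellFounded_of_trans_of_irrefl r
    have hvS : v ∈ {x | x ∈ p.support.tail} := hmem_tail v p.end_mem_support
    obtain ⟨m, hmS, hmin⟩ := wf.has_min {x | x ∈ p.support.tail} ⟨v, hvS⟩
    obtain ⟨y, hyS, hRy⟩ := hstep m hmS
    exact hmin y hyS (Relation.TransGen.single hRy)
end

section
/- Let G = (V,E) be a finite simple graph admitting an acyclic orientation in which every vertex has outdegree at most d (i.e., G has degeneracy at most d). Suppose each edge e is given a finite palette Q(e) of colors with |Q(e)| ≥ 2d. Then there is a choice φ(e) ∈ Q(e) for every edge e such that for each color c the set of edges with φ(e) = c is a star forest. -/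
theorem exists_phi {V 𝒞 : Type*} [Fintype V] (G : SimpleGraph V)
    (d : ℕ) (σ : Sym2 V → V)
    (hσ : ∀ e ∈ G.edgeSet, σ e ∈ e)
    (hacyc : ∀ v : V, ¬ Relation.TransGen (fun u w => G.Adj u w ∧ σ s(u, w) = u) v v)
    (hout : ∀ v : V, ({e | e ∈ G.edgeSet ∧ σ e = v} : Set (Sym2 V)).ncard ≤ d)
    (Q : Sym2 V → Finset 𝒞) (hQ : ∀ e ∈ G.edgeSet, 2 * d ≤ (Q e).card) :
    ∃ φ : Sym2 V → Option 𝒞,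
      (∀ e ∈ G.edgeSet, ∃ c ∈ Q e, φ e = some c) ∧
      (∀ e ∈ G.edgeSet, ∀ e' ∈ G.edgeSet, e' ≠ e → σ e' = σ e → φ e ≠ φ e') ∧
      (∀ e ∈ G.edgeSet, ∀ e' ∈ G.edgeSet, σ e' ∈ e → σ e' ≠ σ e → φ e ≠ φ e') := by
  classical
  obtain ⟨enc, henc⟩ : ∃ f : Sym2 V → ℕ, Function.Injective f :=
    (countable_iff_exists_injective (Sym2 V)).mp inferInstance
  set r : V → V → Prop := fun u w => G.Adj u w ∧ σ s(u, w) = u with hr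
  set hd : Sym2 V → V := fun e => if h : e ∈ G.edgeSet then Sym2.Mem.other (hσ e h) else σ e with hhd
  have hd_spec : ∀ e, e ∈ G.edgeSet → s(σ e, hd e) = e := by
    intro e he
    simp only [hhd, dif_pos he]
    exact Sym2.other_spec _
  have hd_ne : ∀ e, e ∈ G.edgeSet → σ e ≠ hd e := by
    intro e he hEq
    have hdiag := G.not_isDiag_of_mem_edgeSet he
    rw [← hd_spec e he] at hdiag
    exact hdiag (Sym2.mk_isDiag_iff.mpr hEq)
  set T : V → V → Prop := fun a b => Relation.TransGen r b a with hT
  have wfT : WellFounded T := by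
    haveI h1 : IsTrans V T := ⟨fun a b c h1 h2 => Relation.TransGen.trans h2 h1⟩
    haveI h2 : IsIrrefl V T := ⟨fun a h => hacyc a h⟩
    exact Finite.wellFounded_of_trans_of_irrefl T
  set rE : Sym2 V → Sym2 V → Prop :=
    fun e' e => T (σ e') (σ e) ∨ (σ e' = σ e ∧ enc e' < enc e) with hrE
  have wfE : WellFounded rE := by
    have hw : WellFounded (Prod.Lex T (fun m n : ℕ => m < n)) :=
      wfT.prod_lex (Nat.lt_wfRel.wf)
    refine Subrelation.wf ?_ (InvImage.wf (fun e => (σ e, enc e)) hw)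
    rintro e' e (h | ⟨h1, h2⟩)
    · exact Prod.Lex.left _ _ h
    · show Prod.Lex T _ (σ e', enc e') (σ e, enc e)
      rw [h1]
      exact Prod.Lex.right _ h2
  set Out : V → Finset (Sym2 V) :=
    fun v => Finset.univ.filter (fun e' => e' ∈ G.edgeSet ∧ σ e' = v) with hOut
  have hOutd : ∀ v, (Out v).card ≤ d := by
    intro v
    have hset : ((Out v : Finset (Sym2 V)) : Set (Sym2 V)) = {e | e ∈ G.edgeSet ∧ σ e = v} := by
      ext e; simp [hOut]
    calc (Out v).card = ((Out v : Finset (Sym2 V)) : Set (Sym2 V)).ncard :=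
          (Set.ncard_coe_finset _).symm
      _ ≤ d := by rw [hset]; exact hout v
  set R : Sym2 V → Finset (Sym2 V) := fun e =>
    Finset.univ.filter
      (fun e' => e' ∈ G.edgeSet ∧ (σ e' = hd e ∨ (σ e' = σ e ∧ enc e' < enc e))) with hR
  have hrel : ∀ e, e ∈ G.edgeSet → ∀ e' ∈ R e, rE e' e := by
    intro e he e' he'
    simp only [hR, Finset.mem_filter, Finset.mem_univ, true_and] at he'
    rcases he'.2 with h | h
    · left
      refine Relation.TransGen.single ?_
      rw [h]
      refine ⟨?_, ?_⟩
      · rw [← SimpleGraph.mem_edgeSet, hd_spec e he]; exact he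
      · rw [hd_spec e he]
    · right; exact h
  set step : (e : Sym2 V) → ((e' : Sym2 V) → rE e' e → Option 𝒞) → Option 𝒞 :=
    fun e rec =>
      if h : e ∈ G.edgeSet then
        (if h2 : ∃ x ∈ (Q e).image some,
            x ∉ (R e).attach.image (fun p => rec p.1 (hrel e h p.1 p.2)) then
          h2.choose
        else none)
      else none
    with hstep
  set φ : Sym2 V → Option 𝒞 := wfE.fix step with hφ
  have hfix : ∀ e, φ e = step e (fun e' _ => φ e') := by
    intro e; rw [hφ]; exact wfE.fix_eq step e
  have key : ∀ e, e ∈ G.edgeSet → (∃ c ∈ Q e, φ e = some c) ∧ ∀ e' ∈ R e, φ e ≠ φ e' := by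
    intro e he
    have himg : (R e).attach.image (fun p => φ p.1) = (R e).image φ := by
      ext x
      simp [Finset.mem_image]
    have hmem : e ∈ Out (σ e) := by simp [hOut, he]
    have h1le : 1 ≤ (Out (σ e)).card := Finset.card_pos.mpr ⟨e, hmem⟩
    have hdpos : 1 ≤ d := le_trans h1le (hOutd _)
    have hsub : R e ⊆ Out (hd e) ∪ (Out (σ e)).erase e := by
      intro e' h'
      simp only [hR, Finset.mem_filter, Finset.mem_univ, true_and] at h'
      rcases h'.2 with h | ⟨h3, h4⟩
      · exact Finset.mem_union_left _ (by simp [hOut, h'.1, h])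
      · refine Finset.mem_union_right _ (Finset.mem_erase.mpr ⟨?_, by simp [hOut, h'.1, h3]⟩)
        rintro rfl
        exact lt_irrefl _ h4
    have hcardR : (R e).card ≤ d + (d - 1) := by
      refine le_trans (Finset.card_le_card hsub) (le_trans (Finset.card_union_le _ _) ?_)
      refine add_le_add (hOutd _) ?_
      rw [Finset.card_erase_of_mem hmem]
      exact Nat.sub_le_sub_right (hOutd _) 1
    have hcard : ((R e).image φ).card < ((Q e).image some).card := by
      have h1 : ((R e).image φ).card ≤ (R e).card := Finset.card_image_le
      have h2 : ((Q e).image some).card = (Q e).card :=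
        Finset.card_image_of_injective _ (Option.some_injective 𝒞)
      have h3 := hQ e he
      omega
    rw [← himg] at hcard
    have h2 : ∃ x ∈ (Q e).image some,
        x ∉ (R e).attach.image (fun p => φ p.1) := by
      obtain ⟨x, hx⟩ := Finset.sdiff_nonempty.mpr
        (fun hsub => absurd (Finset.card_le_card hsub) (not_le.mpr hcard))
      rw [Finset.mem_sdiff] at hx
      exact ⟨x, hx.1, hx.2⟩
    have hEq : φ e = h2.choose := by
      rw [hfix e, hstep]
      simp only [dif_pos he, dif_pos h2]
    have hspec := h2.choose_spec
    rw [← hEq] at hspec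
    constructor
    · obtain ⟨c, hc1, hc2⟩ := Finset.mem_image.mp hspec.1
      exact ⟨c, hc1, hc2.symm⟩
    · intro e' he' hcontra
      apply hspec.2
      rw [himg]
      exact Finset.mem_image.mpr ⟨e', he', hcontra.symm⟩
  refine ⟨φ, ?_, ?_, ?_⟩
  · intro e he; exact (key e he).1
  · intro e he e' he' hne hσσ
    rcases Nat.lt_or_ge (enc e') (enc e) with h | h
    · refine (key e he).2 e' ?_
      simp only [hR, Finset.mem_filter, Finset.mem_univ, true_and]
      exact ⟨he', Or.inr ⟨hσσ, h⟩⟩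
    · have hlt : enc e < enc e' :=
        lt_of_le_of_ne h (fun hEq => hne (henc hEq).symm)
      refine Ne.symm ((key e' he').2 e ?_)
      simp only [hR, Finset.mem_filter, Finset.mem_univ, true_and]
      exact ⟨he, Or.inr ⟨hσσ.symm, hlt⟩⟩
  · intro e he e' he' hmem hne
    have hEq : σ e' = hd e := by
      rw [← hd_spec e he] at hmem
      rcases Sym2.mem_iff.mp hmem with h | h
      · exact absurd h hne
      · exact h
    refine (key e he).2 e' ?_
    simp only [hR, Finset.mem_filter, Finset.mem_univ, true_and]
    exact ⟨he', Or.inl hEq⟩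

/-- A simple graph is a star forest if every connected component contains a vertex
incident to all of the edges of that component. -/
def IsStarForest {V : Type*} (H : SimpleGraph V) : Prop :=
  ∀ v : V, ∃ ctr : V, ∀ a b : V, H.Adj a b → H.Reachable v a → a = ctr ∨ b = ctr

/-- If a finite simple graph `G` has an acyclic orientation (encoded by `σ`
assigning to each edge its source endpoint, with no directed cycle) in which every vertex has
outdegree at most `d` (i.e. degeneracy at most `d`), and every edge has a palette of at least
`2d` colors, then `G` has a list star forest decomposition. -/
theorem list_star_forest_decomposition_of_degeneracy
    {V 𝒞 : Type*} [Fintype V] (G : SimpleGraph V)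
    (d : ℕ) (σ : Sym2 V → V)
    (hσ : ∀ e ∈ G.edgeSet, σ e ∈ e)
    (hacyc : ∀ v : V, ¬ Relation.TransGen (fun u w => G.Adj u w ∧ σ s(u, w) = u) v v)
    (hout : ∀ v : V, ({e | e ∈ G.edgeSet ∧ σ e = v} : Set (Sym2 V)).ncard ≤ d)
    (Q : Sym2 V → Finset 𝒞) (hQ : ∀ e ∈ G.edgeSet, 2 * d ≤ (Q e).card) :
    ∃ φ : Sym2 V → Option 𝒞,
      (∀ e ∈ G.edgeSet, ∃ c ∈ Q e, φ e = some c) ∧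
      ∀ c : 𝒞,
        IsStarForest (SimpleGraph.fromEdgeSet {e | e ∈ G.edgeSet ∧ φ e = some c}) := by
  classical
  obtain ⟨φ, hpal, hP1, hP2⟩ := exists_phi G d σ hσ hacyc hout Q hQ
  refine ⟨φ, hpal, ?_⟩
  intro c v
  set S : Set (Sym2 V) := {e | e ∈ G.edgeSet ∧ φ e = some c} with hS
  set H : SimpleGraph V := SimpleGraph.fromEdgeSet S with hH
  show ∃ ctr : V, ∀ a b : V, H.Adj a b → H.Reachable v a → a = ctr ∨ b = ctr
  have hadj : ∀ a b : V, H.Adj a b → (s(a, b) ∈ G.edgeSet ∧ φ s(a, b) = some c) ∧ a ≠ b := by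
    intro a b hab
    rw [hH, SimpleGraph.fromEdgeSet_adj] at hab
    exact hab
  have main : ∀ ctr : V,
      (∀ e', e' ∈ G.edgeSet → φ e' = some c → σ e' ≠ ctr) →
      (v = ctr ∨ ∀ b, H.Adj v b → b = ctr) →
      ∀ a b : V, H.Adj a b → H.Reachable v a → a = ctr ∨ b = ctr := by
    intro ctr hC hGv
    have hstep : ∀ a b : V, (a = ctr ∨ ∀ b', H.Adj a b' → b' = ctr) → H.Adj a b →
        (b = ctr ∨ ∀ b', H.Adj b b' → b' = ctr) := by
      intro a b hGa hab
      rcases hGa with rfl | hGa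
      · -- the center case: every edge at `a` is oriented towards `a`
        obtain ⟨⟨he', hc'⟩, hne'⟩ := hadj _ _ hab
        have hσ' : σ s(a, b) = b := by
          rcases Sym2.mem_iff.mp (hσ _ he') with h | h
          · exact absurd h (hC _ he' hc')
          · exact h
        right
        intro b' hbb'
        obtain ⟨⟨he'', hc''⟩, hne''⟩ := hadj _ _ hbb'
        rcases Sym2.mem_iff.mp (hσ _ he'') with h | h
        · -- σ s(b,b') = b : tail-uniqueness at b forces s(b,b') = s(a,b)
          by_cases hEq : s(b, b') = s(a, b)
          · rcases Sym2.eq_iff.mp hEq with ⟨h1, h2⟩ | ⟨h1, h2⟩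
            · exact absurd (h.trans h1) (hC _ he'' hc'')
            · exact h2
          · exact (hP1 s(b, b') he'' s(a, b) he' (fun hh => hEq hh.symm)
              (by rw [hσ', h]) (by rw [hc'', hc'])).elim
        · -- σ s(b,b') = b' : then b is a head but has an out-edge s(a,b); contradiction
          exfalso
          exact hP2 s(b, b') he'' s(a, b) he'
            (by rw [hσ']; exact Sym2.mem_mk_left b b')
            (by rw [hσ', h]; exact hne'') (by rw [hc'', hc'])
      · exact Or.inl (hGa b hab)
    have hwalk : ∀ x a : V, H.Walk x a → (x = ctr ∨ ∀ b', H.Adj x b' → b' = ctr) →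
        (a = ctr ∨ ∀ b', H.Adj a b' → b' = ctr) := by
      intro x a p
      induction p with
      | nil => exact id
      | cons h q ih => intro hx; exact ih (hstep _ _ hx h)
    intro a b hab hr
    obtain ⟨p⟩ := hr
    rcases hwalk v a p hGv with h | h
    · exact Or.inl h
    · exact Or.inr (h b hab)
  by_cases h1 : ∃ e, (e ∈ G.edgeSet ∧ φ e = some c) ∧ σ e = v
  · obtain ⟨e0, ⟨he0, hc0⟩, hv0⟩ := h1
    have hmem : σ e0 ∈ e0 := hσ e0 he0
    set ctr := Sym2.Mem.other hmem with hctr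
    have hspec0 : s(σ e0, ctr) = e0 := Sym2.other_spec hmem
    have hctrne : ctr ≠ σ e0 := by
      intro h
      have hdiag := G.not_isDiag_of_mem_edgeSet he0
      rw [← hspec0] at hdiag
      exact hdiag (Sym2.mk_isDiag_iff.mpr h.symm)
    refine ⟨ctr, main ctr ?_ ?_⟩
    · intro e' he' hc' hEq
      exact hP2 e0 he0 e' he' (hEq ▸ Sym2.other_mem hmem) (hEq ▸ hctrne)
        (by rw [hc0, hc'])
    · right
      intro b hb
      obtain ⟨⟨he'', hc''⟩, hne''⟩ := hadj v b hb
      rcases Sym2.mem_iff.mp (hσ _ he'') with h | h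
      · by_cases hEq : s(v, b) = e0
        · rw [← hspec0, hv0] at hEq
          rcases Sym2.eq_iff.mp hEq with ⟨h1, h2⟩ | ⟨h1, h2⟩
          · exact h2
          · exact absurd h1.symm (by rw [hv0] at hctrne; exact hctrne)
        · exact (hP1 s(v, b) he'' e0 he0 (fun hh => hEq hh.symm)
            (by rw [hv0, h]) (by rw [hc'', hc0])).elim
      · exfalso
        exact hP2 s(v, b) he'' e0 he0 (by rw [hv0]; exact Sym2.mem_mk_left v b)
          (by rw [hv0, h]; exact hne'') (by rw [hc'', hc0])
  · push_neg at h1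
    refine ⟨v, main v ?_ (Or.inl rfl)⟩
    intro e' he' hc'
    exact h1 e' ⟨he', hc'⟩
end

section
/- Let G = (V,E) be a finite simple graph with a finite color set 𝒞 and palettes Q(e) ⊆ 𝒞, let ψ be a partial list forest decomposition of G, and let P = (e_1, …, e_ℓ, c) be an augmenting sequence with respect to ψ. Then the augmentation ψ ⊕ P is again a partial list forest decomposition: every edge on which ψ ⊕ P is defined receives a color from its palette, and for each color c' the set of edges colored c' by ψ ⊕ P contains no cycle. -/
open SimpleGraph


/-- The subgraph of `G` consisting of the edges that the partial coloring `ψ` colors `c`. -/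
def colorSub {V 𝒞 : Type*} (G : SimpleGraph V) (ψ : Sym2 V → Option 𝒞) (c : 𝒞) :
    SimpleGraph V :=
  SimpleGraph.fromEdgeSet {e | e ∈ G.edgeSet ∧ ψ e = some c}

/-- `Cpath G ψ e c` is the edge set of the (unique, when the `c`-colored subgraph is acyclic)
path joining the two endpoints of `e` in the subgraph of `c`-colored edges; it is `∅` when the
endpoints lie in different components of that subgraph. -/
def Cpath {V 𝒞 : Type*} (G : SimpleGraph V) (ψ : Sym2 V → Option 𝒞) (e : Sym2 V) (c : 𝒞) :
    Set (Sym2 V) :=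
  {f | ∃ u v : V, e = s(u, v) ∧ ∃ p : (colorSub G ψ c).Walk u v, p.IsPath ∧ f ∈ p.edges}

/-- A partial list forest decomposition: a partial function from the edges of `G` to colors
such that every assigned color belongs to the edge's palette, and every color class is
acyclic. -/
def IsPartialLFD {V 𝒞 : Type*} (G : SimpleGraph V) (Q : Sym2 V → Finset 𝒞)
    (ψ : Sym2 V → Option 𝒞) : Prop :=
  (∀ e, e ∉ G.edgeSet → ψ e = none) ∧
  (∀ e ∈ G.edgeSet, ∀ c, ψ e = some c → c ∈ Q e) ∧
  ∀ c : 𝒞, (colorSub G ψ c).IsAcyclic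

/-- An augmenting sequence `(e_1, …, e_ℓ, c)` (0-indexed: `es 0, …, es (ℓ-1)`) with respect to
the partial coloring `ψ`: the edges are pairwise distinct edges of `G`, satisfying (A1)–(A5). -/
def IsAugSeq {V 𝒞 : Type*} (G : SimpleGraph V) (Q : Sym2 V → Finset 𝒞)
    (ψ : Sym2 V → Option 𝒞) (ℓ : ℕ) (es : ℕ → Sym2 V) (c : 𝒞) : Prop :=
  1 ≤ ℓ ∧
  (∀ i < ℓ, es i ∈ G.edgeSet) ∧
  (∀ i < ℓ, ∀ j < ℓ, es i = es j → i = j) ∧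
  -- (A1)
  ψ (es 0) = none ∧
  -- (A2)
  (∀ i, 1 ≤ i → i < ℓ → ∃ ci, ψ (es i) = some ci ∧ es i ∈ Cpath G ψ (es (i - 1)) ci) ∧
  -- (A3)
  (∀ i < ℓ, ∀ j, j + 1 < i → ∀ ci, ψ (es i) = some ci → es i ∉ Cpath G ψ (es j) ci) ∧
  -- (A4)
  Cpath G ψ (es (ℓ - 1)) c = ∅ ∧
  -- (A5)
  (∀ i, i + 1 < ℓ → ∃ ci, ψ (es (i + 1)) = some ci ∧ ci ∈ Q (es i)) ∧
  c ∈ Q (es (ℓ - 1))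

lemma reach_of_adj_imp {V : Type*} {H F : SimpleGraph V}
    (h : ∀ a b, H.Adj a b → F.Reachable a b) {x y : V} (hr : H.Reachable x y) :
    F.Reachable x y := by
  obtain ⟨w⟩ := hr
  induction w with
  | nil => exact Reachable.refl _
  | cons ha _ ih => exact (h _ _ ha).trans ih

lemma walk_edges_nonempty {V : Type*} {F : SimpleGraph V} :
    ∀ {u v : V} (w : F.Walk u v), u ≠ v → ∃ f, f ∈ w.edges := by
  intro u v w hne
  cases w with
  | nil => exact absurd rfl hne
  | cons h q => exact ⟨_, List.mem_cons_self⟩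

lemma sym2_reach {V : Type*} {F : SimpleGraph V} {a b a' b' : V}
    (h : s(a, b) = s(a', b')) (hr : F.Reachable a' b') : F.Reachable a b := by
  rcases Sym2.eq_iff.mp h with ⟨rfl, rfl⟩ | ⟨rfl, rfl⟩
  · exact hr
  · exact hr.symm


/-- if `ψ` is a partial list forest decomposition and `(es, c)` is an augmenting
sequence with respect to `ψ`, then the augmentation `ψ ⊕ P` (the coloring `ψ'` characterized by
`ψ'(e_i) = ψ(e_{i+1})` for `i < ℓ-1`, `ψ'(e_ℓ) = c`, and `ψ' = ψ` elsewhere) is again a partial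
list forest decomposition. -/
theorem augmentation_is_partial_LFD {V 𝒞 : Type*} [Fintype V] [Fintype 𝒞]
    (G : SimpleGraph V) (Q : Sym2 V → Finset 𝒞)
    (ψ : Sym2 V → Option 𝒞) (hψ : IsPartialLFD G Q ψ)
    (ℓ : ℕ) (es : ℕ → Sym2 V) (c : 𝒞) (hP : IsAugSeq G Q ψ ℓ es c)
    (ψ' : Sym2 V → Option 𝒞)
    (h1 : ∀ i, i + 1 < ℓ → ψ' (es i) = ψ (es (i + 1)))
    (h2 : ψ' (es (ℓ - 1)) = some c)
    (h3 : ∀ f, (∀ i < ℓ, f ≠ es i) → ψ' f = ψ f) :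
    IsPartialLFD G Q ψ' := by
  classical
  obtain ⟨hℓ, hedge, hinj, hA1, hA2, hA3, hA4, hA5, hA5'⟩ := hP
  obtain ⟨hψ0, hψQ, hψA⟩ := hψ
  refine ⟨?_, ?_, ?_⟩
  · -- undefined outside G
    intro e he
    have hne : ∀ i < ℓ, e ≠ es i := by
      intro i hi h
      exact he (h ▸ hedge i hi)
    rw [h3 e hne]
    exact hψ0 e he
  · -- palettes
    intro e heG d hd
    by_cases hseq : ∃ i, i < ℓ ∧ e = es i
    · obtain ⟨i, hi, rfl⟩ := hseq
      by_cases hi1 : i + 1 < ℓ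
      · obtain ⟨ci, hci, hciQ⟩ := hA5 i hi1
        rw [h1 i hi1, hci] at hd
        exact (Option.some.inj hd) ▸ hciQ
      · have hieq : i = ℓ - 1 := by omega
        rw [hieq, h2] at hd
        exact (Option.some.inj hd) ▸ (hieq ▸ hA5')
    · push_neg at hseq
      rw [h3 e (fun i hi => hseq i hi)] at hd
      exact hψQ e heG d hd
  · -- acyclicity
    intro c'
    set N := colorSub G ψ' c' with hN
    set Fo := colorSub G ψ c' with hFo
    -- classification of edges of N
    have hclass : ∀ e ∈ N.edgeSet,
        (e ∈ Fo.edgeSet ∧ ∀ i < ℓ, e ≠ es i) ∨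
        (∃ i, i < ℓ ∧ e = es i ∧
          ((i + 1 < ℓ ∧ ψ (es (i + 1)) = some c') ∨ (i = ℓ - 1 ∧ c' = c))) := by
      intro e he
      rw [hN, colorSub, edgeSet_fromEdgeSet] at he
      obtain ⟨⟨heG, heψ⟩, hdiag⟩ := he
      by_cases hseq : ∃ i, i < ℓ ∧ e = es i
      · obtain ⟨i, hi, rfl⟩ := hseq
        refine Or.inr ⟨i, hi, rfl, ?_⟩
        by_cases hi1 : i + 1 < ℓ
        · exact Or.inl ⟨hi1, (h1 i hi1) ▸ heψ⟩
        · have hieq : i = ℓ - 1 := by omega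
          rw [hieq, h2] at heψ
          exact Or.inr ⟨hieq, (Option.some.inj heψ).symm⟩
      · push_neg at hseq
        refine Or.inl ⟨?_, fun i hi => hseq i hi⟩
        rw [hFo, colorSub, edgeSet_fromEdgeSet]
        refine ⟨⟨heG, ?_⟩, hdiag⟩
        rw [← h3 e (fun i hi => hseq i hi)]
        exact heψ
    intro v p hp
    have hpe : ∀ e ∈ p.edges, e ∈ N.edgeSet := fun e he => p.edges_subset_edgeSet he
    -- the set of "added" indices appearing on the cycle
    set S := (Finset.range ℓ).filter (fun i => es i ∈ p.edges ∧
        ((i + 1 < ℓ ∧ ψ (es (i + 1)) = some c') ∨ (i = ℓ - 1 ∧ c' = c))) with hS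
    have hSne : S.Nonempty := by
      by_contra hSe
      rw [Finset.not_nonempty_iff_eq_empty] at hSe
      have hold : ∀ e ∈ p.edges, e ∈ Fo.edgeSet := by
        intro e he
        rcases hclass e (hpe e he) with ⟨h, _⟩ | ⟨i, hi, rfl, hadd⟩
        · exact h
        · exfalso
          have : i ∈ S := by
            rw [hS]; exact Finset.mem_filter.mpr ⟨Finset.mem_range.mpr hi, he, hadd⟩
          rw [hSe] at this; exact absurd this (Finset.notMem_empty i)
      exact hψA c' (p.transfer Fo hold) (hp.transfer hold)
    set i := S.max' hSne with hidef
    have hiS : i ∈ S := S.max'_mem hSne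
    rw [hS, Finset.mem_filter, Finset.mem_range] at hiS
    obtain ⟨hiℓ, hip, hadd⟩ := hiS
    have hmax : ∀ j ∈ S, j ≤ i := fun j hj => S.le_max' j hj
    -- K : the graph of the cycle's edges
    set K := SimpleGraph.fromEdgeSet {e | e ∈ p.edges} with hK
    have hKe : ∀ e ∈ p.edges, e ∈ K.edgeSet := by
      intro e he
      rw [hK, edgeSet_fromEdgeSet]
      exact ⟨he, N.not_isDiag_of_mem_edgeSet (hpe e he)⟩
    have hq := hp.transfer hKe
    -- a common fact: for any representation es i = s(u,v), reachability in K minus es i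
    have hreach_gen : ∀ u v : V, es i = s(u, v) →
        (K \ SimpleGraph.fromEdgeSet {s(u, v)}).Reachable u v := by
      intro u v huv
      have hne : u ≠ v := (G.mem_edgeSet.mp (huv ▸ hedge i hiℓ)).ne
      have hmemq : s(u, v) ∈ (p.transfer K hKe).edges := by
        rw [p.edges_transfer hKe, ← huv]; exact hip
      exact ((adj_and_reachable_delete_edges_iff_exists_cycle).mpr
        ⟨_, p.transfer K hKe, hq, hmemq⟩).2
    rcases hadd with ⟨hi1, hψi1⟩ | ⟨hieq, hceq⟩
    · -- Case B : i + 1 < ℓ, es (i+1) has old color c'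
      obtain ⟨ci, hci, hcp⟩ := hA2 (i + 1) (by omega) hi1
      rw [hψi1] at hci
      obtain rfl : c' = ci := Option.some.inj hci
      simp only [Nat.add_sub_cancel] at hcp
      obtain ⟨u, v, huv, w0, hw0path, hfw0⟩ := hcp
      have hne : u ≠ v := (G.mem_edgeSet.mp (huv ▸ hedge i hiℓ)).ne
      have hreach := hreach_gen u v huv
      set f := es (i + 1) with hf
      have hfF : f ∈ Fo.edgeSet := w0.edges_subset_edgeSet hfw0
      set F' := Fo.deleteEdges {f} with hF'
      -- every adjacency in K minus (es i) yields reachability in F'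
      have himp : ∀ a b, (K \ SimpleGraph.fromEdgeSet {s(u, v)}).Adj a b →
          F'.Reachable a b := by
        intro a b hab
        rw [sdiff_adj] at hab
        obtain ⟨habK, habne⟩ := hab
        rw [hK, fromEdgeSet_adj] at habK
        obtain ⟨habp, habd⟩ := habK
        have habne' : s(a, b) ≠ s(u, v) := by
          intro h; exact habne (by rw [fromEdgeSet_adj]; exact ⟨h ▸ rfl, habd⟩)
        rcases hclass _ (hpe _ habp) with ⟨hFoe, hnotseq⟩ | ⟨j, hj, hejs, haddj⟩
        · have hFadj : Fo.Adj a b := Fo.mem_edgeSet.mp hFoe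
          have : s(a, b) ≠ f := hnotseq (i + 1) hi1
          exact Adj.reachable (by rw [hF', deleteEdges_adj]; exact ⟨hFadj, by simpa using this⟩)
        · have hjS : j ∈ S := by
            rw [hS]
            exact Finset.mem_filter.mpr ⟨Finset.mem_range.mpr hj, hejs ▸ habp, haddj⟩
          have hji : j ≠ i := by
            intro h; subst h; exact habne' (hejs ▸ huv ▸ rfl)
          have hjlt : j < i := lt_of_le_of_ne (hmax j hjS) hji
          rcases haddj with ⟨hj1, hψj1⟩ | ⟨hjeq, _⟩
          · obtain ⟨cj, hcj, hcpj⟩ := hA2 (j + 1) (by omega) hj1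
            rw [hψj1] at hcj
            obtain rfl : c' = cj := Option.some.inj hcj
            simp only [Nat.add_sub_cancel] at hcpj
            obtain ⟨a', b', hab', wj, hwjpath, _⟩ := hcpj
            have hA3f : f ∉ Cpath G ψ (es j) c' :=
              hA3 (i + 1) hi1 j (by omega) c' hψi1
            have hfnot : f ∉ wj.edges := by
              intro hmem
              exact hA3f ⟨a', b', hab', wj, hwjpath, hmem⟩
            have hwjF' : ∀ e ∈ wj.edges, e ∈ F'.edgeSet := by
              intro e he
              rw [hF', edgeSet_deleteEdges]
              exact ⟨wj.edges_subset_edgeSet he, by simp; rintro rfl; exact hfnot he⟩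
            exact sym2_reach (hejs ▸ hab') ⟨wj.transfer F' hwjF'⟩
          · omega
      have hgood : F'.Reachable u v := reach_of_adj_imp himp hreach
      obtain ⟨wF⟩ := hgood
      have hwFF : ∀ e ∈ wF.edges, e ∈ Fo.edgeSet := by
        intro e he
        have := wF.edges_subset_edgeSet he
        rw [hF', edgeSet_deleteEdges] at this
        exact this.1
      have hfnotwF : f ∉ wF.edges := by
        intro hmem
        have := wF.edges_subset_edgeSet hmem
        rw [hF', edgeSet_deleteEdges] at this
        simp at this
      set w1 := wF.transfer Fo hwFF with hw1
      have hfw1 : f ∉ w1.edges := by rw [hw1, wF.edges_transfer hwFF]; exact hfnotwF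
      have hpuniq := (hψA c').path_unique ⟨w0, hw0path⟩ w1.toPath
      have : f ∈ (w1.toPath : Fo.Walk u v).edges := by
        rw [← hpuniq]; exact hfw0
      exact hfw1 (w1.edges_toPath_subset this)
    · -- Case A : i = ℓ - 1 and c' = c
      subst hceq
      obtain ⟨u, v, huv⟩ :=
        Sym2.ind (f := fun z => ∃ a b, z = s(a, b)) (fun a b => ⟨a, b, rfl⟩) (es i)
      have hne : u ≠ v := (G.mem_edgeSet.mp (huv ▸ hedge i hiℓ)).ne
      have hreach := hreach_gen u v huv
      have himp : ∀ a b, (K \ SimpleGraph.fromEdgeSet {s(u, v)}).Adj a b →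
          Fo.Reachable a b := by
        intro a b hab
        rw [sdiff_adj] at hab
        obtain ⟨habK, habne⟩ := hab
        rw [hK, fromEdgeSet_adj] at habK
        obtain ⟨habp, habd⟩ := habK
        have habne' : s(a, b) ≠ s(u, v) := by
          intro h; exact habne (by rw [fromEdgeSet_adj]; exact ⟨h ▸ rfl, habd⟩)
        rcases hclass _ (hpe _ habp) with ⟨hFoe, _⟩ | ⟨j, hj, hejs, haddj⟩
        · exact (Fo.mem_edgeSet.mp hFoe).reachable
        · have hjS : j ∈ S := by
            rw [hS]
            exact Finset.mem_filter.mpr ⟨Finset.mem_range.mpr hj, hejs ▸ habp, haddj⟩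
          have hji : j ≠ i := by
            intro h; subst h; exact habne' (hejs ▸ huv ▸ rfl)
          have hjlt : j < i := lt_of_le_of_ne (hmax j hjS) hji
          rcases haddj with ⟨hj1, hψj1⟩ | ⟨hjeq, _⟩
          · obtain ⟨cj, hcj, hcpj⟩ := hA2 (j + 1) (by omega) hj1
            rw [hψj1] at hcj
            obtain rfl : c' = cj := Option.some.inj hcj
            simp only [Nat.add_sub_cancel] at hcpj
            obtain ⟨a', b', hab', wj, hwjpath, _⟩ := hcpj
            exact sym2_reach (hejs ▸ hab') ⟨wj⟩
          · omega
      have hgood : Fo.Reachable u v := reach_of_adj_imp himp hreach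
      obtain ⟨wF⟩ := hgood
      obtain ⟨f0, hf0⟩ := walk_edges_nonempty (wF.toPath : Fo.Walk u v) hne
      have : f0 ∈ Cpath G ψ (es (ℓ - 1)) c' :=
        ⟨u, v, hieq ▸ huv, wF.toPath, wF.toPath.2, hf0⟩
      rw [hA4] at this
      exact this
end

section
/- Let G = (V,E) be a finite simple graph on n ≥ 2 vertices and a* ≥ 1 an integer such that every nonempty subgraph H of G satisfies |E(H)| ≤ a*·|V(H)|. Let σ be an orientation of the edges of G (an assignment of a direction to each edge), let ε ∈ (0,1), and let v ∈ V. Then there exists a directed path with respect to σ of length at most ⌈(log n)/log(1+ε)⌉ + 2 (possibly of length 0) from v to a vertex whose outdegree under σ is strictly less than a*·(1+ε). -/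
/-- The outdegree of `v` under the orientation `σ` (which assigns to each edge its source
endpoint): the number of edges of `G` whose source is `v`. -/
noncomputable def outdeg {V : Type*} (G : SimpleGraph V) (σ : Sym2 V → V) (v : V) : ℕ :=
  ({e | e ∈ G.edgeSet ∧ σ e = v} : Set (Sym2 V)).ncard

def reachSet {V : Type*} (G : SimpleGraph V) (σ : Sym2 V → V) (v : V) (t : ℕ) : Set V :=
  {w | ∃ k ≤ t, ∃ f : ℕ → V, f 0 = v ∧
    (∀ i < k, G.Adj (f i) (f (i + 1)) ∧ σ s(f i, f (i + 1)) = f i) ∧ f k = w}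

lemma reachSet_mono {V : Type*} (G : SimpleGraph V) (σ : Sym2 V → V) (v : V)
    {s t : ℕ} (h : s ≤ t) : reachSet G σ v s ⊆ reachSet G σ v t := by
  rintro w ⟨k, hk, f, hf⟩
  exact ⟨k, hk.trans h, f, hf⟩

lemma mem_reachSet_zero {V : Type*} (G : SimpleGraph V) (σ : Sym2 V → V) (v : V) :
    v ∈ reachSet G σ v 0 :=
  ⟨0, le_refl 0, fun _ => v, rfl, by omega, rfl⟩

lemma reachSet_succ {V : Type*} (G : SimpleGraph V) (σ : Sym2 V → V) (v : V) {t : ℕ}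
    {w : V} (hw : w ∈ reachSet G σ v t) {e : Sym2 V} (he : e ∈ G.edgeSet)
    (hwe : w ∈ e) (hσe : σ e = w) {x : V} (hxe : x ∈ e) :
    x ∈ reachSet G σ v (t + 1) := by
  by_cases hxw : x = w
  · exact reachSet_mono G σ v (Nat.le_succ t) (hxw ▸ hw)
  · have hne : w ≠ x := fun h => hxw h.symm
    have heq : e = s(w, x) := (Sym2.mem_and_mem_iff hne).mp ⟨hwe, hxe⟩
    have hadj : G.Adj w x := by rwa [heq, SimpleGraph.mem_edgeSet] at he
    obtain ⟨k, hk, f, hf0, hfe, hfk⟩ := hw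
    refine ⟨k + 1, by omega, fun m => if m ≤ k then f m else x, ?_, ?_, ?_⟩
    · simpa using hf0
    · intro i hi
      rcases Nat.lt_or_ge i k with h1 | h1
      · simp only [if_pos h1.le, if_pos (by omega : i + 1 ≤ k)]
        exact hfe i h1
      · have : i = k := by omega
        subst this
        simp only [if_pos (le_refl i), if_neg (by omega : ¬ i + 1 ≤ i), hfk]
        exact ⟨hadj, by rw [← heq, hσe]⟩
    · simp

lemma sum_outdeg {V : Type*} [Fintype V] (G : SimpleGraph V) (σ : Sym2 V → V)
    (S : Finset V) :
    ({e | e ∈ G.edgeSet ∧ σ e ∈ S} : Set (Sym2 V)).ncard = ∑ u ∈ S, outdeg G σ u := by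
  classical
  rw [Set.ncard_eq_toFinset_card']
  rw [show ({e | e ∈ G.edgeSet ∧ σ e ∈ S} : Set (Sym2 V)).toFinset
      = Finset.univ.filter (fun e => e ∈ G.edgeSet ∧ σ e ∈ S) by ext e; simp]
  rw [Finset.card_eq_sum_card_fiberwise
    (f := σ) (t := S) (fun e he => (Finset.mem_filter.mp he).2.2)]
  refine Finset.sum_congr rfl fun u hu => ?_
  rw [show outdeg G σ u = (Finset.univ.filter (fun e => e ∈ G.edgeSet ∧ σ e = u)).card by
    rw [outdeg, Set.ncard_eq_toFinset_card']
    congr 1; ext e; simp]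
  congr 1
  ext e
  simp only [Finset.mem_filter, Finset.mem_univ, true_and]
  constructor
  · rintro ⟨⟨h1, _⟩, h3⟩; exact ⟨h1, h3⟩
  · rintro ⟨h1, h3⟩; exact ⟨⟨h1, h3 ▸ hu⟩, h3⟩

lemma growth {V : Type*} [Fintype V] (G : SimpleGraph V) (σ : Sym2 V → V) (v : V)
    (astar : ℕ) (ha : 1 ≤ astar)
    (hpseudo : ∀ S : Finset V,
      ({e | e ∈ G.edgeSet ∧ ∀ x ∈ e, x ∈ S} : Set (Sym2 V)).ncard ≤ astar * S.card)
    (hσ : ∀ e ∈ G.edgeSet, σ e ∈ e)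
    (ε : ℝ) (hε0 : 0 < ε) (t : ℕ)
    (hheavy : ∀ w ∈ reachSet G σ v t, (astar : ℝ) * (1 + ε) ≤ (outdeg G σ w : ℝ)) :
    (1 + ε) * ((reachSet G σ v t).ncard : ℝ) ≤ ((reachSet G σ v (t + 1)).ncard : ℝ) := by
  classical
  set S : Finset V := (reachSet G σ v t).toFinset with hS
  set S' : Finset V := (reachSet G σ v (t + 1)).toFinset with hS'
  have hcard : S.card = (reachSet G σ v t).ncard := (Set.ncard_eq_toFinset_card' _).symm
  have hcard' : S'.card = (reachSet G σ v (t + 1)).ncard :=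
    (Set.ncard_eq_toFinset_card' _).symm
  have h1 : ({e | e ∈ G.edgeSet ∧ σ e ∈ S} : Set (Sym2 V)).ncard = ∑ u ∈ S, outdeg G σ u :=
    sum_outdeg G σ S
  have h2 : (S.card : ℝ) * ((astar : ℝ) * (1 + ε)) ≤ ∑ u ∈ S, (outdeg G σ u : ℝ) := by
    have := Finset.card_nsmul_le_sum S (fun u => (outdeg G σ u : ℝ)) ((astar : ℝ) * (1 + ε))
      (fun u hu => hheavy u (Set.mem_toFinset.mp hu))
    simpa [nsmul_eq_mul] using this
  have hsub : ({e | e ∈ G.edgeSet ∧ σ e ∈ S} : Set (Sym2 V)) ⊆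
      {e | e ∈ G.edgeSet ∧ ∀ x ∈ e, x ∈ S'} := by
    rintro e ⟨he, hse⟩
    refine ⟨he, fun x hx => Set.mem_toFinset.mpr ?_⟩
    exact reachSet_succ G σ v (Set.mem_toFinset.mp hse) he (hσ e he) rfl hx
  have h3 : ({e | e ∈ G.edgeSet ∧ σ e ∈ S} : Set (Sym2 V)).ncard ≤ astar * S'.card :=
    le_trans (Set.ncard_le_ncard hsub (Set.toFinite _)) (hpseudo S')
  have hA : (0 : ℝ) < (astar : ℝ) := by exact_mod_cast ha
  have hchain : (astar : ℝ) * ((1 + ε) * ((reachSet G σ v t).ncard : ℝ))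
      ≤ (astar : ℝ) * ((reachSet G σ v (t + 1)).ncard : ℝ) := by
    have e1 : ((∑ u ∈ S, outdeg G σ u : ℕ) : ℝ) = ∑ u ∈ S, (outdeg G σ u : ℝ) := by
      push_cast; ring_nf
    have h3' : ((∑ u ∈ S, outdeg G σ u : ℕ) : ℝ) ≤ (astar : ℝ) * (S'.card : ℝ) := by
      rw [← h1]; exact_mod_cast h3
    rw [← hcard, ← hcard']
    calc (astar : ℝ) * ((1 + ε) * (S.card : ℝ))
        = (S.card : ℝ) * ((astar : ℝ) * (1 + ε)) := by ring
      _ ≤ ∑ u ∈ S, (outdeg G σ u : ℝ) := h2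
      _ = ((∑ u ∈ S, outdeg G σ u : ℕ) : ℝ) := e1.symm
      _ ≤ (astar : ℝ) * (S'.card : ℝ) := h3'
  exact le_of_mul_le_mul_left hchain hA

/-- in a finite simple graph on `n ≥ 2` vertices with pseudoarboricity bound
`a* ≥ 1` (every vertex subset `S` spans at most `a*·|S|` edges), for any orientation `σ` of the
edges, any `ε ∈ (0,1)` and any vertex `v`, there is a directed path (possibly of length `0`) of
length at most `⌈log n / log(1+ε)⌉ + 2` from `v` to a vertex of outdegree strictly less than
`a*·(1+ε)`. -/
theorem directed_path_to_underloaded_vertex {V : Type*} [Fintype V]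
    (G : SimpleGraph V) (hn : 2 ≤ Fintype.card V)
    (astar : ℕ) (ha : 1 ≤ astar)
    (hpseudo : ∀ S : Finset V,
      ({e | e ∈ G.edgeSet ∧ ∀ x ∈ e, x ∈ S} : Set (Sym2 V)).ncard ≤ astar * S.card)
    (σ : Sym2 V → V) (hσ : ∀ e ∈ G.edgeSet, σ e ∈ e)
    (ε : ℝ) (hε0 : 0 < ε) (hε1 : ε < 1)
    (v : V)
    (r : ℕ) (hr : r = ⌈Real.log (Fintype.card V) / Real.log (1 + ε)⌉₊ + 2) :
    ∃ (k : ℕ) (f : ℕ → V),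
      k ≤ r ∧
      f 0 = v ∧
      (∀ i ≤ k, ∀ j ≤ k, f i = f j → i = j) ∧
      (∀ i < k, G.Adj (f i) (f (i + 1)) ∧ σ s(f i, f (i + 1)) = f i) ∧
      ((outdeg G σ (f k) : ℝ) < (astar : ℝ) * (1 + ε)) := by
  classical
  set n : ℕ := Fintype.card V with hnn
  set T : ℕ := ⌈Real.log n / Real.log (1 + ε)⌉₊ + 1 with hT
  have hTr : T < r := by rw [hr, hT]; omega
  have hlog : (0 : ℝ) < Real.log (1 + ε) := Real.log_pos (by linarith)
  have hn0 : (0 : ℝ) < (n : ℝ) := by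
    have : (0 : ℕ) < n := by omega
    exact_mod_cast this
  -- Step 1: some vertex reachable within T steps is light.
  have key : ∃ w ∈ reachSet G σ v T, (outdeg G σ w : ℝ) < (astar : ℝ) * (1 + ε) := by
    by_contra hcon
    push_neg at hcon
    have grow : ∀ t ≤ T, (1 + ε) ^ t ≤ ((reachSet G σ v t).ncard : ℝ) := by
      intro t
      induction t with
      | zero =>
        intro _
        have h1 : 1 ≤ (reachSet G σ v 0).ncard := by
          rw [Nat.one_le_iff_ne_zero, ← Nat.pos_iff_ne_zero]
          exact (Set.ncard_pos (Set.toFinite _)).mpr ⟨v, mem_reachSet_zero G σ v⟩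
        simpa using (by exact_mod_cast h1 : (1 : ℝ) ≤ ((reachSet G σ v 0).ncard : ℝ))
      | succ t ih =>
        intro ht
        have hheavy : ∀ w ∈ reachSet G σ v t, (astar : ℝ) * (1 + ε) ≤ (outdeg G σ w : ℝ) :=
          fun w hw => hcon w (reachSet_mono G σ v (by omega) hw)
        calc (1 + ε) ^ (t + 1) = (1 + ε) * (1 + ε) ^ t := by ring
          _ ≤ (1 + ε) * ((reachSet G σ v t).ncard : ℝ) := by
              have := ih (by omega)
              nlinarith
          _ ≤ ((reachSet G σ v (t + 1)).ncard : ℝ) :=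
              growth G σ v astar ha hpseudo hσ ε hε0 t hheavy
    have hle : ((reachSet G σ v T).ncard : ℝ) ≤ (n : ℝ) := by
      have h1 : (reachSet G σ v T).ncard ≤ (Set.univ : Set V).ncard :=
        Set.ncard_le_ncard (Set.subset_univ _) Set.finite_univ
      have h2 : (Set.univ : Set V).ncard = n := by
        rw [Set.ncard_univ, Nat.card_eq_fintype_card]
      exact_mod_cast h2 ▸ h1
    have hgt : (n : ℝ) < (1 + ε) ^ T := by
      rw [← Real.log_lt_log_iff hn0 (by positivity)]
      rw [Real.log_pow]
      have hceil : Real.log n / Real.log (1 + ε) ≤ (⌈Real.log n / Real.log (1 + ε)⌉₊ : ℝ) :=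
        Nat.le_ceil _
      have hTge : (T : ℝ) ≥ Real.log n / Real.log (1 + ε) + 1 := by
        rw [hT]; push_cast; linarith
      have hx : Real.log n / Real.log (1 + ε) * Real.log (1 + ε) = Real.log n :=
        div_mul_cancel₀ _ (ne_of_gt hlog)
      nlinarith
    have := grow T le_rfl
    linarith
  -- Step 2: take a minimal-length walk to such a vertex.
  obtain ⟨w, ⟨k1, hk1, f1, hf10, hf1e, hf1k⟩, hlight⟩ := key
  have hQ : ∃ k : ℕ, ∃ f : ℕ → V, f 0 = v ∧
      (∀ i < k, G.Adj (f i) (f (i + 1)) ∧ σ s(f i, f (i + 1)) = f i) ∧ f k = w :=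
    ⟨k1, f1, hf10, hf1e, hf1k⟩
  set k0 := Nat.find hQ with hk0
  obtain ⟨f, hf0, hfe, hfk⟩ := Nat.find_spec hQ
  have hk0le : k0 ≤ k1 := Nat.find_min' hQ ⟨f1, hf10, hf1e, hf1k⟩
  have hinj : ∀ i j : ℕ, i < j → j ≤ k0 → f i ≠ f j := by
    intro i j hij hjk heq
    have hlt : k0 - (j - i) < k0 := by omega
    apply Nat.find_min hQ hlt
    refine ⟨fun m => if m ≤ i then f m else f (m + (j - i)), ?_, ?_, ?_⟩
    · simp [hf0]
    · intro i' hi'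
      by_cases h1 : i' + 1 ≤ i
      · simp only [if_pos (by omega : i' ≤ i), if_pos h1]
        exact hfe i' (by omega)
      · by_cases h2 : i' ≤ i
        · have : i' = i := by omega
          subst this
          simp only [if_pos (le_refl i'), if_neg h1]
          have hjj : j < k0 := by omega
          have he1 : i' + 1 + (j - i') = j + 1 := by omega
          rw [he1, heq]
          exact hfe j hjj
        · simp only [if_neg h2, if_neg (by omega : ¬ i' + 1 ≤ i)]
          have he1 : i' + 1 + (j - i) = i' + (j - i) + 1 := by omega
          rw [he1]
          exact hfe (i' + (j - i)) (by omega)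
    · by_cases h : k0 - (j - i) ≤ i
      · have h1 : k0 - (j - i) = i := by omega
        have h2 : j = k0 := by omega
        simp only [h1, heq]
        rw [if_pos (le_refl i), h2]
        exact hfk
      · simp only [if_neg h]
        have : k0 - (j - i) + (j - i) = k0 := by omega
        rw [this, hfk]
  refine ⟨k0, f, by omega, hf0, ?_, hfe, ?_⟩
  · intro i hi j hj heq
    by_contra hne
    rcases lt_or_gt_of_ne hne with h | h
    · exact hinj i j h hj heq
    · exact hinj j i h hi heq.symm
  · rw [hfk]; exact hlight
end

section
/- Let G = (V,E) be a finite simple graph on n ≥ 2 vertices and a* ≥ 1 an integer such that every nonempty subgraph H of G satisfies |E(H)| ≤ a*·|V(H)|. Let σ be an orientation of the edges of G, let ε ∈ (0,1), and let L ⊆ V be any set of vertices. Then, with r = ⌈(log n)/log(1+ε)⌉ + 2, there exists an orientation σ' of G such that: (i) σ'(e) = σ(e) for every edge e having no endpoint at distance at most r from L; (ii) every vertex of L has outdegree at most ⌈a*·(1+ε)⌉ under σ'; and (iii) every vertex whose outdegree under σ is at most ⌈a*·(1+ε)⌉ also has outdegree at most ⌈a*·(1+ε)⌉ under σ'. -/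
set_option linter.unusedSectionVars false

namespace LocalFix

open Finset SimpleGraph

variable {V : Type*} [Fintype V] [DecidableEq V] (G : SimpleGraph V)
variable [DecidableRel G.Adj]

noncomputable def EF : Finset (Sym2 V) := G.edgeFinset

lemma mem_EF {e : Sym2 V} : e ∈ EF G ↔ e ∈ G.edgeSet := by
  simp [EF, mem_edgeFinset]

lemma outdeg_eq (τ : Sym2 V → V) (x : V) :
    outdeg G τ x = ((EF G).filter (fun e => τ e = x)).card := by
  classical
  rw [outdeg, ← Set.ncard_coe_finset]
  congr 1
  ext e
  simp [mem_EF]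

def Valid (τ : Sym2 V → V) : Prop := ∀ e ∈ G.edgeSet, τ e ∈ e

def Fwd (τ : Sym2 V → V) {u v : V} (p : G.Walk u v) : Prop :=
  ∀ d ∈ p.darts, τ d.edge = d.toProd.1

noncomputable def flip1 (τ : Sym2 V → V) (e : Sym2 V) (y : V) : Sym2 V → V :=
  fun e' => if e' = e then y else τ e'

lemma flip1_outdeg {τ : Sym2 V → V} {x y : V} (hxy : G.Adj x y) (hτx : τ s(x, y) = x)
    (u : V) :
    outdeg G (flip1 τ s(x, y) y) u + (if u = x then 1 else 0)
      = outdeg G τ u + (if u = y then 1 else 0) := by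
  classical
  have hne : x ≠ y := hxy.ne
  have heE : s(x, y) ∈ EF G := (mem_EF G).2 hxy
  rw [outdeg_eq, outdeg_eq]
  by_cases hux : x = u
  · subst hux
    rw [if_pos rfl, if_neg hne]
    have hset : (EF G).filter (fun e => flip1 τ s(x, y) y e = x)
        = ((EF G).filter (fun e => τ e = x)).erase s(x, y) := by
      ext e'
      by_cases he : e' = s(x, y)
      · subst he
        simp only [Finset.mem_filter]; simp [flip1, hne.symm]
      · simp only [Finset.mem_filter]; simp [flip1, he, Finset.mem_erase]
    rw [hset, Finset.card_erase_add_one (by simp [Finset.mem_filter, heE, hτx])]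
    omega
  · by_cases huy : y = u
    · subst huy
      rw [if_neg (fun h => hne h.symm), if_pos rfl]
      have hmem : s(x, y) ∉ (EF G).filter (fun e => τ e = y) := by
        simp [Finset.mem_filter, hτx, hne]
      have hset : (EF G).filter (fun e => flip1 τ s(x, y) y e = y)
          = insert s(x, y) ((EF G).filter (fun e => τ e = y)) := by
        ext e'
        by_cases he : e' = s(x, y)
        · subst he
          simp [flip1, heE]
        · simp [flip1, he, Finset.mem_insert]
      rw [hset, Finset.card_insert_of_notMem hmem]
    · rw [if_neg (fun h => hux h.symm), if_neg (fun h => huy h.symm)]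
      congr 2
      ext e'
      by_cases he : e' = s(x, y)
      · subst he
        simp only [Finset.mem_filter]; simp [flip1, hτx, hux, huy]
      · simp only [Finset.mem_filter]; simp [flip1, he]

noncomputable def flipW : (τ : Sym2 V → V) → {u v : V} → G.Walk u v → (Sym2 V → V)
  | τ, _, _, .nil => τ
  | τ, a, _, .cons (v := b) _h p => flipW (flip1 τ s(a, b) b) p

@[simp] lemma flipW_nil (τ : Sym2 V → V) {u : V} : flipW G τ (.nil : G.Walk u u) = τ := by
  rw [flipW]

@[simp] lemma flipW_cons (τ : Sym2 V → V) {a b c : V} (h : G.Adj a b) (p : G.Walk b c) :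
    flipW G τ (.cons h p) = flipW G (flip1 τ s(a, b) b) p := by
  rw [flipW]

lemma flipW_ne {u v : V} (p : G.Walk u v) : ∀ (τ : Sym2 V → V) (e : Sym2 V),
    flipW G τ p e ≠ τ e → e ∈ p.edges := by
  induction p with
  | nil => intro τ e h; rw [flipW_nil] at h; exact absurd rfl h
  | @cons a b c h p ih =>
    intro τ e hne
    rw [flipW_cons] at hne
    by_cases he : flipW G (flip1 τ s(a, b) b) p e ≠ flip1 τ s(a, b) b e
    · exact List.mem_cons_of_mem _ (ih _ _ he)
    · push_neg at he
      have h2 : flip1 τ s(a, b) b e ≠ τ e := fun hh => hne (by rw [he, hh])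
      by_cases hee : e = s(a, b)
      · subst hee; simp [SimpleGraph.Walk.edges_cons]
      · simp [flip1, hee] at h2

lemma fwd_cons {τ : Sym2 V → V} {a b c : V} {h : G.Adj a b} {p : G.Walk b c}
    (hf : Fwd G τ (.cons h p)) : τ s(a, b) = a ∧ Fwd G τ p := by
  constructor
  · have := hf ⟨(a, b), h⟩ (by simp [SimpleGraph.Walk.darts_cons])
    simpa using this
  · intro d hd
    exact hf d (by simp [SimpleGraph.Walk.darts_cons, hd])

lemma flipW_valid {u v : V} (p : G.Walk u v) : ∀ (τ : Sym2 V → V), Valid G τ →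
    Valid G (flipW G τ p) := by
  induction p with
  | nil => intro τ hv; rw [flipW_nil]; exact hv
  | @cons a b c h p ih =>
    intro τ hv
    rw [flipW_cons]
    refine ih _ ?_
    intro e he
    by_cases hee : e = s(a, b)
    · subst hee; simp [flip1]
    · simpa [flip1, hee] using hv e he

lemma flipW_outdeg {u v : V} (p : G.Walk u v) : ∀ (τ : Sym2 V → V), Valid G τ →
    p.edges.Nodup → Fwd G τ p → ∀ x : V,
    outdeg G (flipW G τ p) x + (if x = u then 1 else 0)
      = outdeg G τ x + (if x = v then 1 else 0) := by
  induction p with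
  | nil => intro τ _ _ _ x; rw [flipW_nil]
  | @cons a b c h p ih =>
    intro τ hv hnd hf x
    obtain ⟨hfa, hfp⟩ := fwd_cons G hf
    rw [SimpleGraph.Walk.edges_cons, List.nodup_cons] at hnd
    obtain ⟨hnab, hndp⟩ := hnd
    have hv1 : Valid G (flip1 τ s(a, b) b) := by
      intro e he
      by_cases hee : e = s(a, b)
      · subst hee; simp [flip1]
      · simpa [flip1, hee] using hv e he
    have hf1 : Fwd G (flip1 τ s(a, b) b) p := by
      intro d hd
      have hde : d.edge ≠ s(a, b) := by
        intro hh
        apply hnab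
        rw [← hh]
        exact List.mem_map_of_mem hd
      rw [show flip1 τ s(a, b) b d.edge = τ d.edge by simp [flip1, hde]]
      exact hfp d hd
    have hIH := ih (flip1 τ s(a, b) b) hv1 hndp hf1 x
    have hfl := flip1_outdeg G h hfa x
    rw [flipW_cons]
    set ia := (if x = a then 1 else 0) with hia
    set ib := (if x = b then 1 else 0) with hib
    set ic := (if x = c then 1 else 0) with hic
    omega

def Sset (τ : Sym2 V → V) (v : V) (k : ℕ) : Set V :=
  {w | ∃ p : G.Walk v w, Fwd G τ p ∧ p.length ≤ k}

lemma self_mem_Sset (τ : Sym2 V → V) (v : V) (k : ℕ) : v ∈ Sset G τ v k :=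
  ⟨.nil, fun d hd => by simp [SimpleGraph.Walk.darts_nil] at hd, by simp⟩

lemma Sset_mono (τ : Sym2 V → V) (v : V) {k m : ℕ} (hkm : k ≤ m) :
    Sset G τ v k ⊆ Sset G τ v m := by
  rintro w ⟨p, hf, hl⟩
  exact ⟨p, hf, hl.trans hkm⟩

lemma growth (τ : Sym2 V → V) (hv : Valid G τ) (v : V) (astar d : ℕ)
    (hpseudo : ∀ S : Finset V,
      ({e | e ∈ G.edgeSet ∧ ∀ x ∈ e, x ∈ S} : Set (Sym2 V)).ncard ≤ astar * S.card)
    (k : ℕ) (hd : ∀ x ∈ Sset G τ v k, d ≤ outdeg G τ x) :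
    d * (Sset G τ v k).ncard ≤ astar * (Sset G τ v (k + 1)).ncard := by
  classical
  set Sk := (Set.toFinite (Sset G τ v k)).toFinset with hSk
  set Sk1 := (Set.toFinite (Sset G τ v (k + 1))).toFinset with hSk1
  have hmemSk : ∀ x, x ∈ Sk ↔ x ∈ Sset G τ v k := fun x => Set.Finite.mem_toFinset _
  have hmemSk1 : ∀ x, x ∈ Sk1 ↔ x ∈ Sset G τ v (k + 1) := fun x => Set.Finite.mem_toFinset _
  have hsub : ∀ x ∈ Sk, ((EF G).filter (fun e => τ e = x))
      ⊆ (EF G).filter (fun e => ∀ z ∈ e, z ∈ Sk1) := by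
    intro x hx e he
    rw [Finset.mem_filter] at he ⊢
    obtain ⟨heE, hτe⟩ := he
    refine ⟨heE, ?_⟩
    have hτm : τ e ∈ e := hv e ((mem_EF G).1 heE)
    have hspec := Sym2.other_spec hτm
    obtain ⟨p, hfp, hlp⟩ := (hmemSk x).1 hx
    have hadj : G.Adj x (Sym2.Mem.other hτm) := by
      rw [← SimpleGraph.mem_edgeSet, ← hτe, hspec]
      exact (mem_EF G).1 heE
    have hyother : Sym2.Mem.other hτm ∈ Sset G τ v (k + 1) := by
      refine ⟨p.concat hadj, ?_, ?_⟩
      · intro dd hdd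
        rw [SimpleGraph.Walk.darts_concat, List.concat_eq_append, List.mem_append, List.mem_singleton] at hdd
        rcases hdd with hdd | hdd
        · exact hfp dd hdd
        · subst hdd
          show τ s(x, Sym2.Mem.other hτm) = x
          rw [← hτe, hspec]
      · rw [SimpleGraph.Walk.length_concat]
        omega
    intro z hz
    rw [hmemSk1]
    rw [← hspec] at hz
    rcases Sym2.mem_iff.1 hz with hzx | hzy
    · rw [hzx, hτe]
      exact Sset_mono G τ v (Nat.le_succ k) ((hmemSk x).1 hx)
    · rw [hzy]
      exact hyother
  have hdisj : ∀ x ∈ Sk, ∀ y ∈ Sk, x ≠ y →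
      Disjoint ((EF G).filter (fun e => τ e = x)) ((EF G).filter (fun e => τ e = y)) := by
    intro x _ y _ hxy
    exact Finset.disjoint_filter.2 (fun e _ hp hq => hxy (hp.symm.trans hq))
  have h1 : d * Sk.card ≤ ∑ x ∈ Sk, outdeg G τ x := by
    rw [mul_comm]
    have := Finset.card_nsmul_le_sum Sk (fun x => outdeg G τ x) d
      (fun x hx => hd x ((hmemSk x).1 hx))
    simpa [smul_eq_mul] using this
  have h2 : ∑ x ∈ Sk, outdeg G τ x
      = (Sk.biUnion (fun x => (EF G).filter (fun e => τ e = x))).card := by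
    rw [Finset.card_biUnion hdisj]
    exact Finset.sum_congr rfl (fun x _ => outdeg_eq G τ x)
  have h3 : (Sk.biUnion (fun x => (EF G).filter (fun e => τ e = x))).card
      ≤ ((EF G).filter (fun e => ∀ z ∈ e, z ∈ Sk1)).card := by
    apply Finset.card_le_card
    intro e he
    rw [Finset.mem_biUnion] at he
    obtain ⟨x, hx, he⟩ := he
    exact hsub x hx he
  have h4 : (((EF G).filter (fun e => ∀ z ∈ e, z ∈ Sk1)) : Set (Sym2 V)).ncard
      ≤ astar * Sk1.card := by
    have heq : (((EF G).filter (fun e => ∀ z ∈ e, z ∈ Sk1)) : Set (Sym2 V))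
        = {e | e ∈ G.edgeSet ∧ ∀ x ∈ e, x ∈ Sk1} := by
      ext e
      simp [mem_EF]
    rw [heq]
    exact hpseudo Sk1
  rw [Set.ncard_coe_finset] at h4
  have hcard : (Sset G τ v k).ncard = Sk.card := by
    rw [hSk, Set.ncard_eq_toFinset_card _ (Set.toFinite _)]
  have hcard1 : (Sset G τ v (k + 1)).ncard = Sk1.card := by
    rw [hSk1, Set.ncard_eq_toFinset_card _ (Set.toFinite _)]
  rw [hcard, hcard1]
  omega

lemma find (τ : Sym2 V → V) (hv : Valid G τ) (astar d : ℕ) (ha : 1 ≤ astar)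
    (hpseudo : ∀ S : Finset V,
      ({e | e ∈ G.edgeSet ∧ ∀ x ∈ e, x ∈ S} : Set (Sym2 V)).ncard ≤ astar * S.card)
    (ε : ℝ) (hε0 : 0 < ε) (hd : (astar : ℝ) * (1 + ε) ≤ d)
    (K : ℕ) (hK : Real.log (Fintype.card V) / Real.log (1 + ε) + 1 ≤ (K : ℝ))
    (hn : 1 ≤ Fintype.card V) (v : V) :
    ∃ w : V, ∃ p : G.Walk v w, p.IsPath ∧ Fwd G τ p ∧ p.length ≤ K ∧ outdeg G τ w < d := by
  by_contra hcon
  push_neg at hcon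
  have Hall : ∀ x ∈ Sset G τ v K, d ≤ outdeg G τ x := by
    rintro x ⟨p, hf, hl⟩
    have hf' : Fwd G τ p.bypass := fun dd hdd => hf dd (SimpleGraph.Walk.darts_bypass_subset p hdd)
    exact hcon x p.bypass (SimpleGraph.Walk.bypass_isPath p) hf'
      ((SimpleGraph.Walk.length_bypass_le p).trans hl)
  have hone : (0:ℝ) < 1 + ε := by linarith
  have hgrow : ∀ k : ℕ, k ≤ K → (1 + ε) ^ k ≤ ((Sset G τ v k).ncard : ℝ) := by
    intro k
    induction k with
    | zero =>
      intro _
      have : 0 < (Sset G τ v 0).ncard := by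
        rw [Set.ncard_pos (Set.toFinite _)]
        exact ⟨v, self_mem_Sset G τ v 0⟩
      simpa using by exact_mod_cast this
    | succ k ih =>
      intro hkK
      have hk : k ≤ K := Nat.le_of_succ_le hkK
      have hdall : ∀ x ∈ Sset G τ v k, d ≤ outdeg G τ x :=
        fun x hx => Hall x (Sset_mono G τ v hk hx)
      have hgr := growth G τ hv v astar d hpseudo k hdall
      have hgrR : (d : ℝ) * ((Sset G τ v k).ncard : ℝ)
          ≤ (astar : ℝ) * ((Sset G τ v (k+1)).ncard : ℝ) := by exact_mod_cast hgr
      have hA : (astar : ℝ) * ((1 + ε) * ((Sset G τ v k).ncard : ℝ))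
          ≤ (astar : ℝ) * ((Sset G τ v (k+1)).ncard : ℝ) := by
        calc (astar : ℝ) * ((1 + ε) * ((Sset G τ v k).ncard : ℝ))
            = ((astar : ℝ) * (1 + ε)) * ((Sset G τ v k).ncard : ℝ) := by ring
          _ ≤ (d : ℝ) * ((Sset G τ v k).ncard : ℝ) :=
              mul_le_mul_of_nonneg_right hd (by positivity)
          _ ≤ _ := hgrR
      have hstep : (1 + ε) * ((Sset G τ v k).ncard : ℝ)
          ≤ ((Sset G τ v (k+1)).ncard : ℝ) :=
        le_of_mul_le_mul_left hA (by exact_mod_cast Nat.lt_of_lt_of_le Nat.zero_lt_one ha)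
      calc (1 + ε) ^ (k + 1) = (1 + ε) * (1 + ε) ^ k := by ring
        _ ≤ (1 + ε) * ((Sset G τ v k).ncard : ℝ) :=
            mul_le_mul_of_nonneg_left (ih hk) (le_of_lt hone)
        _ ≤ _ := hstep
  have hle : ((Sset G τ v K).ncard : ℝ) ≤ (Fintype.card V : ℝ) := by
    have : (Sset G τ v K).ncard ≤ (Set.univ : Set V).ncard :=
      Set.ncard_le_ncard (Set.subset_univ _) Set.finite_univ
    rw [Set.ncard_univ, Nat.card_eq_fintype_card] at this
    exact_mod_cast this
  have hlogpos : 0 < Real.log (1 + ε) := Real.log_pos (by linarith)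
  have hnpos : (0:ℝ) < (Fintype.card V : ℝ) := by exact_mod_cast hn
  have hbig : (Fintype.card V : ℝ) * (1 + ε) ≤ (1 + ε) ^ K := by
    have h1 : (1 + ε) ^ (K : ℝ) = (1 + ε) ^ K := Real.rpow_natCast _ K
    have h2 : (1 + ε) ^ ((Real.log (Fintype.card V) / Real.log (1 + ε)) + 1 : ℝ)
        ≤ (1 + ε) ^ (K : ℝ) :=
      Real.rpow_le_rpow_of_exponent_le (by linarith) hK
    have h3 : (1 + ε) ^ ((Real.log (Fintype.card V) / Real.log (1 + ε)) + 1 : ℝ)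
        = (Fintype.card V : ℝ) * (1 + ε) := by
      rw [Real.rpow_add hone, Real.rpow_one]
      congr 1
      rw [Real.rpow_def_of_pos hone]
      rw [mul_div_cancel₀ _ (ne_of_gt hlogpos)]
      exact Real.exp_log hnpos
    rw [← h1, ← h3]
    exact h2
  have : (Fintype.card V : ℝ) < (Fintype.card V : ℝ) := by
    calc (Fintype.card V : ℝ) < (Fintype.card V : ℝ) * (1 + ε) := by nlinarith
      _ ≤ (1 + ε) ^ K := hbig
      _ ≤ ((Sset G τ v K).ncard : ℝ) := hgrow K le_rfl
      _ ≤ (Fintype.card V : ℝ) := hle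
  exact lt_irrefl _ this

lemma fix (astar d : ℕ) (ha : 1 ≤ astar)
    (hpseudo : ∀ S : Finset V,
      ({e | e ∈ G.edgeSet ∧ ∀ x ∈ e, x ∈ S} : Set (Sym2 V)).ncard ≤ astar * S.card)
    (ε : ℝ) (hε0 : 0 < ε) (hd : (astar : ℝ) * (1 + ε) ≤ d)
    (K : ℕ) (hK : Real.log (Fintype.card V) / Real.log (1 + ε) + 1 ≤ (K : ℝ))
    (hn : 1 ≤ Fintype.card V) (L : Set V) [DecidablePred (· ∈ L)] :
    ∀ (N : ℕ) (τ : Sym2 V → V), Valid G τ →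
    (∑ x : V, (if x ∈ L then outdeg G τ x - d else 0)) ≤ N →
    ∃ τ' : Sym2 V → V, Valid G τ' ∧
      (∀ e, τ' e ≠ τ e → ∃ x ∈ e, ∃ y ∈ L, ∃ q : G.Walk y x, q.length ≤ K) ∧
      (∀ v ∈ L, outdeg G τ' v ≤ d) ∧
      (∀ v : V, outdeg G τ' v ≤ max (outdeg G τ v) d) := by
  intro N
  induction N with
  | zero =>
    intro τ hv hΦ
    refine ⟨τ, hv, fun e he => absurd rfl he, ?_, fun v => le_max_left _ _⟩
    intro v hvL
    by_contra hlt
    push_neg at hlt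
    have h1 : 1 ≤ (if v ∈ L then outdeg G τ v - d else 0) := by
      rw [if_pos hvL]; omega
    have h2 : (if v ∈ L then outdeg G τ v - d else 0)
        ≤ ∑ x : V, (if x ∈ L then outdeg G τ x - d else 0) :=
      Finset.single_le_sum (f := fun x => if x ∈ L then outdeg G τ x - d else 0)
        (fun x _ => Nat.zero_le _) (Finset.mem_univ v)
    omega
  | succ N ih =>
    intro τ hv hΦ
    by_cases hgood : ∀ v ∈ L, outdeg G τ v ≤ d
    · exact ⟨τ, hv, fun e he => absurd rfl he, hgood, fun v => le_max_left _ _⟩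
    · push_neg at hgood
      obtain ⟨v, hvL, hvlt⟩ := hgood
      obtain ⟨w, p, hpath, hfwd, hlen, hwlt⟩ :=
        find G τ hv astar d ha hpseudo ε hε0 hd K hK hn v
      have hwv : w ≠ v := fun h => by rw [h] at hwlt; omega
      set τ1 := flipW G τ p with hτ1
      have hv1 : Valid G τ1 := flipW_valid G p τ hv
      have hout1 := flipW_outdeg G p τ hv hpath.isTrail.edges_nodup hfwd
      have houtv : outdeg G τ1 v + 1 = outdeg G τ v := by
        have := hout1 v
        rw [if_pos rfl, if_neg (Ne.symm hwv), ← hτ1] at this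
        omega
      have houtw : outdeg G τ1 w = outdeg G τ w + 1 := by
        have := hout1 w
        rw [if_neg hwv, if_pos rfl, ← hτ1] at this
        omega
      have houto : ∀ x : V, x ≠ v → x ≠ w → outdeg G τ1 x = outdeg G τ x := by
        intro x hxv hxw
        have := hout1 x
        rw [if_neg hxv, if_neg hxw, ← hτ1] at this
        omega
      have hΦ1 : (∑ x : V, (if x ∈ L then outdeg G τ1 x - d else 0))
          < ∑ x : V, (if x ∈ L then outdeg G τ x - d else 0) := by
        apply Finset.sum_lt_sum
        · intro x _
          by_cases hxv : x = v
          · subst hxv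
            split_ifs <;> omega
          · by_cases hxw : x = w
            · subst hxw
              split_ifs <;> omega
            · rw [houto x hxv hxw]
        · refine ⟨v, Finset.mem_univ v, ?_⟩
          rw [if_pos hvL, if_pos hvL]
          omega
      obtain ⟨τ', hv', hnear', hgood', hmax'⟩ := ih τ1 hv1 (by omega)
      refine ⟨τ', hv', ?_, hgood', ?_⟩
      · intro e he
        by_cases h1 : τ' e = τ1 e
        · have h2 : τ1 e ≠ τ e := fun hh => he (h1.trans hh)
          have hep : e ∈ p.edges := flipW_ne G p τ e h2
          obtain ⟨dd, hdd, hdde⟩ := List.mem_map.1 hep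
          refine ⟨dd.toProd.1, ?_, v, hvL, ?_⟩
          · rw [← hdde]
            exact Sym2.mem_mk_left _ _
          · have hsupp : dd.toProd.1 ∈ p.support :=
              SimpleGraph.Walk.dart_fst_mem_support_of_mem_darts p hdd
            exact ⟨p.takeUntil _ hsupp,
              (SimpleGraph.Walk.length_takeUntil_le p hsupp).trans hlen⟩
        · exact hnear' e h1
      · intro u
        have := hmax' u
        by_cases huv : u = v
        · subst huv; omega
        · by_cases huw : u = w
          · subst huw
            have : outdeg G τ1 u ≤ d := by omega
            omega
          · rw [houto u huv huw] at this
            exact this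

end LocalFix

/-- in a finite simple graph on `n ≥ 2` vertices with pseudoarboricity bound
`a* ≥ 1`, for any orientation `σ`, any `ε ∈ (0,1)` and any vertex set `L`, there is an
orientation `σ'` agreeing with `σ` on all edges having no endpoint at distance at most
`r = ⌈log n / log(1+ε)⌉ + 2` from `L`, under which every vertex of `L` has outdegree at most
`⌈a*·(1+ε)⌉`, and every vertex of outdegree at most `⌈a*·(1+ε)⌉` under `σ` still has outdegree
at most `⌈a*·(1+ε)⌉` under `σ'`. -/
theorem local_orientation_fix {V : Type*} [Fintype V]
    (G : SimpleGraph V) (hn : 2 ≤ Fintype.card V)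
    (astar : ℕ) (ha : 1 ≤ astar)
    (hpseudo : ∀ S : Finset V,
      ({e | e ∈ G.edgeSet ∧ ∀ x ∈ e, x ∈ S} : Set (Sym2 V)).ncard ≤ astar * S.card)
    (σ : Sym2 V → V) (hσ : ∀ e ∈ G.edgeSet, σ e ∈ e)
    (ε : ℝ) (hε0 : 0 < ε) (hε1 : ε < 1)
    (L : Set V)
    (r : ℕ) (hr : r = ⌈Real.log (Fintype.card V) / Real.log (1 + ε)⌉₊ + 2) :
    ∃ σ' : Sym2 V → V,
      (∀ e ∈ G.edgeSet, σ' e ∈ e) ∧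
      (∀ e ∈ G.edgeSet,
        (¬ ∃ x ∈ e, ∃ y ∈ L, ∃ p : G.Walk y x, p.length ≤ r) → σ' e = σ e) ∧
      (∀ v ∈ L, outdeg G σ' v ≤ ⌈(astar : ℝ) * (1 + ε)⌉₊) ∧
      (∀ v : V, outdeg G σ v ≤ ⌈(astar : ℝ) * (1 + ε)⌉₊ →
        outdeg G σ' v ≤ ⌈(astar : ℝ) * (1 + ε)⌉₊) := by
  classical
  set d := ⌈(astar : ℝ) * (1 + ε)⌉₊ with hdd
  set K := ⌈Real.log (Fintype.card V) / Real.log (1 + ε)⌉₊ + 1 with hKK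
  have hd : (astar : ℝ) * (1 + ε) ≤ (d : ℝ) := Nat.le_ceil _
  have hK : Real.log (Fintype.card V) / Real.log (1 + ε) + 1 ≤ (K : ℝ) := by
    have h1 := Nat.le_ceil (Real.log (Fintype.card V) / Real.log (1 + ε))
    rw [hKK]
    push_cast
    linarith
  have hn1 : 1 ≤ Fintype.card V := le_trans (by norm_num) hn
  obtain ⟨σ', hvalid, hnear, hgood, hmax⟩ :=
    LocalFix.fix G astar d ha hpseudo ε hε0 hd K hK hn1 L
      (∑ x : V, (if x ∈ L then outdeg G σ x - d else 0)) σ hσ le_rfl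
  refine ⟨σ', hvalid, ?_, hgood, ?_⟩
  · intro e _ hno
    by_contra hne
    obtain ⟨x, hx, y, hy, q, hq⟩ := hnear e hne
    exact hno ⟨x, hx, y, hy, q, hq.trans (by omega)⟩
  · intro v hv'
    exact le_trans (hmax v) (max_le hv' le_rfl)
end

section
/- Let a ≥ 2 and Δ ≥ 2 be integers and ε ∈ (0,1) a real with a·ε ≥ 100·(√(log Δ) + log a); let t = ⌈(1+ε)·a⌉ and assume t ≤ Δ. Let A be a finite set with |A| = t and fix an a-element subset C_v of {1,…,t}. For each u ∈ A, independently choose C_u uniformly at random among the a-element subsets of {1,…,t}. Let H be the random bipartite graph with parts {1,…,t} and A, having an edge between i and u if and only if i ∈ C_v and i ∉ C_u. Then with probability at least 1 − Δ^{−10}, H contains a matching of size at least a·(1−ε). -/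
open Finset

lemma my_choose_le_pow (n k : ℕ) : n.choose k ≤ n ^ k := by
  calc n.choose k ≤ n.descFactorial k := by
        rw [Nat.choose_eq_descFactorial_div_factorial]; exact Nat.div_le_self _ _
    _ ≤ n ^ k := Nat.descFactorial_le_pow n k

lemma my_ratio (t a : ℕ) (hat : a ≤ t) :
    ∀ s, s ≤ a → (t - s).choose (a - s) * t ^ s ≤ t.choose a * a ^ s := by
  intro s
  induction s with
  | zero => simp
  | succ s ih =>
    intro hs1
    have hs : s ≤ a := by omega
    have IH := ih hs
    have hts : 0 < t - s := by omega
    have key : (t - s) * (t - s - 1).choose (a - s - 1) = (t-s).choose (a-s) * (a - s) := by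
      have := Nat.add_one_mul_choose_eq (t - s - 1) (a - s - 1)
      have h1 : (t - s - 1) + 1 = t - s := by omega
      have h2 : (a - s - 1) + 1 = a - s := by omega
      rw [h1, h2] at this
      exact this
    have cross : (a - s) * t ≤ (t - s) * a := by
      obtain ⟨x, hx⟩ : ∃ x, a = x + s := ⟨a - s, by omega⟩
      obtain ⟨y, hy⟩ : ∃ y, t = y + s := ⟨t - s, by omega⟩
      have hxy : x ≤ y := by omega
      subst hx hy
      simp only [Nat.add_sub_cancel]
      nlinarith
    refine Nat.le_of_mul_le_mul_left ?_ hts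
    have e1 : t - (s+1) = t - s - 1 := by omega
    have e2 : a - (s+1) = a - s - 1 := by omega
    rw [e1, e2]
    calc (t - s) * ((t - s - 1).choose (a - s - 1) * t ^ (s+1))
        = ((t-s) * (t - s - 1).choose (a - s - 1)) * t ^ (s+1) := by ring
      _ = ((t-s).choose (a-s) * (a - s)) * t ^ (s+1) := by rw [key]
      _ = ((t-s).choose (a-s) * t ^ s) * ((a - s) * t) := by ring
      _ ≤ (t.choose a * a ^ s) * ((t - s) * a) := Nat.mul_le_mul IH cross
      _ = (t - s) * (t.choose a * a ^ (s+1)) := by ring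


lemma my_exists_matching {t a d : ℕ} {A : Type*} [Fintype A] [DecidableEq A]
    (hA : Fintype.card A = t) (ht0 : 0 < t)
    (Cv : Finset (Fin t)) (hCv : Cv.card = a)
    (C : A → Finset (Fin t))
    (hHall : ∀ W : Finset (Fin t), W ⊆ Cv → d + 1 ≤ W.card →
      W.card ≤ (univ.filter (fun u : A => ¬ W ⊆ C u)).card + d) :
    ∃ (s : Finset A) (m : A → Fin t), a - d ≤ s.card ∧ Set.InjOn m ↑s ∧
      ∀ u ∈ s, m u ∈ Cv ∧ m u ∉ C u := by
  classical
  haveI : Nonempty A := Fintype.card_pos_iff.mp (by omega)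
  haveI : Nonempty (Fin t) := ⟨⟨0, ht0⟩⟩
  set T : Fin t → Finset (A ⊕ Fin d) := fun i =>
    if i ∈ Cv then ((univ.filter fun u => i ∉ C u).image Sum.inl ∪
      (univ : Finset (Fin d)).image Sum.inr) else univ with hT
  have hall : ∀ W : Finset (Fin t), W.card ≤ (W.biUnion T).card := by
    intro W
    by_cases hWCv : W ⊆ Cv
    case pos =>
      rcases W.eq_empty_or_nonempty with rfl | ⟨i0, hi0⟩
      · simp
      -- W nonempty, W ⊆ Cv
      have hsub : ((univ.filter fun u : A => ¬ W ⊆ C u).image Sum.inl ∪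
          (univ : Finset (Fin d)).image Sum.inr) ⊆ W.biUnion T := by
        intro x hx
        rcases Finset.mem_union.mp hx with hx | hx
        · obtain ⟨u, hu, rfl⟩ := Finset.mem_image.mp hx
          obtain ⟨i, hiW, hiC⟩ := by
            have := (Finset.mem_filter.mp hu).2
            rw [Finset.not_subset] at this
            exact this
          refine Finset.mem_biUnion.mpr ⟨i, hiW, ?_⟩
          rw [hT]; simp only [if_pos (hWCv hiW)]
          exact Finset.mem_union_left _ (Finset.mem_image.mpr ⟨u, Finset.mem_filter.mpr ⟨Finset.mem_univ _, hiC⟩, rfl⟩)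
        · obtain ⟨v, _, rfl⟩ := Finset.mem_image.mp hx
          refine Finset.mem_biUnion.mpr ⟨i0, hi0, ?_⟩
          rw [hT]; simp only [if_pos (hWCv hi0)]
          exact Finset.mem_union_right _ (Finset.mem_image.mpr ⟨v, Finset.mem_univ _, rfl⟩)
      have hcard : ((univ.filter fun u : A => ¬ W ⊆ C u).image Sum.inl ∪
          (univ : Finset (Fin d)).image Sum.inr).card
          = (univ.filter fun u : A => ¬ W ⊆ C u).card + d := by
        rw [Finset.card_union_of_disjoint, Finset.card_image_of_injective _ Sum.inl_injective,
          Finset.card_image_of_injective _ Sum.inr_injective]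
        · simp
        · rw [Finset.disjoint_left]
          rintro x hx hx'
          obtain ⟨u, _, rfl⟩ := Finset.mem_image.mp hx
          obtain ⟨v, _, h⟩ := Finset.mem_image.mp hx'
          exact Sum.inl_ne_inr h.symm
      have hle := Finset.card_le_card hsub
      rw [hcard] at hle
      by_cases hbig : d + 1 ≤ W.card
      · exact le_trans (hHall W hWCv hbig) hle
      · calc W.card ≤ d := by omega
          _ ≤ (W.biUnion T).card := le_trans (by omega) hle
    case neg =>
      -- some i0 ∈ W, i0 ∉ Cv
      obtain ⟨i0, hi0W, hi0⟩ := Finset.not_subset.mp hWCv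
      have hsub : (univ : Finset (A ⊕ Fin d)) ⊆ W.biUnion T := by
        intro x _
        refine Finset.mem_biUnion.mpr ⟨i0, hi0W, ?_⟩
        rw [hT]; simp [if_neg hi0]
      calc W.card ≤ Fintype.card (Fin t) := by
            simpa using Finset.card_le_univ W
        _ ≤ Fintype.card (A ⊕ Fin d) := by simp [hA]
        _ = (univ : Finset (A ⊕ Fin d)).card := by simp
        _ ≤ (W.biUnion T).card := Finset.card_le_card hsub
  obtain ⟨f, hfinj, hfmem⟩ := (Finset.all_card_le_biUnion_card_iff_exists_injective T).mp hall
  set Cv' : Finset (Fin t) := Cv.filter (fun i => (f i).isLeft) with hCv'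
  have hCv'sub : Cv' ⊆ Cv := Finset.filter_subset _ _
  -- card of Cv \ Cv' ≤ d
  have hsd : (Cv \ Cv').card ≤ d := by
    have himg : (Cv \ Cv').image f ⊆ (univ : Finset (Fin d)).image Sum.inr := by
      intro x hx
      obtain ⟨i, hi, rfl⟩ := Finset.mem_image.mp hx
      have : ¬ (f i).isLeft := by
        rcases Finset.mem_sdiff.mp hi with ⟨hiCv, hi'⟩
        intro h; exact hi' (Finset.mem_filter.mpr ⟨hiCv, h⟩)
      obtain ⟨v, hv⟩ := Sum.isRight_iff.mp (by simpa [Sum.not_isLeft] using this)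
      rw [hv]; exact Finset.mem_image.mpr ⟨v, Finset.mem_univ _, rfl⟩
    calc (Cv \ Cv').card = ((Cv \ Cv').image f).card :=
          (Finset.card_image_of_injective _ hfinj).symm
      _ ≤ ((univ : Finset (Fin d)).image Sum.inr).card := Finset.card_le_card himg
      _ ≤ (univ : Finset (Fin d)).card := Finset.card_image_le
      _ = d := by simp
  have hCv'card : a - d ≤ Cv'.card := by
    have := Finset.card_sdiff_add_card_eq_card hCv'sub
    omega
  set g : Fin t → A := fun i => Sum.elim id (fun _ => Classical.arbitrary A) (f i) with hg
  have hfg : ∀ i ∈ Cv', f i = Sum.inl (g i) := by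
    intro i hi
    have : (f i).isLeft := (Finset.mem_filter.mp hi).2
    obtain ⟨u, hu⟩ := Sum.isLeft_iff.mp this
    rw [hg]; simp [hu]
  have hginj : Set.InjOn g ↑Cv' := by
    intro i hi i' hi' h
    apply hfinj
    rw [hfg i (by simpa using hi), hfg i' (by simpa using hi'), h]
  set s : Finset A := Cv'.image g with hs
  have hscard : s.card = Cv'.card := Finset.card_image_of_injOn hginj
  set m : A → Fin t := Function.invFunOn g ↑Cv' with hm
  have hmem : ∀ u ∈ s, m u ∈ Cv' ∧ g (m u) = u := by
    intro u hu
    obtain ⟨i, hi, rfl⟩ := Finset.mem_image.mp hu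
    have himg : g i ∈ g '' ↑Cv' := ⟨i, by simpa using hi, rfl⟩
    exact ⟨by simpa using Function.invFunOn_mem himg, Function.invFunOn_eq himg⟩
  refine ⟨s, m, by omega, ?_, ?_⟩
  · intro u hu u' hu' h
    have h1 := (hmem u (by simpa using hu)).2
    have h2 := (hmem u' (by simpa using hu')).2
    rw [← h1, ← h2, h]
  · intro u hu
    obtain ⟨hmu, hgu⟩ := hmem u hu
    have hfmu : f (m u) = Sum.inl u := by rw [hfg _ hmu, hgu]
    have := hfmem (m u)
    rw [hfmu, hT] at this
    simp only [if_pos (hCv'sub hmu)] at this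
    refine ⟨hCv'sub hmu, ?_⟩
    rcases Finset.mem_union.mp this with h | h
    · obtain ⟨u', hu', h⟩ := Finset.mem_image.mp h
      have : u' = u := Sum.inl_injective h
      subst this
      exact (Finset.mem_filter.mp hu').2
    · obtain ⟨v, _, h⟩ := Finset.mem_image.mp h
      exact absurd h (Sum.inr_ne_inl)


lemma my_card_sub (t a : ℕ) :
    Fintype.card {S : Finset (Fin t) // S.card = a} = t.choose a := by
  rw [Fintype.card_subtype]
  have : (univ.filter fun S : Finset (Fin t) => S.card = a)
      = Finset.powersetCard a (univ : Finset (Fin t)) := by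
    rw [Finset.powersetCard_eq_filter, Finset.powerset_univ]
  rw [this, Finset.card_powersetCard, Finset.card_univ, Fintype.card_fin]

lemma my_card_superset {t a : ℕ} (W : Finset (Fin t)) (hW : W.card ≤ a) :
    (univ.filter fun Cs : {S : Finset (Fin t) // S.card = a} => W ⊆ Cs.1).card
      = (t - W.card).choose (a - W.card) := by
  classical
  have := Finset.card_bij'
    (i := fun (Cs : {S : Finset (Fin t) // S.card = a})
      (_ : Cs ∈ univ.filter fun Cs => W ⊆ Cs.1) => Cs.1 \ W)
    (j := fun (D : Finset (Fin t))
      (hD : D ∈ Finset.powersetCard (a - W.card) ((univ : Finset (Fin t)) \ W)) =>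
      (⟨D ∪ W, by
        obtain ⟨hsub, hcard⟩ := Finset.mem_powersetCard.mp hD
        have hdisj : Disjoint D W := by
          rw [Finset.disjoint_left]
          intro x hx
          exact (Finset.mem_sdiff.mp (hsub hx)).2
        rw [Finset.card_union_of_disjoint hdisj, hcard]
        omega⟩ : {S : Finset (Fin t) // S.card = a}))
    (hi := ?_) (hj := ?_) ?_ ?_
  · rw [this, Finset.card_powersetCard, Finset.card_sdiff_of_subset (Finset.subset_univ W),
      Finset.card_univ, Fintype.card_fin]
  · intro Cs hCs
    have hsub : W ⊆ Cs.1 := (Finset.mem_filter.mp hCs).2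
    rw [Finset.mem_powersetCard]
    constructor
    · intro x hx
      rw [Finset.mem_sdiff] at hx ⊢
      exact ⟨Finset.mem_univ _, hx.2⟩
    · rw [Finset.card_sdiff_of_subset hsub, Cs.2]
  · intro D hD
    rw [Finset.mem_filter]
    exact ⟨Finset.mem_univ _, Finset.subset_union_right⟩
  · intro Cs hCs
    have hsub : W ⊆ Cs.1 := (Finset.mem_filter.mp hCs).2
    exact Subtype.ext (Finset.sdiff_union_of_subset hsub)
  · intro D hD
    obtain ⟨hsub, hcard⟩ := Finset.mem_powersetCard.mp hD
    have hdisj : Disjoint D W := by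
      rw [Finset.disjoint_left]
      intro x hx
      exact (Finset.mem_sdiff.mp (hsub hx)).2
    simp only
    rw [Finset.union_sdiff_distrib, Finset.sdiff_self, Finset.union_empty,
      Finset.sdiff_eq_self_of_disjoint hdisj]

lemma my_card_E {t a : ℕ} {A : Type*} [Fintype A] [DecidableEq A]
    (hA : Fintype.card A = t) (W : Finset (Fin t)) (hW : W.card ≤ a) (U : Finset A) :
    (univ.filter fun ω : A → {S : Finset (Fin t) // S.card = a} => ∀ u ∈ U, W ⊆ (ω u).1).card
      = ((t - W.card).choose (a - W.card)) ^ U.card * (t.choose a) ^ (t - U.card) := by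
  classical
  have hset : (univ.filter fun ω : A → {S : Finset (Fin t) // S.card = a} => ∀ u ∈ U, W ⊆ (ω u).1)
      = Fintype.piFinset (fun u : A => if u ∈ U
          then (univ.filter fun Cs : {S : Finset (Fin t) // S.card = a} => W ⊆ Cs.1)
          else univ) := by
    ext ω
    simp only [Finset.mem_filter, Finset.mem_univ, true_and, Fintype.mem_piFinset]
    constructor
    · intro h u
      by_cases hu : u ∈ U
      · simp [if_pos hu, h u hu]
      · simp [if_neg hu]
    · intro h u hu
      have := h u
      rw [if_pos hu] at this
      exact (Finset.mem_filter.mp this).2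
  rw [hset, Fintype.card_piFinset]
  rw [← Finset.prod_filter_mul_prod_filter_not univ (fun u => u ∈ U)]
  have h1 : (univ.filter fun u : A => u ∈ U) = U := by
    ext u; simp
  rw [h1]
  have h2 : ∀ u ∈ U, (if u ∈ U
          then (univ.filter fun Cs : {S : Finset (Fin t) // S.card = a} => W ⊆ Cs.1)
          else univ).card = (t - W.card).choose (a - W.card) := by
    intro u hu
    rw [if_pos hu, my_card_superset W hW]
  have h3 : ∀ u ∈ (univ.filter fun u : A => ¬ u ∈ U), (if u ∈ U
          then (univ.filter fun Cs : {S : Finset (Fin t) // S.card = a} => W ⊆ Cs.1)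
          else univ).card = t.choose a := by
    intro u hu
    rw [if_neg (Finset.mem_filter.mp hu).2, Finset.card_univ, my_card_sub]
  rw [Finset.prod_congr rfl h2, Finset.prod_congr rfl h3, Finset.prod_const, Finset.prod_const]
  congr 1
  rw [Finset.filter_not, h1]
  rw [Finset.card_sdiff_of_subset (Finset.subset_univ U), Finset.card_univ, hA]

set_option maxHeartbeats 1000000 in
lemma my_term_bound (a t d j s m Δ : ℕ) (ε : ℝ)
    (hε0 : 0 < ε) (hε1 : ε ≤ 1)
    (ha2 : 2 ≤ a) (hΔ2 : 2 ≤ Δ)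
    (hb152 : 152 ≤ ε * a)
    (hla : Real.log a ≤ ε * a / 100)
    (hlΔ : Real.log Δ ≤ (ε * a / 100)^2)
    (hlt : Real.log t ≤ 1 + Real.log a)
    (hta : (a : ℝ) + ε * a ≤ (t : ℝ))
    (hatN : a ≤ t)
    (hd1 : ε * a ≤ (d : ℝ) + 1)
    (hs : s = d + 1 + j)
    (hm : m = t - j)
    (hdj : s ≤ a) :
    (a.choose s : ℝ) * (t.choose m : ℝ) *
      (((t-s).choose (a-s) : ℝ)^m * (t.choose a : ℝ)^j) * ((Δ:ℝ)^10 * a)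
      ≤ (t.choose a : ℝ)^t := by
  obtain ⟨b, hbdef⟩ : ∃ b:ℝ, b = ε * (a:ℝ) := ⟨_, rfl⟩
  obtain ⟨la, hladef⟩ : ∃ x:ℝ, x = Real.log a := ⟨_, rfl⟩
  obtain ⟨lt, hltdef⟩ : ∃ x:ℝ, x = Real.log t := ⟨_, rfl⟩
  obtain ⟨lΔ, hlΔdef⟩ : ∃ x:ℝ, x = Real.log Δ := ⟨_, rfl⟩
  set R : ℕ := a - s with hR
  have hjt : j ≤ t := by omega
  have ha0 : (0:ℝ) < a := by exact_mod_cast (by omega : 0 < a)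
  have ht0 : (0:ℝ) < t := by exact_mod_cast (by omega : 0 < t)
  have hΔ0 : (0:ℝ) < Δ := by exact_mod_cast (by omega : 0 < Δ)
  have hb : 152 ≤ b := by rw [hbdef]; exact hb152
  have hb0 : (0:ℝ) ≤ b := by linarith
  have hla100 : la ≤ b/100 := by rw [hladef, hbdef]; exact hla
  have hlΔb : lΔ ≤ (b/100)^2 := by rw [hlΔdef, hbdef]; exact hlΔ
  have hlt1 : lt ≤ 1 + la := by rw [hltdef, hladef]; exact hlt
  have htab : (a:ℝ) + b ≤ t := by rw [hbdef]; exact hta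
  have hd1b : b ≤ (d:ℝ) + 1 := by rw [hbdef]; exact hd1
  have hla0 : 0 ≤ la := by
    rw [hladef]; exact Real.log_nonneg (by exact_mod_cast (by omega : 1 ≤ a))
  have hlt0 : 0 ≤ lt := by
    rw [hltdef]; exact Real.log_nonneg (by exact_mod_cast (by omega : 1 ≤ t))
  have hlΔ0 : 0 ≤ lΔ := by
    rw [hlΔdef]; exact Real.log_nonneg (by exact_mod_cast (by omega : 1 ≤ Δ))
  have hlt50 : lt ≤ b/50 := by linarith
  have hεhalf : ε/2 ≤ lt - la := by
    have h1 : (1+ε) ≤ (t:ℝ)/a := by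
      rw [le_div_iff₀ ha0]
      have he : (1+ε)*(a:ℝ) = a + b := by rw [hbdef]; ring
      linarith
    have h2 : Real.log (1+ε) ≤ Real.log ((t:ℝ)/a) :=
      Real.log_le_log (by linarith) h1
    have h3 : Real.log ((t:ℝ)/a) = lt - la := by
      rw [hltdef, hladef]; exact Real.log_div (by positivity) (by positivity)
    have h4 : ε/(1+ε) ≤ Real.log (1+ε) := by
      have h5 := Real.log_le_sub_one_of_pos (x := (1+ε)⁻¹) (by positivity)
      rw [Real.log_inv] at h5
      have h6 : (1+ε)⁻¹ - 1 = -(ε/(1+ε)) := by field_simp; ring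
      linarith
    have h7 : ε/2 ≤ ε/(1+ε) := by
      rw [div_le_div_iff₀ (by norm_num) (by positivity)]
      have he : ε*ε ≤ ε*1 := mul_le_mul_of_nonneg_left hε1 hε0.le
      nlinarith [he]
    linarith
  -- cast identities
  have hd0' : (0:ℝ) ≤ (d:ℝ) := Nat.cast_nonneg d
  have hj0' : (0:ℝ) ≤ (j:ℝ) := Nat.cast_nonneg j
  have hscast : (s:ℝ) = (d:ℝ) + 1 + (j:ℝ) := by rw [hs]; push_cast; ring
  have hmcast : (m:ℝ) = (t:ℝ) - (j:ℝ) := by rw [hm, Nat.cast_sub hjt]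
  have hRcast : (R:ℝ) = (a:ℝ) - (s:ℝ) := by rw [hR, Nat.cast_sub hdj]
  have hs0 : (0:ℝ) ≤ s := Nat.cast_nonneg s
  have hm0 : (0:ℝ) ≤ m := Nat.cast_nonneg m
  have hR0 : (0:ℝ) ≤ R := Nat.cast_nonneg R
  have hsb : b ≤ (s:ℝ) := by rw [hscast]; linarith
  have hs1 : (1:ℝ) ≤ s := by rw [hscast]; linarith
  have hjs : (j:ℝ) ≤ s := by rw [hscast]; linarith
  have hsa : (s:ℝ) ≤ a := by exact_mod_cast hdj
  -- exp conversions
  have hexpa : ∀ k : ℕ, ((a:ℝ))^k = Real.exp (k * la) := by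
    intro k
    rw [hladef, ← Real.log_pow, Real.exp_log (by positivity)]
  have hexpt : ∀ k : ℕ, ((t:ℝ))^k = Real.exp (k * lt) := by
    intro k
    rw [hltdef, ← Real.log_pow, Real.exp_log (by positivity)]
  have hexpΔ : ((Δ:ℝ))^10 = Real.exp (10 * lΔ) := by
    have h1 : Real.log ((Δ:ℝ)^10) = 10 * lΔ := by
      rw [Real.log_pow, hlΔdef]; push_cast; ring
    rw [← h1, Real.exp_log (by positivity)]
  have hexpat : ((a:ℝ)/t)^(s*m) = Real.exp (((s:ℝ)*(m:ℝ)) * (la - lt)) := by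
    have h1 : Real.log (((a:ℝ)/t)^(s*m)) = ((s:ℝ)*(m:ℝ)) * (la - lt) := by
      rw [Real.log_pow, Real.log_div (by positivity) (by positivity), hladef, hltdef]
      push_cast; ring
    rw [← h1, Real.exp_log (by positivity)]
  have hexpla : (a:ℝ) ≤ Real.exp la := by rw [hladef, Real.exp_log ha0]
  -- ratio bound
  have hKray : ((t-s).choose (a-s) : ℝ) ≤ (t.choose a : ℝ) * ((a:ℝ)/t)^s := by
    have h2 : ((t-s).choose (a-s) : ℝ) * (t:ℝ)^s ≤ (t.choose a : ℝ) * (a:ℝ)^s := by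
      exact_mod_cast my_ratio t a hatN s hdj
    rw [div_pow, ← mul_div_assoc, le_div_iff₀ (by positivity)]
    linarith
  have hK3 : ((t-s).choose (a-s) : ℝ)^m ≤ (t.choose a : ℝ)^m * ((a:ℝ)/t)^(s*m) := by
    calc ((t-s).choose (a-s) : ℝ)^m ≤ ((t.choose a : ℝ) * ((a:ℝ)/t)^s)^m :=
          pow_le_pow_left₀ (by positivity) hKray m
      _ = (t.choose a : ℝ)^m * ((a:ℝ)/t)^(s*m) := by rw [mul_pow, ← pow_mul]
  -- the scalar bound  P ≤ 1
  have hP : (a.choose s : ℝ) * (t.choose m : ℝ) * ((a:ℝ)/t)^(s*m) * ((Δ:ℝ)^10 * a) ≤ 1 := by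
    by_cases hcase : 2*j ≤ a
    · -- Case I
      have hja2 : (j:ℝ) ≤ (a:ℝ)/2 := by
        have : ((2*j:ℕ) : ℝ) ≤ (a:ℝ) := by exact_mod_cast hcase
        push_cast at this; linarith
      have hm2 : (a:ℝ)/2 ≤ (m:ℝ) := by rw [hmcast]; linarith
      have hC1 : (a.choose s : ℝ) ≤ Real.exp ((s:ℝ) * la) := by
        rw [← hexpa]; exact_mod_cast my_choose_le_pow a s
      have hC2 : (t.choose m : ℝ) ≤ Real.exp ((j:ℝ) * lt) := by
        rw [← hexpt]
        have h1 : t.choose m = t.choose j := by rw [hm, Nat.choose_symm hjt]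
        rw [h1]; exact_mod_cast my_choose_le_pow t j
      calc (a.choose s : ℝ) * (t.choose m : ℝ) * ((a:ℝ)/t)^(s*m) * ((Δ:ℝ)^10 * a)
          ≤ Real.exp ((s:ℝ) * la) * Real.exp ((j:ℝ) * lt) *
            Real.exp (((s:ℝ)*(m:ℝ)) * (la - lt)) * (Real.exp (10*lΔ) * Real.exp la) := by
            rw [hexpat, hexpΔ]
            gcongr <;> positivity
        _ = Real.exp ((s:ℝ) * la + (j:ℝ) * lt + ((s:ℝ)*(m:ℝ)) * (la - lt) + (10*lΔ + la)) := by
            simp only [← Real.exp_add]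
        _ ≤ 1 := by
            rw [Real.exp_le_one_iff]
            have hP1 : (s:ℝ) * ((a:ℝ)/2) * (ε/2) ≤ (s:ℝ) * (m:ℝ) * (lt - la) := by
              have h1 : (a:ℝ)/2 * (ε/2) ≤ (m:ℝ) * (lt - la) :=
                mul_le_mul hm2 hεhalf (by positivity) hm0
              calc (s:ℝ) * ((a:ℝ)/2) * (ε/2) = (s:ℝ) * ((a:ℝ)/2 * (ε/2)) := by ring
                _ ≤ (s:ℝ) * ((m:ℝ) * (lt - la)) := mul_le_mul_of_nonneg_left h1 hs0
                _ = (s:ℝ) * (m:ℝ) * (lt - la) := by ring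
            have h_a1 : (s:ℝ)*la ≤ (s:ℝ)*(b/100) := mul_le_mul_of_nonneg_left hla100 hs0
            have h_a2 : (j:ℝ)*lt ≤ (s:ℝ)*(b/50) := by
              calc (j:ℝ)*lt ≤ (s:ℝ)*lt := mul_le_mul_of_nonneg_right hjs hlt0
                _ ≤ (s:ℝ)*(b/50) := mul_le_mul_of_nonneg_left hlt50 hs0
            have h_a3 : 10*lΔ ≤ (s:ℝ)*(b/1000) := by
              have h2 : (10:ℝ)*((b:ℝ)/100)^2 = b*(b/1000) := by ring
              have h3 : b*(b/1000) ≤ (s:ℝ)*(b/1000) :=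
                mul_le_mul_of_nonneg_right hsb (by positivity)
              linarith
            have h_a4 : la ≤ (s:ℝ)*(b/100) := by
              have := mul_le_mul_of_nonneg_right hs1 (show (0:ℝ) ≤ b/100 by positivity)
              rw [one_mul] at this
              linarith
            have hfin : (s:ℝ)*(b/100) + (s:ℝ)*(b/50) + (s:ℝ)*(b/1000) + (s:ℝ)*(b/100)
                ≤ (s:ℝ) * ((a:ℝ)/2) * (ε/2) := by
              have he : (s:ℝ) * ((a:ℝ)/2) * (ε/2) = (s:ℝ)*(b/4) := by rw [hbdef]; ring
              rw [he]
              have h5 : b/100 + b/50 + b/1000 + b/100 ≤ b/4 := by linarith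
              calc (s:ℝ)*(b/100) + (s:ℝ)*(b/50) + (s:ℝ)*(b/1000) + (s:ℝ)*(b/100)
                  = (s:ℝ)*(b/100 + b/50 + b/1000 + b/100) := by ring
                _ ≤ (s:ℝ)*(b/4) := mul_le_mul_of_nonneg_left h5 hs0
            linarith
    · -- Case II
      push_neg at hcase
      have hs2 : (a:ℝ)/2 ≤ (s:ℝ) := by
        have : (a:ℝ) < ((2*j:ℕ):ℝ) := by exact_mod_cast hcase
        push_cast at this
        rw [hscast]; linarith
      have hm2b : 2*b + (R:ℝ) ≤ (m:ℝ) := by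
        rw [hmcast, hRcast, hscast]
        linarith
      have hC1 : (a.choose s : ℝ) ≤ Real.exp ((R:ℝ) * la) := by
        have hchsymm : a.choose s = a.choose R := by
          have h1 : a - R = s := by omega
          rw [← h1, Nat.choose_symm (by omega : R ≤ a)]
        rw [hchsymm, ← hexpa]; exact_mod_cast my_choose_le_pow a R
      have hC2 : (t.choose m : ℝ) ≤ Real.exp ((m:ℝ) * lt) := by
        rw [← hexpt]; exact_mod_cast my_choose_le_pow t m
      calc (a.choose s : ℝ) * (t.choose m : ℝ) * ((a:ℝ)/t)^(s*m) * ((Δ:ℝ)^10 * a)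
          ≤ Real.exp ((R:ℝ) * la) * Real.exp ((m:ℝ) * lt) *
            Real.exp (((s:ℝ)*(m:ℝ)) * (la - lt)) * (Real.exp (10*lΔ) * Real.exp la) := by
            rw [hexpat, hexpΔ]
            gcongr <;> positivity
        _ = Real.exp ((R:ℝ) * la + (m:ℝ) * lt + ((s:ℝ)*(m:ℝ)) * (la - lt) + (10*lΔ + la)) := by
            simp only [← Real.exp_add]
        _ ≤ 1 := by
            rw [Real.exp_le_one_iff]
            have hP1 : (m:ℝ) * (b/4) ≤ (s:ℝ) * (m:ℝ) * (lt - la) := by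
              have h1 : (a:ℝ)/2 * (ε/2) ≤ (s:ℝ) * (lt - la) :=
                mul_le_mul hs2 hεhalf (by positivity) hs0
              have h2 : ((a:ℝ)/2) * (ε/2) = b/4 := by rw [hbdef]; ring
              calc (m:ℝ) * (b/4) = (m:ℝ) * (((a:ℝ)/2) * (ε/2)) := by rw [h2]
                _ ≤ (m:ℝ) * ((s:ℝ) * (lt - la)) := mul_le_mul_of_nonneg_left h1 hm0
                _ = (s:ℝ) * (m:ℝ) * (lt - la) := by ring
            have h_b1 : (R:ℝ)*la ≤ (R:ℝ)*(b/100) := mul_le_mul_of_nonneg_left hla100 hR0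
            have h_b2 : (m:ℝ)*lt ≤ (m:ℝ)*(b/50) := mul_le_mul_of_nonneg_left hlt50 hm0
            have h_b3 : 10*lΔ ≤ b*(b/1000) := by
              have he : (10:ℝ)*((b/100)^2) = b*(b/1000) := by ring
              linarith
            have hKK : (2*b + (R:ℝ))*(b*(23/100)) ≤ (m:ℝ)*(b*(23/100)) :=
              mul_le_mul_of_nonneg_right hm2b (by positivity)
            have hbsq : 152*b ≤ b*b := by
              have := mul_le_mul_of_nonneg_right hb hb0
              linarith
            have hRb : 0 ≤ (R:ℝ)*b := mul_nonneg hR0 hb0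
            linarith
  -- assemble
  have hNt : (t.choose a:ℝ)^m * (t.choose a:ℝ)^j = (t.choose a:ℝ)^t := by
    rw [← pow_add]; congr 1; omega
  calc (a.choose s : ℝ) * (t.choose m : ℝ) *
      (((t-s).choose (a-s) : ℝ)^m * (t.choose a : ℝ)^j) * ((Δ:ℝ)^10 * a)
      = ((a.choose s : ℝ) * (t.choose m : ℝ) * ((Δ:ℝ)^10 * a)) *
        ((t-s).choose (a-s) : ℝ)^m * (t.choose a:ℝ)^j := by ring
    _ ≤ ((a.choose s : ℝ) * (t.choose m : ℝ) * ((Δ:ℝ)^10 * a)) *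
        ((t.choose a:ℝ)^m * ((a:ℝ)/t)^(s*m)) * (t.choose a:ℝ)^j :=
        mul_le_mul_of_nonneg_right
          (mul_le_mul_of_nonneg_left hK3 (by positivity)) (by positivity)
    _ = ((a.choose s : ℝ) * (t.choose m : ℝ) * ((a:ℝ)/t)^(s*m) * ((Δ:ℝ)^10 * a)) *
        ((t.choose a:ℝ)^m * (t.choose a:ℝ)^j) := by ring
    _ ≤ 1 * ((t.choose a:ℝ)^m * (t.choose a:ℝ)^j) :=
        mul_le_mul_of_nonneg_right hP (by positivity)
    _ = (t.choose a:ℝ)^t := by rw [one_mul, hNt]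

set_option maxHeartbeats 1000000 in
/-- Let `a ≥ 2`, `Δ ≥ 2`, `ε ∈ (0,1)` with `a·ε ≥ 100(√(log Δ) + log a)`, let
`t = ⌈(1+ε)a⌉ ≤ Δ`, let `A` be a set of size `t` and `C_v` a fixed `a`-element subset of
`{1,…,t}`. If each `C_u` (`u ∈ A`) is chosen independently and uniformly at random among the
`a`-element subsets of `{1,…,t}`, then with probability at least `1 − Δ^{−10}` the bipartite
graph `H` (edge between `i` and `u` iff `i ∈ C_v` and `i ∉ C_u`) contains a matching of size at
least `a·(1−ε)`.  The probability is expressed by counting: the number of outcomes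
`ω : A → {a-subsets of Fin t}` admitting such a matching is at least `(1 − Δ^{−10})` times the
total number of outcomes. -/
theorem random_subsets_give_large_matching
    (a Δ : ℕ) (ha : 2 ≤ a) (hΔ : 2 ≤ Δ)
    (ε : ℝ) (hε0 : 0 < ε) (hε1 : ε < 1)
    (hεa : 100 * (Real.sqrt (Real.log Δ) + Real.log a) ≤ (a : ℝ) * ε)
    (t : ℕ) (ht : t = ⌈(1 + ε) * (a : ℝ)⌉₊) (htΔ : t ≤ Δ)
    (A : Type*) [Fintype A] [DecidableEq A] (hA : Fintype.card A = t)
    (Cv : Finset (Fin t)) (hCv : Cv.card = a) :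
    (1 - ((Δ : ℝ) ^ 10)⁻¹) *
        (Fintype.card (A → {S : Finset (Fin t) // S.card = a}) : ℝ) ≤
      (({ω : A → {S : Finset (Fin t) // S.card = a} |
        ∃ (s : Finset A) (m : A → Fin t),
          (a : ℝ) * (1 - ε) ≤ (s.card : ℝ) ∧
          Set.InjOn m ↑s ∧
          ∀ u ∈ s, m u ∈ Cv ∧ m u ∉ (ω u).1}).ncard : ℝ) := by
  classical
  have ha0 : (0:ℝ) < a := by exact_mod_cast (by omega : 0 < a)
  have ha2' : (2:ℝ) ≤ a := by exact_mod_cast ha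
  have haε : (a:ℝ) * ε = ε * a := by ring
  rw [haε] at hεa
  -- basic log facts
  have hl2 : (0.6931:ℝ) ≤ Real.log 2 := by linarith [Real.log_two_gt_d9]
  have hlogΔ2 : Real.log 2 ≤ Real.log Δ :=
    Real.log_le_log (by norm_num) (by exact_mod_cast hΔ)
  have hloga2 : Real.log 2 ≤ Real.log a :=
    Real.log_le_log (by norm_num) (by exact_mod_cast ha)
  have hla0 : 0 ≤ Real.log a := by linarith
  have hlΔ0 : 0 ≤ Real.log Δ := by linarith
  have hsq2 : (0.83:ℝ) ≤ Real.sqrt (Real.log 2) := by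
    rw [show (0.83:ℝ) = Real.sqrt (0.83^2) by rw [Real.sqrt_sq (by norm_num)]]
    apply Real.sqrt_le_sqrt
    nlinarith [Real.log_two_gt_d9]
  have hsq : (0.83:ℝ) ≤ Real.sqrt (Real.log Δ) :=
    le_trans hsq2 (Real.sqrt_le_sqrt hlogΔ2)
  have hb152 : 152 ≤ ε * a := by linarith
  have hla : Real.log a ≤ ε * a / 100 := by
    have := Real.sqrt_nonneg (Real.log Δ)
    linarith
  have hsqle : Real.sqrt (Real.log Δ) ≤ ε * a / 100 := by linarith
  have hlΔ : Real.log Δ ≤ (ε * a / 100)^2 := by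
    have h1 : Real.log Δ = (Real.sqrt (Real.log Δ))^2 := (Real.sq_sqrt hlΔ0).symm
    rw [h1]
    exact pow_le_pow_left₀ (Real.sqrt_nonneg _) hsqle 2
  -- facts about t
  have htreal : (1+ε) * (a:ℝ) ≤ (t:ℝ) := by rw [ht]; exact Nat.le_ceil _
  have hid : (1+ε) * (a:ℝ) = a + ε * a := by ring
  have hta : (a:ℝ) + ε * a ≤ (t:ℝ) := by linarith
  have hεa0 : (0:ℝ) < ε * a := by positivity
  have ht0 : 0 < t := by
    have : (0:ℝ) < t := by linarith
    exact_mod_cast this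
  have hatN : a ≤ t := by
    have : (a:ℝ) ≤ t := by linarith
    exact_mod_cast this
  have htup : (t:ℝ) < (1+ε) * a + 1 := by
    rw [ht]; exact Nat.ceil_lt_add_one (by positivity)
  have hlt : Real.log t ≤ 1 + Real.log a := by
    have he : (2.7182818283:ℝ) ≤ Real.exp 1 := Real.exp_one_gt_d9.le
    have hεa1 : ε * a ≤ a := by nlinarith
    have h2a : (t:ℝ) ≤ Real.exp 1 * a := by nlinarith
    have h3 := Real.log_le_log (by exact_mod_cast ht0) h2a
    rwa [Real.log_mul (by positivity) (by positivity), Real.log_exp] at h3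
  -- n0 and d
  obtain ⟨n0, hn0⟩ : ∃ n, n = ⌈(a:ℝ) * (1-ε)⌉₊ := ⟨_, rfl⟩
  have hn0a : n0 ≤ a := by
    rw [hn0]
    apply Nat.ceil_le.mpr
    nlinarith
  have hn0pos : 0 < n0 := by
    rw [hn0]
    apply Nat.ceil_pos.mpr
    nlinarith
  obtain ⟨d, hd⟩ : ∃ d, d = a - n0 := ⟨_, rfl⟩
  have hd1 : ε * a ≤ (d:ℝ) + 1 := by
    have h1 : (n0:ℝ) < (a:ℝ)*(1-ε) + 1 := by
      rw [hn0]; exact Nat.ceil_lt_add_one (by nlinarith)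
    have h2 : (d:ℝ) = (a:ℝ) - n0 := by rw [hd, Nat.cast_sub hn0a]
    nlinarith
  -- the predicate
  set Pred : (A → {S : Finset (Fin t) // S.card = a}) → Prop := fun ω =>
    ∃ (s : Finset A) (m : A → Fin t),
      (a : ℝ) * (1 - ε) ≤ (s.card : ℝ) ∧
      Set.InjOn m ↑s ∧
      ∀ u ∈ s, m u ∈ Cv ∧ m u ∉ (ω u).1 with hPred
  have hcardΩ : Fintype.card (A → {S : Finset (Fin t) // S.card = a}) = (t.choose a) ^ t := by
    rw [Fintype.card_fun, my_card_sub, hA]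
  -- union bound structure
  have hsubset : (univ.filter fun ω => ¬ Pred ω) ⊆
      (Finset.range (a - d)).biUnion (fun j =>
        ((Cv.powersetCard (d+1+j)) ×ˢ ((univ : Finset A).powersetCard (t - j))).biUnion
          (fun WU => univ.filter
            (fun ω : A → {S : Finset (Fin t) // S.card = a} => ∀ u ∈ WU.2, WU.1 ⊆ (ω u).1))) := by
    intro ω hω
    have hNP : ¬ Pred ω := (Finset.mem_filter.mp hω).2
    have hnh : ¬ (∀ W : Finset (Fin t), W ⊆ Cv → d + 1 ≤ W.card →
        W.card ≤ (univ.filter (fun u : A => ¬ W ⊆ (ω u).1)).card + d) := by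
      intro hH
      obtain ⟨s, mm, hcard, hinj, hmem⟩ :=
        my_exists_matching hA ht0 Cv hCv (fun u => (ω u).1) hH
      apply hNP
      refine ⟨s, mm, ?_, hinj, hmem⟩
      have h1 : (a:ℝ)*(1-ε) ≤ n0 := by rw [hn0]; exact Nat.le_ceil _
      have h2 : n0 ≤ s.card := by omega
      have h3 : (n0:ℝ) ≤ s.card := by exact_mod_cast h2
      linarith
    push_neg at hnh
    obtain ⟨W, hWCv, hWd, hWbig⟩ := hnh
    have hWa : W.card ≤ a := by rw [← hCv]; exact Finset.card_le_card hWCv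
    have hcardsplit : (univ.filter (fun u : A => W ⊆ (ω u).1)).card +
        (univ.filter (fun u : A => ¬ W ⊆ (ω u).1)).card = t := by
      rw [Finset.card_filter_add_card_filter_not, Finset.card_univ, hA]
    have hjr : W.card - (d+1) < a - d := by omega
    have hUcard : t - (W.card - (d+1)) ≤ (univ.filter (fun u : A => W ⊆ (ω u).1)).card := by
      omega
    obtain ⟨U, hUsub, hUc⟩ := Finset.exists_subset_card_eq hUcard
    have hWeq : W.card = d + 1 + (W.card - (d+1)) := by omega
    refine Finset.mem_biUnion.mpr ⟨W.card - (d+1), Finset.mem_range.mpr hjr,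
      Finset.mem_biUnion.mpr ⟨(W, U), ?_, ?_⟩⟩
    · rw [Finset.mem_product]
      exact ⟨Finset.mem_powersetCard.mpr ⟨hWCv, hWeq⟩,
        Finset.mem_powersetCard.mpr ⟨Finset.subset_univ _, hUc⟩⟩
    · exact Finset.mem_filter.mpr ⟨Finset.mem_univ _,
        fun u hu => (Finset.mem_filter.mp (hUsub hu)).2⟩
  -- counting
  have hcount : (univ.filter fun ω => ¬ Pred ω).card ≤
      ∑ j ∈ Finset.range (a - d),
        (a.choose (d+1+j) * t.choose (t-j)) *
          ((t-(d+1+j)).choose (a-(d+1+j)) ^ (t-j) * (t.choose a) ^ j) := by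
    calc (univ.filter fun ω => ¬ Pred ω).card
        ≤ ((Finset.range (a - d)).biUnion (fun j =>
            ((Cv.powersetCard (d+1+j)) ×ˢ ((univ : Finset A).powersetCard (t - j))).biUnion
              (fun WU => univ.filter
                (fun ω : A → {S : Finset (Fin t) // S.card = a} =>
                  ∀ u ∈ WU.2, WU.1 ⊆ (ω u).1)))).card := Finset.card_le_card hsubset
      _ ≤ ∑ j ∈ Finset.range (a - d),
            (((Cv.powersetCard (d+1+j)) ×ˢ ((univ : Finset A).powersetCard (t - j))).biUnion
              (fun WU => univ.filter
                (fun ω : A → {S : Finset (Fin t) // S.card = a} =>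
                  ∀ u ∈ WU.2, WU.1 ⊆ (ω u).1))).card := Finset.card_biUnion_le
      _ ≤ ∑ j ∈ Finset.range (a - d),
            ∑ WU ∈ (Cv.powersetCard (d+1+j)) ×ˢ ((univ : Finset A).powersetCard (t - j)),
              (univ.filter
                (fun ω : A → {S : Finset (Fin t) // S.card = a} =>
                  ∀ u ∈ WU.2, WU.1 ⊆ (ω u).1)).card :=
            Finset.sum_le_sum (fun j _ => Finset.card_biUnion_le)
      _ ≤ ∑ j ∈ Finset.range (a - d),
            (a.choose (d+1+j) * t.choose (t-j)) *
              ((t-(d+1+j)).choose (a-(d+1+j)) ^ (t-j) * (t.choose a) ^ j) := by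
            apply Finset.sum_le_sum
            intro j hj
            have hjad : j < a - d := Finset.mem_range.mp hj
            have hcardIDX : ((Cv.powersetCard (d+1+j)) ×ˢ
                ((univ : Finset A).powersetCard (t - j))).card
                = a.choose (d+1+j) * t.choose (t-j) := by
              rw [Finset.card_product, Finset.card_powersetCard, Finset.card_powersetCard,
                hCv, Finset.card_univ, hA]
            have hdja : d + 1 + j ≤ a := by omega
            have htjj : t - (t - j) = j := by omega
            have hbound : ∀ WU ∈ (Cv.powersetCard (d+1+j)) ×ˢ
                ((univ : Finset A).powersetCard (t - j)),
                (univ.filter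
                  (fun ω : A → {S : Finset (Fin t) // S.card = a} =>
                    ∀ u ∈ WU.2, WU.1 ⊆ (ω u).1)).card ≤
                ((t-(d+1+j)).choose (a-(d+1+j)) ^ (t-j) * (t.choose a) ^ j) := by
              intro WU hWU
              rw [Finset.mem_product] at hWU
              obtain ⟨hW, hU⟩ := hWU
              obtain ⟨hWsub, hWc⟩ := Finset.mem_powersetCard.mp hW
              obtain ⟨-, hUc⟩ := Finset.mem_powersetCard.mp hU
              have h1 := my_card_E hA WU.1 (hWc ▸ hdja) WU.2
              rw [hUc, hWc] at h1
              rw [h1, htjj]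
            calc ∑ WU ∈ (Cv.powersetCard (d+1+j)) ×ˢ ((univ : Finset A).powersetCard (t - j)),
                  (univ.filter
                    (fun ω : A → {S : Finset (Fin t) // S.card = a} =>
                      ∀ u ∈ WU.2, WU.1 ⊆ (ω u).1)).card
                ≤ ((Cv.powersetCard (d+1+j)) ×ˢ ((univ : Finset A).powersetCard (t - j))).card •
                  ((t-(d+1+j)).choose (a-(d+1+j)) ^ (t-j) * (t.choose a) ^ j) :=
                  Finset.sum_le_card_nsmul _ _ _ hbound
              _ = (a.choose (d+1+j) * t.choose (t-j)) *
                  ((t-(d+1+j)).choose (a-(d+1+j)) ^ (t-j) * (t.choose a) ^ j) := by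
                  rw [hcardIDX, smul_eq_mul]
  -- real bound per term
  have hterm : ∀ j ∈ Finset.range (a - d),
      (((a.choose (d+1+j) * t.choose (t-j)) *
        ((t-(d+1+j)).choose (a-(d+1+j)) ^ (t-j) * (t.choose a) ^ j) : ℕ) : ℝ) *
        ((Δ:ℝ)^10 * a) ≤ ((t.choose a : ℕ):ℝ)^t := by
    intro j hj
    have hjad : j < a - d := Finset.mem_range.mp hj
    have hmain := my_term_bound a t d j (d+1+j) (t-j) Δ ε hε0 hε1.le ha hΔ hb152 hla hlΔ
      hlt hta hatN hd1 rfl rfl (by omega)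
    push_cast
    push_cast at hmain
    nlinarith [hmain]
  -- sum the real bounds
  have hΔ0 : (0:ℝ) < Δ := by exact_mod_cast (by omega : 0 < Δ)
  have hΔp : (0:ℝ) < (Δ:ℝ)^10 := by positivity
  have hNt0 : (0:ℝ) ≤ ((t.choose a : ℕ):ℝ)^t := by positivity
  have hsumR : ((univ.filter fun ω => ¬ Pred ω).card : ℝ) * ((Δ:ℝ)^10 * a) ≤
      (a:ℝ) * ((t.choose a : ℕ):ℝ)^t := by
    have hc1 : ((univ.filter fun ω => ¬ Pred ω).card : ℝ) ≤
        ((∑ j ∈ Finset.range (a - d),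
          (a.choose (d+1+j) * t.choose (t-j)) *
            ((t-(d+1+j)).choose (a-(d+1+j)) ^ (t-j) * (t.choose a) ^ j) : ℕ) : ℝ) := by
      exact_mod_cast hcount
    calc ((univ.filter fun ω => ¬ Pred ω).card : ℝ) * ((Δ:ℝ)^10 * a)
        ≤ ((∑ j ∈ Finset.range (a - d),
            (a.choose (d+1+j) * t.choose (t-j)) *
              ((t-(d+1+j)).choose (a-(d+1+j)) ^ (t-j) * (t.choose a) ^ j) : ℕ) : ℝ) *
            ((Δ:ℝ)^10 * a) := by
          apply mul_le_mul_of_nonneg_right hc1 (by positivity)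
      _ = ∑ j ∈ Finset.range (a - d),
            (((a.choose (d+1+j) * t.choose (t-j)) *
              ((t-(d+1+j)).choose (a-(d+1+j)) ^ (t-j) * (t.choose a) ^ j) : ℕ) : ℝ) *
              ((Δ:ℝ)^10 * a) := by
          rw [Nat.cast_sum, Finset.sum_mul]
      _ ≤ ∑ _j ∈ Finset.range (a - d), ((t.choose a : ℕ):ℝ)^t :=
          Finset.sum_le_sum hterm
      _ = ((a - d : ℕ):ℝ) * ((t.choose a : ℕ):ℝ)^t := by
          rw [Finset.sum_const, Finset.card_range, nsmul_eq_mul]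
      _ ≤ (a:ℝ) * ((t.choose a : ℕ):ℝ)^t := by
          apply mul_le_mul_of_nonneg_right _ hNt0
          exact_mod_cast Nat.sub_le a d
  have hbadR : ((univ.filter fun ω => ¬ Pred ω).card : ℝ) ≤
      ((Δ:ℝ)^10)⁻¹ * ((t.choose a : ℕ):ℝ)^t := by
    rw [show ((Δ:ℝ)^10)⁻¹ * ((t.choose a : ℕ):ℝ)^t
      = ((t.choose a : ℕ):ℝ)^t / (Δ:ℝ)^10 by ring, le_div_iff₀ hΔp]
    apply le_of_mul_le_mul_right _ ha0
    nlinarith [hsumR]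
  -- final assembly
  have hgoodset : {ω : A → {S : Finset (Fin t) // S.card = a} |
      ∃ (s : Finset A) (m : A → Fin t),
        (a : ℝ) * (1 - ε) ≤ (s.card : ℝ) ∧
        Set.InjOn m ↑s ∧
        ∀ u ∈ s, m u ∈ Cv ∧ m u ∉ (ω u).1} = ↑(univ.filter Pred) := by
    ext ω
    simp only [Set.mem_setOf_eq, Finset.coe_filter, Finset.mem_univ, true_and, hPred]
  rw [hgoodset, Set.ncard_coe_finset, hcardΩ]
  have hsplit : (univ.filter Pred).card + (univ.filter fun ω => ¬ Pred ω).card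
      = (t.choose a) ^ t := by
    rw [Finset.card_filter_add_card_filter_not, Finset.card_univ, hcardΩ]
  have hsplitR : ((univ.filter Pred).card : ℝ) + ((univ.filter fun ω => ¬ Pred ω).card : ℝ)
      = ((t.choose a : ℕ):ℝ)^t := by exact_mod_cast hsplit
  push_cast
  linarith
end

section
/- Let G = (V,E) be a finite simple graph with an orientation of its edges, and for each vertex v let A(v) denote the set of out-neighbors of v. Let 𝒞 be a finite color set, let C_v ⊆ 𝒞 for each vertex v, let each edge e have a palette Q(e) ⊆ 𝒞, and let δ ≥ 0 be an integer. For each vertex v, let H_v be the bipartite graph with parts 𝒞 and A(v), having an edge between c ∈ 𝒞 and u ∈ A(v) if and only if c ∈ C_v, c ∉ C_u, and c ∈ Q(vu). Suppose that for every vertex v, H_v has a matching of size at least |A(v)| − δ. Then there exist a partition E = E_0 ⊔ E_1, a coloring φ_0 : E_0 → 𝒞 with φ_0(e) ∈ Q(e) for every e ∈ E_0 such that for each color c the set of edges of E_0 colored c is a star forest, and an orientation of the edges of E_1 in which every vertex has outdegree at most δ. -/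
/-- Let `G` be a finite simple graph with an orientation `σ` (assigning to each
edge its source), `C_v ⊆ 𝒞` sets of colors, `Q(e) ⊆ 𝒞` palettes and `δ ≥ 0`. If for every
vertex `v` the bipartite graph `H_v` (edge between `c` and an out-neighbor `u` of `v` iff
`c ∈ C_v`, `c ∉ C_u`, `c ∈ Q(vu)`) has a matching of size at least `|A(v)| − δ`, then the edges
of `G` split as `E = E₀ ⊔ E₁` where `E₀` has a coloring from the palettes whose color classes
are star forests, and `E₁` has an orientation with all outdegrees at most `δ`. -/
theorem star_forest_from_matchings {V 𝒞 : Type*} [Fintype V] [Fintype 𝒞]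
    (G : SimpleGraph V)
    (σ : Sym2 V → V) (hσ : ∀ e ∈ G.edgeSet, σ e ∈ e)
    (C : V → Set 𝒞) (Q : Sym2 V → Set 𝒞) (δ : ℕ)
    (hmatch : ∀ v : V, ∃ (s : Finset V) (m : V → 𝒞),
      (∀ u ∈ s, G.Adj v u ∧ σ s(v, u) = v) ∧
      ({u : V | G.Adj v u ∧ σ s(v, u) = v}).ncard - δ ≤ s.card ∧
      Set.InjOn m ↑s ∧
      ∀ u ∈ s, m u ∈ C v ∧ m u ∉ C u ∧ m u ∈ Q s(v, u)) :
    ∃ (E0 E1 : Set (Sym2 V)) (φ : Sym2 V → Option 𝒞) (τ : Sym2 V → V),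
      E0 ∪ E1 = G.edgeSet ∧
      Disjoint E0 E1 ∧
      (∀ e ∈ E0, ∃ c ∈ Q e, φ e = some c) ∧
      (∀ c : 𝒞, IsStarForest (SimpleGraph.fromEdgeSet {e | e ∈ E0 ∧ φ e = some c})) ∧
      (∀ e ∈ E1, τ e ∈ e) ∧
      (∀ v : V, ({e | e ∈ E1 ∧ τ e = v} : Set (Sym2 V)).ncard ≤ δ) := by
  classical
  choose s m h1 h2 h3 h4 using hmatch
  set E0 : Set (Sym2 V) :=
    {e | ∃ h : e ∈ G.edgeSet, Sym2.Mem.other (hσ e h) ∈ s (σ e)} with hE0def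
  have hE0sub : E0 ⊆ G.edgeSet := fun e he => he.1
  set φ : Sym2 V → Option 𝒞 := fun e =>
    if h : e ∈ G.edgeSet then some (m (σ e) (Sym2.Mem.other (hσ e h))) else none with hφdef
  -- canonical decomposition of an edge in E0
  have hdecomp : ∀ e ∈ E0, ∃ u : V, u ∈ s (σ e) ∧ e = s(σ e, u) ∧
      φ e = some (m (σ e) u) := by
    intro e he
    obtain ⟨h, hu⟩ := he
    refine ⟨Sym2.Mem.other (hσ e h), hu, (Sym2.other_spec (hσ e h)).symm, ?_⟩
    simp only [hφdef, dif_pos h]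
  refine ⟨E0, G.edgeSet \ E0, φ, σ, Set.union_diff_cancel hE0sub,
    Set.disjoint_sdiff_right, ?_, ?_, ?_, ?_⟩
  · -- palettes
    intro e he
    obtain ⟨u, hu, hesu, hφe⟩ := hdecomp e he
    have hQ := (h4 (σ e) u hu).2.2
    rw [← hesu] at hQ
    exact ⟨m (σ e) u, hQ, hφe⟩
  · -- star forests
    intro c
    set S : Set (Sym2 V) := {e | e ∈ E0 ∧ φ e = some c} with hSdef
    set H := SimpleGraph.fromEdgeSet S with hHdef
    set Src : V → Prop := fun x => ∃ u, u ∈ s x ∧ m x u = c with hSrcdef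
    set sink : V → V := fun x => if h : Src x then h.choose else x with hsinkdef
    have key : ∀ a b : V, s(a, b) ∈ S → σ s(a, b) = a → a ≠ b →
        sink a = b ∧ sink b = b := by
      intro a b hS hsab hab
      obtain ⟨u, hu, hesu, hφe⟩ := hdecomp _ hS.1
      rw [hsab] at hesu hu hφe
      have hub : u = b := Sym2.congr_right.mp hesu.symm
      subst hub
      have hmab : m a u = c := by
        rw [hS.2] at hφe; exact (Option.some_injective _ hφe.symm)
      have hSrca : Src a := ⟨u, hu, hmab⟩
      have hsinka : sink a = u := by
        rw [hsinkdef]; simp only [dif_pos hSrca]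
        obtain ⟨hw, hmw⟩ := hSrca.choose_spec
        exact h3 a (by simpa using hw) (by simpa using hu) (hmw.trans hmab.symm)
      have hnSrcb : ¬ Src u := by
        rintro ⟨w, hw, hmw⟩
        have hc : c ∈ C u := hmw ▸ (h4 u w hw).1
        exact ((h4 a u hu).2.1 (hmab ▸ hc))
      refine ⟨hsinka, ?_⟩
      rw [hsinkdef]; simp only [dif_neg hnSrcb]
    have adjkey : ∀ a b : V, H.Adj a b → sink a = sink b ∧ (a = sink a ∨ b = sink a) := by
      intro a b hadj
      rw [hHdef, SimpleGraph.fromEdgeSet_adj] at hadj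
      obtain ⟨hS, hab⟩ := hadj
      have hmem : s(a, b) ∈ G.edgeSet := hS.1.1
      have hv := hσ _ hmem
      rw [Sym2.mem_iff] at hv
      rcases hv with hv | hv
      · obtain ⟨ha, hb⟩ := key a b hS hv hab
        exact ⟨ha.trans hb.symm, Or.inr (ha.symm ▸ rfl)⟩
      · have hS' : s(b, a) ∈ S := by rwa [Sym2.eq_swap]
        have hv' : σ s(b, a) = b := by rwa [Sym2.eq_swap]
        obtain ⟨hb, ha⟩ := key b a hS' hv' (Ne.symm hab)
        exact ⟨ha.trans hb.symm, Or.inl ha.symm⟩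
    have reach : ∀ a b : V, H.Reachable a b → sink a = sink b := by
      intro a b h
      obtain ⟨w⟩ := h
      induction w with
      | nil => rfl
      | cons hadj _ ih => exact (adjkey _ _ hadj).1.trans ih
    intro v
    refine ⟨sink v, fun a b hadj hr => ?_⟩
    have ha' := adjkey a b hadj
    have hr' := reach v a hr
    rcases ha'.2 with h | h
    · exact Or.inl (h.trans hr'.symm)
    · exact Or.inr (h.trans hr'.symm)
  · intro e he; exact hσ e he.1
  · -- outdegrees
    intro v
    set A : Set V := {u : V | G.Adj v u ∧ σ s(v, u) = v} with hAdef
    have hsubA : ↑(s v) ⊆ A := fun u hu => h1 v u hu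
    have hsub : {e : Sym2 V | e ∈ G.edgeSet \ E0 ∧ σ e = v} ⊆
        (fun u => s(v, u)) '' (A \ ↑(s v)) := by
      rintro e ⟨⟨he, hne0⟩, hev⟩
      have ho := hσ e he
      have hesu : s(σ e, Sym2.Mem.other ho) = e := Sym2.other_spec ho
      set u := Sym2.Mem.other ho with hudef
      rw [hev] at hesu
      have hadj : G.Adj v u := by
        rw [← SimpleGraph.mem_edgeSet, hesu]; exact he
      have huA : u ∈ A := ⟨hadj, by rw [hesu]; exact hev⟩
      have huns : u ∉ s v := by
        intro hus
        have hus' : u ∈ s (σ e) := by rw [hev]; exact hus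
        exact hne0 ⟨he, hus'⟩
      exact ⟨u, ⟨huA, huns⟩, hesu⟩
    have hle := h2 v
    rw [← hAdef] at hle
    calc ({e : Sym2 V | e ∈ G.edgeSet \ E0 ∧ σ e = v}).ncard
        ≤ ((fun u => s(v, u)) '' (A \ ↑(s v))).ncard :=
          Set.ncard_le_ncard hsub (Set.toFinite _)
      _ ≤ (A \ ↑(s v)).ncard := Set.ncard_image_le (Set.toFinite _)
      _ = A.ncard - (s v).card := by
          rw [Set.ncard_diff hsubA (Set.toFinite _), Set.ncard_coe_finset]
      _ ≤ δ := by omega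
end

section
/- Let G = (V,E) be a finite simple graph, 𝒞 a finite color set, and for each vertex v a partition 𝒞 = C_{v,0} ⊔ C_{v,1}. Let Q(e) ⊆ 𝒞 be palettes, and define induced palettes Q_i(uv) = Q(uv) ∩ C_{u,i} ∩ C_{v,i} for i = 0,1. Suppose E = E_0 ⊔ E_1 and for i = 0,1 there is a coloring φ_i : E_i → 𝒞 with φ_i(e) ∈ Q_i(e) for every e ∈ E_i such that for each color c the set of edges of E_i colored c by φ_i contains no cycle. Then the combined coloring φ (defined by φ(e) = φ_i(e) for e ∈ E_i) satisfies φ(e) ∈ Q(e) for every edge e, for each color c the set of edges with φ(e) = c contains no cycle, and moreover every connected component of each color class of φ consists entirely of edges of E_0 or entirely of edges of E_1. -/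
/-- Given a vertex-color-splitting `𝒞 = C_{v,0} ⊔ C_{v,1}` (encoded as
`Cs : V → Bool → Set 𝒞` with `false` playing the role of `0` and `true` of `1`), an edge
partition `E = E₀ ⊔ E₁`, and for `i = 0,1` a coloring `φ_i` of `E_i` from the induced palettes
`Q_i(uv) = Q(uv) ∩ C_{u,i} ∩ C_{v,i}` whose color classes are acyclic, any combined coloring
`φ` (agreeing with `φ₀` on `E₀` and with `φ₁` on `E₁`) is a list forest decomposition of the
whole graph, and moreover every connected component of each of its color classes consists
entirely of edges of `E₀` or entirely of edges of `E₁`. -/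
theorem combined_splitting_coloring_is_LFD {V 𝒞 : Type*} [Fintype V] [Fintype 𝒞]
    (G : SimpleGraph V)
    (Cs : V → Bool → Set 𝒞)
    (hpart : ∀ v : V, Cs v false ∪ Cs v true = Set.univ ∧ Disjoint (Cs v false) (Cs v true))
    (Q : Sym2 V → Set 𝒞)
    (E0 E1 : Set (Sym2 V)) (hcover : E0 ∪ E1 = G.edgeSet) (hdisj : Disjoint E0 E1)
    (φ0 φ1 : Sym2 V → Option 𝒞)
    (hφ0 : ∀ e ∈ E0, ∃ c, φ0 e = some c ∧ c ∈ Q e ∧ ∀ x ∈ e, c ∈ Cs x false)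
    (hφ1 : ∀ e ∈ E1, ∃ c, φ1 e = some c ∧ c ∈ Q e ∧ ∀ x ∈ e, c ∈ Cs x true)
    (hacyc0 : ∀ c : 𝒞, (SimpleGraph.fromEdgeSet {e | e ∈ E0 ∧ φ0 e = some c}).IsAcyclic)
    (hacyc1 : ∀ c : 𝒞, (SimpleGraph.fromEdgeSet {e | e ∈ E1 ∧ φ1 e = some c}).IsAcyclic)
    (φ : Sym2 V → Option 𝒞)
    (hφa : ∀ e ∈ E0, φ e = φ0 e) (hφb : ∀ e ∈ E1, φ e = φ1 e) :
    (∀ e ∈ G.edgeSet, ∃ c, φ e = some c ∧ c ∈ Q e) ∧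
    (∀ c : 𝒞, (SimpleGraph.fromEdgeSet {e | e ∈ G.edgeSet ∧ φ e = some c}).IsAcyclic) ∧
    (∀ c : 𝒞, ∀ u v x y : V,
      (SimpleGraph.fromEdgeSet {e | e ∈ G.edgeSet ∧ φ e = some c}).Adj u v →
      (SimpleGraph.fromEdgeSet {e | e ∈ G.edgeSet ∧ φ e = some c}).Adj x y →
      (SimpleGraph.fromEdgeSet {e | e ∈ G.edgeSet ∧ φ e = some c}).Reachable u x →
      (s(u, v) ∈ E0 ↔ s(x, y) ∈ E0)) := by
  classical
  -- Characterize edges of each color class.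
  have hedge : ∀ (c : 𝒞) {u v : V},
      (SimpleGraph.fromEdgeSet {e | e ∈ G.edgeSet ∧ φ e = some c}).Adj u v →
      (s(u,v) ∈ E0 ∧ φ0 s(u,v) = some c ∧ c ∈ Cs u false ∧ c ∈ Cs v false) ∨
      (s(u,v) ∈ E1 ∧ φ1 s(u,v) = some c ∧ c ∈ Cs u true ∧ c ∈ Cs v true) := by
    intro c u v h
    rw [SimpleGraph.fromEdgeSet_adj] at h
    obtain ⟨⟨hE, hφc⟩, hne⟩ := h
    have hmem : s(u,v) ∈ E0 ∪ E1 := by rw [hcover]; exact hE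
    rcases hmem with h0 | h1
    · obtain ⟨c', hc', hQ, hCs⟩ := hφ0 _ h0
      have hcc : c = c' := by
        have : some c = some c' := by rw [← hφc, hφa _ h0, hc']
        exact Option.some_injective _ this
      subst hcc
      exact Or.inl ⟨h0, hc', hCs u (Sym2.mem_mk_left u v), hCs v (Sym2.mem_mk_right u v)⟩
    · obtain ⟨c', hc', hQ, hCs⟩ := hφ1 _ h1
      have hcc : c = c' := by
        have : some c = some c' := by rw [← hφc, hφb _ h1, hc']
        exact Option.some_injective _ this
      subst hcc
      exact Or.inr ⟨h1, hc', hCs u (Sym2.mem_mk_left u v), hCs v (Sym2.mem_mk_right u v)⟩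
  -- edge is in E0 iff the color is on the false side of an endpoint
  have hchar : ∀ (c : 𝒞) {u v : V},
      (SimpleGraph.fromEdgeSet {e | e ∈ G.edgeSet ∧ φ e = some c}).Adj u v →
      (s(u,v) ∈ E0 ↔ c ∈ Cs u false) := by
    intro c u v h
    rcases hedge c h with ⟨h0, _, hu, _⟩ | ⟨h1, _, hu, _⟩
    · exact ⟨fun _ => hu, fun _ => h0⟩
    · constructor
      · intro h0; exact absurd h1 (Set.disjoint_left.mp hdisj h0)
      · intro hf; exact absurd hf (Set.disjoint_right.mp (hpart u).2 hu)
  -- sides are constant along walks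
  have hside : ∀ (c : 𝒞) {u x : V},
      (p : (SimpleGraph.fromEdgeSet {e | e ∈ G.edgeSet ∧ φ e = some c}).Walk u x) →
      (c ∈ Cs u false ↔ c ∈ Cs x false) := by
    intro c u x p
    induction p with
    | nil => exact Iff.rfl
    | cons h q ih =>
      refine Iff.trans ?_ ih
      rcases hedge c h with ⟨_, _, hu, hv⟩ | ⟨_, _, hu, hv⟩
      · exact ⟨fun _ => hv, fun _ => hu⟩
      · constructor
        · intro hf; exact absurd hf (Set.disjoint_right.mp (hpart _).2 hu)
        · intro hf; exact absurd hf (Set.disjoint_right.mp (hpart _).2 hv)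
  refine ⟨?_, ?_, ?_⟩
  · intro e he
    have hmem : e ∈ E0 ∪ E1 := by rw [hcover]; exact he
    rcases hmem with h0 | h1
    · obtain ⟨c, hc, hQ, _⟩ := hφ0 _ h0
      exact ⟨c, by rw [hφa _ h0, hc], hQ⟩
    · obtain ⟨c, hc, hQ, _⟩ := hφ1 _ h1
      exact ⟨c, by rw [hφb _ h1, hc], hQ⟩
  · intro c v p hp
    cases p with
    | nil => exact hp.ne_nil rfl
    | cons h q =>
      rcases hedge c h with ⟨h0, _, hu, _⟩ | ⟨h1, _, hu, _⟩
      · -- all edges of the cycle lie in the E0 color class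
        have hall : ∀ e ∈ (SimpleGraph.Walk.cons h q).edges,
            e ∈ (SimpleGraph.fromEdgeSet {e | e ∈ E0 ∧ φ0 e = some c}).edgeSet := by
          intro e he
          have heG := (SimpleGraph.Walk.cons h q).edges_subset_edgeSet he
          rw [SimpleGraph.edgeSet_fromEdgeSet] at heG ⊢
          obtain ⟨⟨heE, heφ⟩, hd⟩ := heG
          -- show e ∈ E0 using sides
          induction e with
          | h a b =>
            have hadj : (SimpleGraph.fromEdgeSet
                {e | e ∈ G.edgeSet ∧ φ e = some c}).Adj a b := by
              rw [SimpleGraph.fromEdgeSet_adj]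
              exact ⟨⟨heE, heφ⟩, fun hab => hd (by simp [hab])⟩
            have ha : a ∈ (SimpleGraph.Walk.cons h q).support :=
              SimpleGraph.Walk.fst_mem_support_of_mem_edges _ he
            have hac : c ∈ Cs a false :=
              (hside c ((SimpleGraph.Walk.cons h q).takeUntil a ha)).mp hu
            have he0 : s(a,b) ∈ E0 := (hchar c hadj).mpr hac
            exact ⟨⟨he0, by rw [← hφa _ he0]; exact heφ⟩, hd⟩
        exact hacyc0 c _ (hp.transfer hall)
      · have hall : ∀ e ∈ (SimpleGraph.Walk.cons h q).edges,
            e ∈ (SimpleGraph.fromEdgeSet {e | e ∈ E1 ∧ φ1 e = some c}).edgeSet := by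
          intro e he
          have heG := (SimpleGraph.Walk.cons h q).edges_subset_edgeSet he
          rw [SimpleGraph.edgeSet_fromEdgeSet] at heG ⊢
          obtain ⟨⟨heE, heφ⟩, hd⟩ := heG
          induction e with
          | h a b =>
            have hadj : (SimpleGraph.fromEdgeSet
                {e | e ∈ G.edgeSet ∧ φ e = some c}).Adj a b := by
              rw [SimpleGraph.fromEdgeSet_adj]
              exact ⟨⟨heE, heφ⟩, fun hab => hd (by simp [hab])⟩
            have ha : a ∈ (SimpleGraph.Walk.cons h q).support :=
              SimpleGraph.Walk.fst_mem_support_of_mem_edges _ he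
            have hat : ¬ c ∈ Cs a false := by
              intro hf
              exact absurd
                ((hside c ((SimpleGraph.Walk.cons h q).takeUntil a ha)).mpr hf)
                (Set.disjoint_right.mp (hpart _).2 hu)
            have he1 : s(a,b) ∈ E1 := by
              rcases hedge c hadj with ⟨_, _, haf, _⟩ | ⟨h1', _, _, _⟩
              · exact absurd haf hat
              · exact h1'
            exact ⟨⟨he1, by rw [← hφb _ he1]; exact heφ⟩, hd⟩
        exact hacyc1 c _ (hp.transfer hall)
  · intro c u v x y huv hxy hr
    obtain ⟨p⟩ := hr
    rw [hchar c huv, hchar c hxy]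
    exact hside c p
end

section
/- Let G = (V,E) be a finite simple graph and a* ≥ 1 an integer such that every nonempty subgraph H of G satisfies |E(H)| ≤ a*·|V(H)|. Suppose each edge e is given a finite palette Q(e) of colors with |Q(e)| ≥ 4·a*. Then there is a choice φ(e) ∈ Q(e) for every edge e such that for each color c the set of edges with φ(e) = c is a star forest. -/
/-- If `G` is a finite simple graph and `a* ≥ 1` is an integer such that every
vertex subset `S` spans at most `a*·|S|` edges (pseudoarboricity bound), and every edge has a
palette of at least `4·a*` colors, then `G` has a list star forest decomposition. -/
theorem list_star_forest_decomposition_of_pseudoarboricity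
    {V 𝒞 : Type*} [Fintype V] (G : SimpleGraph V)
    (astar : ℕ) (ha : 1 ≤ astar)
    (hpseudo : ∀ S : Finset V,
      ({e | e ∈ G.edgeSet ∧ ∀ x ∈ e, x ∈ S} : Set (Sym2 V)).ncard ≤ astar * S.card)
    (Q : Sym2 V → Finset 𝒞) (hQ : ∀ e ∈ G.edgeSet, 4 * astar ≤ (Q e).card) :
    ∃ φ : Sym2 V → Option 𝒞,
      (∀ e ∈ G.edgeSet, ∃ c ∈ Q e, φ e = some c) ∧
      ∀ c : 𝒞,
        IsStarForest (SimpleGraph.fromEdgeSet {e | e ∈ G.edgeSet ∧ φ e = some c}) := by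
  classical
  have hEfin : G.edgeSet.Finite := Set.toFinite _
  set E : Finset (Sym2 V) := hEfin.toFinset with hEdef
  have hmemE : ∀ e, e ∈ E ↔ e ∈ G.edgeSet := fun e => hEfin.mem_toFinset
  have hQE : ∀ e : {x // x ∈ E}, 4 * astar ≤ (Q e.1).card :=
    fun e => hQ e.1 ((hmemE e.1).mp e.2)
  -- Hall's theorem: orientation with outdegree ≤ astar
  have hall_cond : ∀ s : Finset {x // x ∈ E},
      s.card ≤ (s.biUnion (fun e =>
        (Finset.univ.filter (fun v => v ∈ e.1)) ×ˢ Finset.range astar)).card := by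
    intro s
    set S : Finset V := s.biUnion (fun e => Finset.univ.filter (fun v => v ∈ e.1)) with hSdef
    have hunion : s.biUnion (fun e =>
        (Finset.univ.filter (fun v => v ∈ e.1)) ×ˢ Finset.range astar)
        = S ×ˢ Finset.range astar := by
      ext ⟨v, i⟩
      simp only [hSdef, Finset.mem_biUnion, Finset.mem_product, Finset.mem_filter,
        Finset.mem_univ, true_and, Finset.mem_range]
      tauto
    have hsub : (↑(s.image Subtype.val) : Set (Sym2 V)) ⊆
        {e | e ∈ G.edgeSet ∧ ∀ x ∈ e, x ∈ S} := by
      intro e he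
      simp only [Finset.coe_image, Set.mem_image, Finset.mem_coe] at he
      obtain ⟨ε, hε, rfl⟩ := he
      refine ⟨(hmemE _).mp ε.2, fun x hx => ?_⟩
      exact Finset.mem_biUnion.mpr ⟨ε, hε, Finset.mem_filter.mpr ⟨Finset.mem_univ _, hx⟩⟩
    have h1 : s.card ≤ astar * S.card := by
      calc s.card = (s.image Subtype.val).card :=
            (Finset.card_image_of_injective _ Subtype.val_injective).symm
        _ = (↑(s.image Subtype.val) : Set (Sym2 V)).ncard := (Set.ncard_coe_finset _).symm
        _ ≤ ({e | e ∈ G.edgeSet ∧ ∀ x ∈ e, x ∈ S} : Set (Sym2 V)).ncard :=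
            Set.ncard_le_ncard hsub (Set.toFinite _)
        _ ≤ astar * S.card := hpseudo S
    rw [hunion, Finset.card_product, Finset.card_range]
    calc s.card ≤ astar * S.card := h1
      _ = S.card * astar := mul_comm _ _
  obtain ⟨f, hfinj, hft⟩ := (Finset.all_card_le_biUnion_card_iff_exists_injective
    (fun e : {x // x ∈ E} =>
      (Finset.univ.filter (fun v => v ∈ e.1)) ×ˢ Finset.range astar)).mp hall_cond
  have hf1 : ∀ e, (f e).1 ∈ e.1 ∧ (f e).2 < astar := by
    intro e
    have := hft e
    simp only [Finset.mem_product, Finset.mem_filter, Finset.mem_univ, true_and,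
      Finset.mem_range] at this
    exact this
  set tl : {x // x ∈ E} → V := fun e => (f e).1 with htldef
  have htl_mem : ∀ e, tl e ∈ e.1 := fun e => (hf1 e).1
  set hd : {x // x ∈ E} → V := fun e => Sym2.Mem.other (htl_mem e) with hhddef
  have hspec : ∀ e, s(tl e, hd e) = e.1 := fun e => Sym2.other_spec (htl_mem e)
  have hadj : ∀ e, G.Adj (tl e) (hd e) := by
    intro e
    have h : e.1 ∈ G.edgeSet := (hmemE _).mp e.2
    rw [← hspec e] at h
    exact h
  have htlhd : ∀ e, tl e ≠ hd e := fun e => (hadj e).ne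
  have htail_bound : ∀ v : V,
      (Finset.univ.filter (fun e : {x // x ∈ E} => tl e = v)).card ≤ astar := by
    intro v
    have h1 : (Finset.univ.filter (fun e : {x // x ∈ E} => tl e = v)).card
        ≤ (Finset.range astar).card := by
      apply Finset.card_le_card_of_injOn (fun e => (f e).2)
      · intro e he
        exact Finset.mem_range.mpr (hf1 e).2
      · intro e he g hg hfg
        simp only [Finset.coe_filter, Set.mem_setOf_eq, Finset.mem_univ, true_and] at he hg
        apply hfinj
        apply Prod.ext
        · show tl e = tl g
          rw [he, hg]
        · exact hfg
    simpa using h1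
  -- the counting lemma: some edge has few conflicts
  have exists_low : ∀ F : Finset {x // x ∈ E}, F.Nonempty →
      ∃ e ∈ F, (F.filter (fun g => g ≠ e ∧
        (tl g = tl e ∨ tl g = hd e ∨ tl e = hd g))).card < 3 * astar := by
    intro F hF
    by_contra hcon
    push_neg at hcon
    have key : ∀ e ∈ F, (F.filter (fun g => g ≠ e ∧
        (tl g = tl e ∨ tl g = hd e ∨ tl e = hd g))).card ≤
        (F.filter (fun g => g ≠ e ∧ tl g = tl e)).card
        + (F.filter (fun g => tl g = hd e)).card
        + (F.filter (fun g => tl e = hd g)).card := by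
      intro e he
      have hsub : F.filter (fun g => g ≠ e ∧ (tl g = tl e ∨ tl g = hd e ∨ tl e = hd g)) ⊆
          ((F.filter (fun g => g ≠ e ∧ tl g = tl e)) ∪ (F.filter (fun g => tl g = hd e)))
          ∪ (F.filter (fun g => tl e = hd g)) := by
        intro g hg
        simp only [Finset.mem_filter, Finset.mem_union] at hg ⊢
        obtain ⟨hgF, hgne, h | h | h⟩ := hg
        · exact Or.inl (Or.inl ⟨hgF, hgne, h⟩)
        · exact Or.inl (Or.inr ⟨hgF, h⟩)
        · exact Or.inr ⟨hgF, h⟩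
      have h1 := Finset.card_le_card hsub
      have h2 := Finset.card_union_le
        ((F.filter (fun g => g ≠ e ∧ tl g = tl e)) ∪ (F.filter (fun g => tl g = hd e)))
        (F.filter (fun g => tl e = hd g))
      have h3 := Finset.card_union_le
        (F.filter (fun g => g ≠ e ∧ tl g = tl e)) (F.filter (fun g => tl g = hd e))
      omega
    have hd1 : ∀ e ∈ F, (F.filter (fun g => g ≠ e ∧ tl g = tl e)).card + 1 ≤ astar := by
      intro e he
      have hnotmem : e ∉ F.filter (fun g => g ≠ e ∧ tl g = tl e) := by
        simp
      have hins : insert e (F.filter (fun g => g ≠ e ∧ tl g = tl e)) ⊆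
          Finset.univ.filter (fun g => tl g = tl e) := by
        intro g hg
        rcases Finset.mem_insert.mp hg with rfl | hg
        · simp
        · simp only [Finset.mem_filter, Finset.mem_univ, true_and] at hg ⊢
          exact hg.2.2
      have h4 := Finset.card_le_card hins
      rw [Finset.card_insert_of_notMem hnotmem] at h4
      exact h4.trans (htail_bound (tl e))
    have hd2 : ∀ e ∈ F, (F.filter (fun g => tl g = hd e)).card ≤ astar := by
      intro e he
      refine (Finset.card_le_card ?_).trans (htail_bound (hd e))
      intro g hg
      simp only [Finset.mem_filter, Finset.mem_univ, true_and] at hg ⊢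
      exact hg.2
    have hd3 : ∑ e ∈ F, (F.filter (fun g => tl e = hd g)).card ≤ astar * F.card := by
      have hswap : ∑ e ∈ F, (F.filter (fun g => tl e = hd g)).card
          = ∑ g ∈ F, (F.filter (fun e => tl e = hd g)).card := by
        simp only [Finset.card_filter]
        exact Finset.sum_comm
      rw [hswap]
      calc ∑ g ∈ F, (F.filter (fun e => tl e = hd g)).card
          ≤ ∑ _g ∈ F, astar := by
            refine Finset.sum_le_sum (fun g hg => ?_)
            refine (Finset.card_le_card ?_).trans (htail_bound (hd g))
            intro x hx
            simp only [Finset.mem_filter, Finset.mem_univ, true_and] at hx ⊢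
            exact hx.2
        _ = astar * F.card := by rw [Finset.sum_const, smul_eq_mul, mul_comm]
    have hsum : (3 * astar + 1) * F.card ≤ 2 * astar * F.card + astar * F.card := by
      calc (3 * astar + 1) * F.card = ∑ _e ∈ F, (3 * astar + 1) := by
            rw [Finset.sum_const, smul_eq_mul, mul_comm]
        _ ≤ ∑ e ∈ F, ((F.filter (fun g => g ≠ e ∧
              (tl g = tl e ∨ tl g = hd e ∨ tl e = hd g))).card + 1) :=
            Finset.sum_le_sum (fun e he => by have := hcon e he; omega)
        _ ≤ ∑ e ∈ F, (2 * astar + (F.filter (fun g => tl e = hd g)).card) := by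
            refine Finset.sum_le_sum (fun e he => ?_)
            have h1 := key e he
            have h2 := hd1 e he
            have h3 := hd2 e he
            omega
        _ = 2 * astar * F.card + ∑ e ∈ F, (F.filter (fun g => tl e = hd g)).card := by
            rw [Finset.sum_add_distrib, Finset.sum_const, smul_eq_mul, mul_comm]
        _ ≤ 2 * astar * F.card + astar * F.card := Nat.add_le_add_left hd3 _
    have hFpos : 0 < F.card := Finset.card_pos.mpr hF
    have heq : 2 * astar * F.card + astar * F.card = 3 * astar * F.card := by ring
    rw [heq] at hsum
    have hlt : 3 * astar * F.card < (3 * astar + 1) * F.card := by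
      have : 3 * astar < 3 * astar + 1 := Nat.lt_succ_self _
      exact (Nat.mul_lt_mul_right hFpos).mpr this
    exact absurd (lt_of_lt_of_le hlt hsum) (lt_irrefl _)
  have hQne : ∀ e : {x // x ∈ E}, (Q e.1).Nonempty := fun e =>
    Finset.card_pos.mp (lt_of_lt_of_le (by omega) (hQE e))
  -- greedy coloring
  have greedy : ∀ n (F : Finset {x // x ∈ E}), F.card ≤ n →
      ∃ col : {x // x ∈ E} → 𝒞, (∀ e ∈ F, col e ∈ Q e.1) ∧
        ∀ e ∈ F, ∀ g ∈ F, e ≠ g →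
          (tl g = tl e ∨ tl g = hd e ∨ tl e = hd g) → col e ≠ col g := by
    intro n
    induction n with
    | zero =>
      intro F hF
      have : F = ∅ := Finset.card_eq_zero.mp (Nat.le_zero.mp hF)
      subst this
      exact ⟨fun e => (hQne e).choose, by simp, by simp⟩
    | succ n ih =>
      intro F hF
      rcases F.eq_empty_or_nonempty with rfl | hne2
      · exact ⟨fun e => (hQne e).choose, by simp, by simp⟩
      obtain ⟨e, he, hdeg⟩ := exists_low F hne2
      obtain ⟨col, hcol1, hcol2⟩ := ih (F.erase e) (by
        have := Finset.card_erase_of_mem he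
        have := Finset.card_pos.mpr hne2
        omega)
      set forb : Finset 𝒞 := ((F.erase e).filter
        (fun g => tl g = tl e ∨ tl g = hd e ∨ tl e = hd g)).image col with hforb
      have hforb_card : forb.card < 3 * astar := by
        calc forb.card ≤ ((F.erase e).filter
              (fun g => tl g = tl e ∨ tl g = hd e ∨ tl e = hd g)).card :=
              Finset.card_image_le
          _ ≤ (F.filter (fun g => g ≠ e ∧
              (tl g = tl e ∨ tl g = hd e ∨ tl e = hd g))).card := by
              refine Finset.card_le_card ?_
              intro g hg
              simp only [Finset.mem_filter, Finset.mem_erase] at hg ⊢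
              exact ⟨hg.1.2, hg.1.1, hg.2⟩
          _ < 3 * astar := hdeg
      have hex : ((Q e.1) \ forb).Nonempty := by
        rw [← Finset.card_pos]
        have h1 := Finset.le_card_sdiff forb (Q e.1)
        have h2 := hQE e
        omega
      obtain ⟨c, hc⟩ := hex
      rw [Finset.mem_sdiff] at hc
      refine ⟨Function.update col e c, ?_, ?_⟩
      · intro g hg
        by_cases hge : g = e
        · subst hge
          rw [Function.update_self]
          exact hc.1
        · rw [Function.update_of_ne hge]
          exact hcol1 g (Finset.mem_erase.mpr ⟨hge, hg⟩)
      · intro g hg g' hg' hne' hcf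
        by_cases h1 : g = e
        · subst h1
          rw [Function.update_self, Function.update_of_ne (Ne.symm hne')]
          intro hEq
          apply hc.2
          rw [hforb]
          exact Finset.mem_image.mpr ⟨g',
            Finset.mem_filter.mpr ⟨Finset.mem_erase.mpr ⟨Ne.symm hne', hg'⟩, hcf⟩, hEq.symm⟩
        · by_cases h2 : g' = e
          · subst h2
            rw [Function.update_of_ne h1, Function.update_self]
            intro hEq
            apply hc.2
            rw [hforb]
            refine Finset.mem_image.mpr ⟨g,
              Finset.mem_filter.mpr ⟨Finset.mem_erase.mpr ⟨h1, hg⟩, ?_⟩, hEq⟩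
            rcases hcf with h | h | h
            · exact Or.inl h.symm
            · exact Or.inr (Or.inr h)
            · exact Or.inr (Or.inl h)
          · rw [Function.update_of_ne h1, Function.update_of_ne h2]
            exact hcol2 g (Finset.mem_erase.mpr ⟨h1, hg⟩) g'
              (Finset.mem_erase.mpr ⟨h2, hg'⟩) hne' hcf
  obtain ⟨col, hcolQ, hcolC⟩ := greedy (Finset.univ.card) Finset.univ le_rfl
  set φ : Sym2 V → Option 𝒞 := fun e => if h : e ∈ E then some (col ⟨e, h⟩) else none
    with hφdef
  refine ⟨φ, ?_, ?_⟩
  · intro e he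
    have h : e ∈ E := (hmemE e).mpr he
    refine ⟨col ⟨e, h⟩, hcolQ ⟨e, h⟩ (Finset.mem_univ _), ?_⟩
    simp only [hφdef]
    rw [dif_pos h]
  · intro c
    have hmem : ∀ e : Sym2 V, (e ∈ G.edgeSet ∧ φ e = some c) ↔
        ∃ h : e ∈ E, col ⟨e, h⟩ = c := by
      intro e
      constructor
      · rintro ⟨h1, h2⟩
        have h : e ∈ E := (hmemE e).mpr h1
        simp only [hφdef] at h2
        rw [dif_pos h] at h2
        exact ⟨h, Option.some_injective _ h2⟩
      · rintro ⟨h, hcol⟩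
        refine ⟨(hmemE e).mp h, ?_⟩
        simp only [hφdef]
        rw [dif_pos h, hcol]
    have noConf : ∀ ε ζ : {x // x ∈ E}, col ε = c → col ζ = c → ε ≠ ζ →
        ¬ (tl ζ = tl ε ∨ tl ζ = hd ε ∨ tl ε = hd ζ) := by
      intro ε ζ h1 h2 hne' hcf
      exact hcolC ε (Finset.mem_univ _) ζ (Finset.mem_univ _) hne' hcf (h1.trans h2.symm)
    set hub : V → V := fun x =>
      if h : ∃ ε : {x' // x' ∈ E}, col ε = c ∧ tl ε = x then hd h.choose else x with hhub
    have hub_tail : ∀ ε : {x' // x' ∈ E}, col ε = c → hub (tl ε) = hd ε := by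
      intro ε hε
      have hexε : ∃ ζ : {x' // x' ∈ E}, col ζ = c ∧ tl ζ = tl ε := ⟨ε, hε, rfl⟩
      simp only [hhub]
      rw [dif_pos hexε]
      obtain ⟨h1, h2⟩ := hexε.choose_spec
      have heq : hexε.choose = ε := by
        by_contra hnee
        exact noConf hexε.choose ε h1 hε hnee (Or.inl h2.symm)
      rw [heq]
    have hub_head : ∀ ε : {x' // x' ∈ E}, col ε = c → hub (hd ε) = hd ε := by
      intro ε hε
      have hnex : ¬ ∃ ζ : {x' // x' ∈ E}, col ζ = c ∧ tl ζ = hd ε := by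
        rintro ⟨ζ, hζc, hζt⟩
        by_cases hzε : ζ = ε
        · subst hzε
          exact htlhd ζ hζt
        · exact noConf ε ζ hε hζc (Ne.symm hzε) (Or.inr (Or.inl hζt))
      simp only [hhub]
      rw [dif_neg hnex]
    intro v
    have edge_lem : ∀ a b : V,
        (SimpleGraph.fromEdgeSet {e | e ∈ G.edgeSet ∧ φ e = some c}).Adj a b →
        hub a = hub b ∧ (a = hub a ∨ b = hub a) := by
      intro a b hab
      rw [SimpleGraph.fromEdgeSet_adj] at hab
      obtain ⟨hmem', hne'⟩ := hab
      obtain ⟨hE', hcol'⟩ := (hmem s(a, b)).mp hmem'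
      set ε : {x // x ∈ E} := ⟨s(a, b), hE'⟩ with hεdef
      have hsp : s(tl ε, hd ε) = s(a, b) := hspec ε
      rw [Sym2.eq_iff] at hsp
      rcases hsp with ⟨h1, h2⟩ | ⟨h1, h2⟩
      · have e1 : hub a = b := by
          have h := hub_tail ε hcol'
          rw [h1, h2] at h
          exact h
        have e2 : hub b = b := by
          have h := hub_head ε hcol'
          rw [h2] at h
          exact h
        constructor
        · rw [e1, e2]
        · right
          rw [e1]
      · have e1 : hub b = a := by
          have h := hub_tail ε hcol'
          rw [h1, h2] at h
          exact h
        have e2 : hub a = a := by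
          have h := hub_head ε hcol'
          rw [h2] at h
          exact h
        constructor
        · rw [e2, e1]
        · left
          rw [e2]
    have reach_lem : ∀ (x y : V)
        (w : (SimpleGraph.fromEdgeSet {e | e ∈ G.edgeSet ∧ φ e = some c}).Walk x y),
        hub x = hub y := by
      intro x y w
      induction w with
      | nil => rfl
      | cons h p ih => exact ((edge_lem _ _ h).1).trans ih
    refine ⟨hub v, ?_⟩
    intro a b hab hva
    obtain ⟨w⟩ := hva
    have h2 : hub v = hub a := reach_lem v a w
    rcases (edge_lem a b hab).2 with h3 | h3
    · left
      rw [h3, ← h2]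
    · right
      rw [h3, ← h2]
end

section
/- There is a universal constant K > 0 with the following property. Let G = (V,E) be a finite simple graph with maximum degree Δ ≥ 2 whose edges can be partitioned into a ≥ 1 forests, let ε ∈ (0,1) satisfy ε²·a ≥ K·log Δ, let 𝒞 be a finite color set, and let Q(e) ⊆ 𝒞 be palettes with |Q(e)| ≥ (1+ε)·a for every edge e. Then there exist partitions 𝒞 = C_{v,0} ⊔ C_{v,1} for each vertex v such that every edge e = uv satisfies |Q(e) ∩ C_{u,0} ∩ C_{v,0}| ≥ (1 + ε/2)·a and |Q(e) ∩ C_{u,1} ∩ C_{v,1}| ≥ ε²·a/200. -/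
open Finset Real

section Prob
open scoped Classical
set_option linter.unusedSectionVars false
variable {C : Type} [Fintype C] [DecidableEq C]

/-- product Bernoulli weight -/
noncomputable def wgt (p : ℝ) (ω : C → Bool) : ℝ := ∏ c : C, (if ω c then p else 1 - p)

lemma wgt_nonneg {p : ℝ} (h0 : 0 ≤ p) (h1 : p ≤ 1) (ω : C → Bool) : 0 ≤ wgt p ω :=
  Finset.prod_nonneg fun c _ => by by_cases h : ω c <;> simp [h] <;> linarith

lemma wgt_factor (p : ℝ) (f : C → Bool → ℝ) :
    ∑ ω : C → Bool, wgt p ω * ∏ c : C, f c (ω c)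
      = ∏ c : C, (p * f c true + (1 - p) * f c false) := by
  have h1 : ∀ ω : C → Bool, wgt p ω * ∏ c : C, f c (ω c)
      = ∏ c : C, ((if ω c then p else 1 - p) * f c (ω c)) := by
    intro ω; rw [wgt, ← Finset.prod_mul_distrib]
  simp_rw [h1]
  rw [← Fintype.piFinset_univ,
    ← Finset.prod_univ_sum (t := fun _ : C => (univ : Finset Bool))
      (f := fun c b => (if b = true then p else 1 - p) * f c b)]
  simp [mul_comm]

/-- probability of an event -/
noncomputable def Pr (p : ℝ) (E : (C → Bool) → Prop) : ℝ :=
  ∑ ω : C → Bool, if E ω then wgt p ω else 0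

lemma Pr_mono {p : ℝ} (h0 : 0 ≤ p) (h1 : p ≤ 1) {E F : (C → Bool) → Prop}
    (h : ∀ ω, E ω → F ω) : Pr p E ≤ Pr p F := by
  apply Finset.sum_le_sum
  intro ω _
  by_cases hE : E ω
  · simp only [hE, if_true, h ω hE]
    exact le_refl _
  · simp only [hE, if_false]
    by_cases hF : F ω <;> simp [hF, wgt_nonneg h0 h1 ω]

lemma Pr_or_le {p : ℝ} (h0 : 0 ≤ p) (h1 : p ≤ 1) (E F : (C → Bool) → Prop) :
    Pr p (fun ω => E ω ∨ F ω) ≤ Pr p E + Pr p F := by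
  rw [Pr, Pr, Pr, ← Finset.sum_add_distrib]
  apply Finset.sum_le_sum
  intro ω _
  have := wgt_nonneg h0 h1 ω
  by_cases hE : E ω <;> by_cases hF : F ω <;> simp [hE, hF] <;> linarith

lemma sum_wgt (p : ℝ) : ∑ ω : C → Bool, wgt p ω = 1 := by
  have := wgt_factor (C := C) p (fun _ _ => 1)
  simpa using this

/-- union bound existence -/
lemma exists_good {p : ℝ} (h0 : 0 ≤ p) (h1 : p ≤ 1) {ι : Type} (J : Finset ι)
    (Bad : ι → (C → Bool) → Prop) (h : ∑ u ∈ J, Pr p (Bad u) < 1) :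
    ∃ ω : C → Bool, ∀ u ∈ J, ¬ Bad u ω := by
  by_contra hc
  push_neg at hc
  have key : (1 : ℝ) ≤ ∑ u ∈ J, Pr p (Bad u) := by
    rw [← sum_wgt (C := C) p]
    simp_rw [Pr]
    rw [Finset.sum_comm]
    apply Finset.sum_le_sum
    intro ω _
    obtain ⟨u, hu, hBad⟩ := hc ω
    calc wgt p ω = if Bad u ω then wgt p ω else 0 := by simp [hBad]
      _ ≤ ∑ u' ∈ J, if Bad u' ω then wgt p ω else 0 := by
          apply Finset.single_le_sum (f := fun u' => if Bad u' ω then wgt p ω else 0) _ hu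
          intro i _
          by_cases hB : Bad i ω <;> simp [hB, wgt_nonneg h0 h1 ω]
  linarith

/-- the mgf of the number of selected elements of S -/
lemma mgf_eq (p s : ℝ) (S : Finset C) :
    ∑ ω : C → Bool, wgt p ω * exp (s * ((S.filter fun c => ω c = true).card : ℝ))
      = (p * exp s + (1 - p)) ^ S.card := by
  have h1 : ∀ ω : C → Bool, exp (s * ((S.filter fun c => ω c = true).card : ℝ))
      = ∏ c : C, (if c ∈ S then (if ω c then exp s else 1) else 1) := by
    intro ω
    rw [mul_comm, Real.exp_nat_mul]
    rw [Finset.prod_ite_mem Finset.univ S (fun c => if ω c then exp s else 1)]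
    rw [Finset.univ_inter, ← Finset.prod_filter, Finset.prod_const]
  simp_rw [h1]
  rw [wgt_factor p (fun c b => if c ∈ S then (if b then exp s else 1) else 1)]
  calc ∏ c : C, (p * (if c ∈ S then (if (true : Bool) then exp s else 1) else 1)
          + (1 - p) * (if c ∈ S then (if (false : Bool) then exp s else 1) else 1))
      = ∏ c : C, (if c ∈ S then (p * exp s + (1 - p)) else 1) := by
        apply Finset.prod_congr rfl; intro c _; by_cases h : c ∈ S <;> simp [h]
    _ = (p * exp s + (1 - p)) ^ S.card := by
        rw [Finset.prod_ite_mem Finset.univ S fun _ => p * exp s + (1-p)]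
        rw [Finset.univ_inter, Finset.prod_const]

end Prob

section Tails
open scoped Classical
variable {C : Type} [Fintype C] [DecidableEq C]

lemma Pr_le_exp {p r : ℝ} (h0 : 0 ≤ p) (h1 : p ≤ 1) (S : Finset C)
    (E : (C → Bool) → Prop) (s : ℝ)
    (hpt : ∀ ω, E ω → 0 ≤ s * ((S.filter fun c => ω c = true).card : ℝ) + r) :
    Pr p E ≤ exp r * (p * exp s + (1 - p)) ^ S.card := by
  have key : Pr p E ≤ ∑ ω : C → Bool,
      wgt p ω * (exp r * exp (s * ((S.filter fun c => ω c = true).card : ℝ))) := by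
    apply Finset.sum_le_sum
    intro ω _
    by_cases hE : E ω
    · simp only [hE, if_true]
      have h2 : (1:ℝ) ≤ exp r * exp (s * ((S.filter fun c => ω c = true).card : ℝ)) := by
        rw [← Real.exp_add]
        rw [show r + s * ((S.filter fun c => ω c = true).card : ℝ)
          = s * ((S.filter fun c => ω c = true).card : ℝ) + r by ring]
        exact Real.one_le_exp (hpt ω hE)
      nlinarith [wgt_nonneg h0 h1 ω]
    · simp only [hE, if_false]
      have := wgt_nonneg h0 h1 ω
      have h3 := Real.exp_pos r
      exact mul_nonneg this (by positivity)
  calc Pr p E ≤ _ := key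
    _ = exp r * ∑ ω : C → Bool,
          wgt p ω * exp (s * ((S.filter fun c => ω c = true).card : ℝ)) := by
        rw [Finset.mul_sum]; apply Finset.sum_congr rfl; intro ω _; ring
    _ = exp r * (p * exp s + (1 - p)) ^ S.card := by rw [mgf_eq]

lemma base_pow_le {p x : ℝ} (h0 : 0 ≤ p) (h1 : p ≤ 1) (hx : 0 ≤ x) (n : ℕ) :
    (p * exp (-x) + (1 - p)) ^ n ≤ exp (-(p * (1 - exp (-x)) * n)) := by
  have hb0 : (0:ℝ) ≤ p * exp (-x) + (1 - p) := by
    have := Real.exp_pos (-x); nlinarith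
  have hb : p * exp (-x) + (1 - p) ≤ exp (-(p * (1 - exp (-x)))) := by
    have := Real.add_one_le_exp (-(p * (1 - exp (-x))))
    linarith
  calc (p * exp (-x) + (1 - p)) ^ n ≤ exp (-(p * (1 - exp (-x)))) ^ n :=
        pow_le_pow_left₀ hb0 hb n
    _ = exp (-(p * (1 - exp (-x)) * n)) := by
        rw [← Real.exp_nat_mul]; congr 1; ring

lemma base_pow_le' {p x : ℝ} (h0 : 0 ≤ p) (h1 : p ≤ 1) (hx : 0 ≤ x) (n : ℕ) :
    (p * exp x + (1 - p)) ^ n ≤ exp (p * (exp x - 1) * n) := by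
  have hb0 : (0:ℝ) ≤ p * exp x + (1 - p) := by
    have := Real.one_le_exp hx; nlinarith
  have hb : p * exp x + (1 - p) ≤ exp (p * (exp x - 1)) := by
    have := Real.add_one_le_exp (p * (exp x - 1))
    linarith
  calc (p * exp x + (1 - p)) ^ n ≤ exp (p * (exp x - 1)) ^ n :=
        pow_le_pow_left₀ hb0 hb n
    _ = exp (p * (exp x - 1) * n) := by rw [← Real.exp_nat_mul]; congr 1; ring

/-- lower tail: probability that `|S ∩ T|` is below `η`. -/
lemma Pr_true_lt {p t η m : ℝ} (h0 : 0 ≤ p) (h1 : p ≤ 1) (ht : 0 ≤ t)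
    (S : Finset C) (hm : m ≤ (S.card : ℝ)) :
    Pr p (fun ω => ((S.filter fun c => ω c = true).card : ℝ) < η)
      ≤ exp (t * η - p * (1 - exp (-t)) * m) := by
  have h := Pr_le_exp (r := t * η) h0 h1 S
    (fun ω => ((S.filter fun c => ω c = true).card : ℝ) < η) (-t)
    (fun ω hE => by nlinarith)
  have hcoef : 0 ≤ p * (1 - exp (-t)) := by
    have : exp (-t) ≤ 1 := Real.exp_le_one_iff.2 (by linarith)
    nlinarith
  calc Pr p _ ≤ exp (t * η) * (p * exp (-t) + (1 - p)) ^ S.card := h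
    _ ≤ exp (t * η) * exp (-(p * (1 - exp (-t)) * S.card)) := by
        have := base_pow_le h0 h1 ht (S.card) (x := t)
        have he : (0:ℝ) < exp (t * η) := Real.exp_pos _
        nlinarith
    _ = exp (t * η - p * (1 - exp (-t)) * S.card) := by
        rw [← Real.exp_add]
        congr 1
        try ring
    _ ≤ exp (t * η - p * (1 - exp (-t)) * m) := by
        apply Real.exp_le_exp.2; nlinarith

/-- upper tail for the complement: probability that `|S \ T|` is below `α - d`. -/
lemma Pr_false_lt {p t α d : ℝ} (h0 : 0 ≤ p) (h1 : p ≤ 1) (ht : 0 ≤ t)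
    (hpt : p * (exp t - 1) ≤ t) (hd : 0 ≤ d)
    (S : Finset C) (hα : α ≤ (S.card : ℝ)) :
    Pr p (fun ω => ((S.filter fun c => ¬ ω c = true).card : ℝ) < α - d)
      ≤ exp (p * α * (exp t - 1) - t * d) := by
  have hsplit : ∀ ω : C → Bool, ((S.filter fun c => ¬ ω c = true).card : ℝ)
      = (S.card : ℝ) - ((S.filter fun c => ω c = true).card : ℝ) := by
    intro ω
    have := Finset.card_filter_add_card_filter_not
      (s := S) (p := fun c => ω c = true)
    push_cast [← this]
    ring
  have h := Pr_le_exp (r := -(t * ((S.card : ℝ) - α + d))) h0 h1 S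
    (fun ω => ((S.filter fun c => ¬ ω c = true).card : ℝ) < α - d) t
    (fun ω hE => by
      have := hsplit ω
      nlinarith)
  have hept : (1:ℝ) ≤ exp t := Real.one_le_exp ht
  calc Pr p _ ≤ exp (-(t * ((S.card : ℝ) - α + d))) * (p * exp t + (1 - p)) ^ S.card := h
    _ ≤ exp (-(t * ((S.card : ℝ) - α + d))) * exp (p * (exp t - 1) * S.card) := by
        have := base_pow_le' h0 h1 ht (S.card) (x := t)
        have he : (0:ℝ) < exp (-(t * ((S.card : ℝ) - α + d))) := Real.exp_pos _
        nlinarith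
    _ = exp (p * (exp t - 1) * S.card - t * ((S.card : ℝ) - α + d)) := by
        rw [← Real.exp_add]; congr 1; ring
    _ ≤ exp (p * α * (exp t - 1) - t * d) := by
        apply Real.exp_le_exp.2
        have hn : α ≤ (S.card : ℝ) := hα
        nlinarith

end Tails
open Real

lemma exp_quarter_lt : exp (1/4 : ℝ) < 1.3 := by
  by_contra hc
  push_neg at hc
  have h : exp (1/4:ℝ) ^ 4 = exp 1 := by
    rw [← Real.exp_nat_mul]; norm_num
  have h2 : (1.3:ℝ)^4 ≤ exp (1/4:ℝ)^4 :=
    pow_le_pow_left₀ (by norm_num) hc 4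
  have h3 := Real.exp_one_lt_d9
  rw [h] at h2
  norm_num at h2
  linarith

lemma exp_neg_one_le : exp (-1 : ℝ) ≤ 0.391 := by
  have h : exp (1/8:ℝ) ^ 8 = exp 1 := by
    rw [← Real.exp_nat_mul]; norm_num
  have h1 : (9/8:ℝ) ≤ exp (1/8:ℝ) := by
    have := Real.add_one_le_exp (1/8:ℝ); linarith
  have h2 : ((9:ℝ)/8)^8 ≤ exp (1/8:ℝ)^8 :=
    pow_le_pow_left₀ (by norm_num) h1 8
  rw [h] at h2
  have h3 : (2.56:ℝ) ≤ exp 1 := by norm_num at h2 ⊢; linarith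
  rw [Real.exp_neg]
  rw [inv_le_comm₀ (by positivity) (by norm_num)]
  linarith

lemma exp_neg_sixth_le : exp (-(1/6) : ℝ) ≤ 0.8494 := by
  have h : exp (-(1/24):ℝ) ^ 4 = exp (-(1/6)) := by
    rw [← Real.exp_nat_mul]; norm_num
  have h1 : exp (-(1/24):ℝ) ≤ 24/25 := by
    rw [Real.exp_neg, inv_le_comm₀ (Real.exp_pos _) (by norm_num)]
    have := Real.add_one_le_exp (1/24:ℝ); linarith
  have h2 : exp (-(1/24):ℝ)^4 ≤ ((24:ℝ)/25)^4 :=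
    pow_le_pow_left₀ (le_of_lt (Real.exp_pos _)) h1 4
  rw [h] at h2
  norm_num at h2 ⊢
  linarith

/-- numeric bound for the false-side tail -/
lemma numF {ε A α : ℝ} (hε0 : 0 < ε) (hε1 : ε < 1) (hA : 1 ≤ A) (hα0 : 0 ≤ α)
    (hα : α ≤ 2*A) :
    ε/10 * α * (exp (1/4) - 1) - 1/4 * (ε*A/4) ≤ -(ε^2*A/50000) := by
  have hE := exp_quarter_lt
  have hE0 : (1:ℝ) ≤ exp (1/4) := Real.one_le_exp (by norm_num)
  have key : α * (exp (1/4) - 1) ≤ 2*A*(0.3:ℝ) :=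
    mul_le_mul hα (by linarith) (by linarith) (by linarith)
  have hεA : 0 < ε*A := by nlinarith
  nlinarith [mul_le_mul_of_nonneg_right (le_of_lt hε1) (le_of_lt hεA),
    mul_le_mul_of_nonneg_left key (by linarith : (0:ℝ) ≤ ε/10)]

/-- numeric bound for the fresh true-side tail (t = 1) -/
lemma numT1 {ε A : ℝ} (hε0 : 0 < ε) (hε1 : ε < 1) (hA : 1 ≤ A) :
    1 * (ε*A/17) - ε/10 * (1 - exp (-1)) * A ≤ -(ε^2*A/50000) := by
  have hE := exp_neg_one_le
  have hεA : 0 < ε*A := by nlinarith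
  nlinarith [mul_le_mul_of_nonneg_right (le_of_lt hε1) (le_of_lt hεA),
    mul_le_mul_of_nonneg_right hE (le_of_lt hεA)]

/-- numeric bound for the done true-side tail (t = 1/6) -/
lemma numT2 {ε A : ℝ} (hε0 : 0 < ε) (hε1 : ε < 1) (hA : 1 ≤ A) :
    1/6 * (ε^2*A/200) - ε/10 * (1 - exp (-(1/6))) * (ε*A/17) ≤ -(ε^2*A/50000) := by
  have hE := exp_neg_sixth_le
  have hεA : 0 < ε*A := by nlinarith
  have hε2A : 0 < ε^2*A := by positivity
  nlinarith [mul_le_mul_of_nonneg_right hE (le_of_lt hε2A)]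

set_option maxHeartbeats 1000000

/-- There is a universal constant `K > 0` such that for every finite simple
graph with maximum degree `Δ ≥ 2` whose edges can be partitioned into `a ≥ 1` forests, every
`ε ∈ (0,1)` with `ε²·a ≥ K·log Δ`, and palettes `Q(e) ⊆ 𝒞` of size at least `(1+ε)·a`, there
is a vertex-color-splitting `𝒞 = C_{v,0} ⊔ C_{v,1}` (encoded as `Cs : V → Bool → Finset 𝒞`)
such that every edge `e = uv` satisfies `|Q(e) ∩ C_{u,0} ∩ C_{v,0}| ≥ (1+ε/2)·a` and
`|Q(e) ∩ C_{u,1} ∩ C_{v,1}| ≥ ε²·a/200`. -/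
theorem palette_partition_exists :
    ∃ K : ℝ, 0 < K ∧
      ∀ (V : Type) [Fintype V] [DecidableEq V] (G : SimpleGraph V) [DecidableRel G.Adj]
        (Δ a : ℕ),
        G.maxDegree = Δ → 2 ≤ Δ → 1 ≤ a →
        (∃ φ : Sym2 V → Fin a, ∀ c : Fin a,
          (SimpleGraph.fromEdgeSet {e | e ∈ G.edgeSet ∧ φ e = c}).IsAcyclic) →
        ∀ ε : ℝ, 0 < ε → ε < 1 → K * Real.log Δ ≤ ε ^ 2 * (a : ℝ) →
        ∀ (𝒞 : Type) [Fintype 𝒞] [DecidableEq 𝒞] (Q : Sym2 V → Finset 𝒞),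
          (∀ e ∈ G.edgeSet, (1 + ε) * (a : ℝ) ≤ ((Q e).card : ℝ)) →
          ∃ Cs : V → Bool → Finset 𝒞,
            (∀ v : V, Cs v false ∪ Cs v true = Finset.univ ∧
              Disjoint (Cs v false) (Cs v true)) ∧
            ∀ e ∈ G.edgeSet,
              (1 + ε / 2) * (a : ℝ) ≤
                (((Q e).filter (fun c => ∀ x ∈ e, c ∈ Cs x false)).card : ℝ) ∧
              ε ^ 2 * (a : ℝ) / 200 ≤
                (((Q e).filter (fun c => ∀ x ∈ e, c ∈ Cs x true)).card : ℝ) := by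
  classical
  refine ⟨1000000, by norm_num, ?_⟩
  intro V _ _ G _ Δ a hΔdeg hΔ2 ha _ ε hε0 hε1 hK 𝒞 _ _ Q hQ
  set A : ℝ := (a : ℝ) with hAdef
  have hA : 1 ≤ A := by rw [hAdef]; exact_mod_cast ha
  have hΔ2R : (2:ℝ) ≤ (Δ:ℝ) := by exact_mod_cast hΔ2
  have hlogΔ : 0 < Real.log Δ := Real.log_pos (by linarith)
  have hp0 : (0:ℝ) ≤ ε/10 := by linarith
  have hp1 : ε/10 ≤ 1 := by linarith
  -- the exponential bound used for every bad event
  have hExpBound : Real.exp (-(ε^2*A/50000)) ≤ ((Δ:ℝ)^20)⁻¹ := by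
    have h1 : (20:ℝ) * Real.log Δ ≤ ε^2*A/50000 := by linarith
    have h2 : Real.exp ((20:ℝ) * Real.log Δ) = (Δ:ℝ)^20 := by
      rw [show ((20:ℝ)) = ((20:ℕ):ℝ) by norm_num, Real.exp_nat_mul,
        Real.exp_log (by linarith)]
    rw [Real.exp_neg]
    apply inv_anti₀ (by positivity)
    rw [← h2]
    exact Real.exp_le_exp.2 h1
  -- main induction over processed vertices
  have key : ∀ s : Finset V, ∃ T : V → Finset 𝒞,
      ∀ e ∈ G.edgeSet, ∀ u v : V, e = s(u,v) →
        ((u ∈ s ∧ v ∈ s) →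
          ((1+ε/2)*A ≤ ((Q e \ (T u ∪ T v)).card : ℝ) ∧
            ε^2*A/200 ≤ ((Q e ∩ (T u ∩ T v)).card : ℝ))) ∧
        ((u ∈ s ∧ v ∉ s) →
          ((1+3*ε/4)*A ≤ ((Q e \ T u).card : ℝ) ∧
            ε*A/17 ≤ ((Q e ∩ T u).card : ℝ))) := by
    intro s
    induction s using Finset.induction_on with
    | empty =>
        exact ⟨fun _ => ∅, fun e he u v huv => by simp⟩
    | @insert w s' hw ih =>
        obtain ⟨T, hT⟩ := ih
        -- one random-subset step at vertex w
        set Auf : V → Finset 𝒞 :=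
          fun u => if u ∈ s' then Q (s(u,w)) \ T u else Q (s(u,w)) with hAuf
        set Buf : V → Finset 𝒞 :=
          fun u => if u ∈ s' then Q (s(u,w)) ∩ T u else Q (s(u,w)) with hBuf
        set αf : V → ℝ := fun u => if u ∈ s' then (1+3*ε/4)*A else (1+ε)*A with hαf
        set ηf : V → ℝ := fun u => if u ∈ s' then ε^2*A/200 else ε*A/17 with hηf
        set mf : V → ℝ := fun u => if u ∈ s' then ε*A/17 else A with hmf
        set tf : V → ℝ := fun u => if u ∈ s' then (1/6:ℝ) else 1 with htf
        have hstep : ∃ ω : 𝒞 → Bool, ∀ u ∈ G.neighborFinset w,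
            ¬ ((((Auf u).filter fun c => ¬ ω c = true).card : ℝ) < αf u - ε*A/4 ∨
               (((Buf u).filter fun c => ω c = true).card : ℝ) < ηf u) := by
          apply exists_good hp0 hp1
          -- bound each bad event
          have hone : ∀ u ∈ G.neighborFinset w,
              Pr (ε/10) (fun ω : 𝒞 → Bool =>
                ((((Auf u).filter fun c => ¬ ω c = true).card : ℝ) < αf u - ε*A/4 ∨
                 (((Buf u).filter fun c => ω c = true).card : ℝ) < ηf u))
              ≤ 2 * Real.exp (-(ε^2*A/50000)) := by
            intro u hu
            have hadj : G.Adj w u := (G.mem_neighborFinset w u).1 hu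
            have hedge : s(u,w) ∈ G.edgeSet := (G.mem_edgeSet).2 hadj.symm
            -- size facts
            have hcards : αf u ≤ ((Auf u).card : ℝ) ∧ mf u ≤ ((Buf u).card : ℝ) := by
              by_cases hus : u ∈ s'
              · have h2 := (hT (s(u,w)) hedge u w rfl).2 ⟨hus, hw⟩
                simp only [hAuf, hBuf, hαf, hmf, if_pos hus]
                exact ⟨h2.1, h2.2⟩
              · have h1 := hQ (s(u,w)) hedge
                simp only [hAuf, hBuf, hαf, hmf, if_neg hus]
                exact ⟨h1, by nlinarith⟩
            have hsplit := Pr_or_le (C := 𝒞) hp0 hp1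
              (fun ω => ((((Auf u).filter fun c => ¬ ω c = true).card : ℝ) < αf u - ε*A/4))
              (fun ω => ((((Buf u).filter fun c => ω c = true).card : ℝ) < ηf u))
            refine le_trans hsplit ?_
            have hF : Pr (ε/10) (fun ω : 𝒞 → Bool =>
                ((((Auf u).filter fun c => ¬ ω c = true).card : ℝ) < αf u - ε*A/4))
                ≤ Real.exp (-(ε^2*A/50000)) := by
              have hpt : ε/10 * (Real.exp (1/4) - 1) ≤ 1/4 := by
                have := exp_quarter_lt
                nlinarith
              refine le_trans (Pr_false_lt hp0 hp1 (by norm_num) hpt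
                (by nlinarith : (0:ℝ) ≤ ε*A/4) (Auf u) hcards.1) ?_
              apply Real.exp_le_exp.2
              have hα2 : αf u ≤ 2*A := by
                simp only [hαf]; split <;> nlinarith
              have hα0 : 0 ≤ αf u := by
                simp only [hαf]; split <;> nlinarith
              have := numF hε0 hε1 hA hα0 hα2
              linarith
            have hTr : Pr (ε/10) (fun ω : 𝒞 → Bool =>
                ((((Buf u).filter fun c => ω c = true).card : ℝ) < ηf u))
                ≤ Real.exp (-(ε^2*A/50000)) := by
              by_cases hus : u ∈ s'
              · have hm : ε*A/17 ≤ ((Buf u).card : ℝ) := by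
                  have := hcards.2; simp only [hmf, if_pos hus] at this; exact this
                have h := Pr_true_lt (t := 1/6) (η := ε^2*A/200) hp0 hp1
                  (by norm_num) (Buf u) hm
                have hη : ηf u = ε^2*A/200 := by simp [hηf, hus]
                rw [hη]
                refine le_trans h ?_
                apply Real.exp_le_exp.2
                have := numT2 hε0 hε1 hA
                linarith
              · have hm : A ≤ ((Buf u).card : ℝ) := by
                  have := hcards.2; simp only [hmf, if_neg hus] at this; exact this
                have h := Pr_true_lt (t := 1) (η := ε*A/17) hp0 hp1
                  (by norm_num) (Buf u) hm
                have hη : ηf u = ε*A/17 := by simp [hηf, hus]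
                rw [hη]
                refine le_trans h ?_
                apply Real.exp_le_exp.2
                have := numT1 hε0 hε1 hA
                linarith
            linarith
          calc ∑ u ∈ G.neighborFinset w, Pr (ε/10) (fun ω : 𝒞 → Bool =>
                ((((Auf u).filter fun c => ¬ ω c = true).card : ℝ) < αf u - ε*A/4 ∨
                 (((Buf u).filter fun c => ω c = true).card : ℝ) < ηf u))
              ≤ ∑ _u ∈ G.neighborFinset w, 2 * Real.exp (-(ε^2*A/50000)) :=
                Finset.sum_le_sum hone
            _ = (G.neighborFinset w).card * (2 * Real.exp (-(ε^2*A/50000))) := by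
                rw [Finset.sum_const, nsmul_eq_mul]
            _ ≤ (Δ:ℝ) * (2 * Real.exp (-(ε^2*A/50000))) := by
                have h1 : (G.neighborFinset w).card ≤ Δ := by
                  rw [← hΔdeg]
                  exact G.degree_le_maxDegree w
                have h2 : ((G.neighborFinset w).card : ℝ) ≤ (Δ:ℝ) := by exact_mod_cast h1
                have h3 : (0:ℝ) < 2 * Real.exp (-(ε^2*A/50000)) := by positivity
                nlinarith
            _ < 1 := by
                have h4 : (Δ:ℝ) * (2 * Real.exp (-(ε^2*A/50000)))
                    ≤ (Δ:ℝ) * (2 * ((Δ:ℝ)^20)⁻¹) := by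
                  have hΔpos : (0:ℝ) < (Δ:ℝ) := by linarith
                  nlinarith [hExpBound, Real.exp_pos (-(ε^2*A/50000))]
                have h5 : (Δ:ℝ) * (2 * ((Δ:ℝ)^20)⁻¹) < 1 := by
                  have hΔpos : (0:ℝ) < (Δ:ℝ) := by linarith
                  have hpow : (0:ℝ) < (Δ:ℝ)^20 := by positivity
                  rw [show (Δ:ℝ) * (2 * ((Δ:ℝ)^20)⁻¹) = 2*(Δ:ℝ)/(Δ:ℝ)^20 by ring,
                    div_lt_one hpow]
                  have : (2:ℝ)^19 * (Δ:ℝ) ≤ (Δ:ℝ)^19 * (Δ:ℝ) := by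
                    have := pow_le_pow_left₀ (by norm_num : (0:ℝ) ≤ 2) hΔ2R 19
                    nlinarith
                  calc (2:ℝ) * (Δ:ℝ) < 2^19 * (Δ:ℝ) := by nlinarith
                    _ ≤ (Δ:ℝ)^19 * (Δ:ℝ) := this
                    _ = (Δ:ℝ)^20 := by ring
                linarith
        obtain ⟨ω, hω⟩ := hstep
        set Tw : Finset 𝒞 := Finset.univ.filter (fun c => ω c = true) with hTw
        have convD : ∀ X : Finset 𝒞, X \ Tw = X.filter (fun c => ¬ ω c = true) := by
          intro X; ext c; simp [hTw]
        have convI : ∀ X : Finset 𝒞, X ∩ Tw = X.filter (fun c => ω c = true) := by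
          intro X; ext c; simp [hTw]
        refine ⟨Function.update T w Tw, ?_⟩
        intro e he u v huv
        have hadj : G.Adj u v := (G.mem_edgeSet).1 (huv ▸ he)
        have hne : u ≠ v := G.ne_of_adj hadj
        constructor
        · rintro ⟨hu, hv⟩
          rcases Finset.mem_insert.1 hu with huw | hus' <;>
            rcases Finset.mem_insert.1 hv with hvw | hvs'
          · exact absurd (huw.trans hvw.symm) hne
          · -- u = w, v ∈ s'
            subst huw
            have hvne : v ≠ u := fun h => hw (h ▸ hvs')
            have hgood := hω v ((G.mem_neighborFinset u v).2 hadj)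
            push_neg at hgood
            have hQe : Q e = Q (s(v,u)) := by rw [huv, Sym2.eq_swap]
            have hA1 : Auf v = Q (s(v,u)) \ T v := by simp [hAuf, hvs']
            have hB1 : Buf v = Q (s(v,u)) ∩ T v := by simp [hBuf, hvs']
            rw [Function.update_self, Function.update_of_ne hvne]
            have hsd : Q e \ (Tw ∪ T v) = (Q (s(v,u)) \ T v) \ Tw := by
              rw [hQe]; ext c; simp only [Finset.mem_sdiff, Finset.mem_union]; tauto
            have hin : Q e ∩ (Tw ∩ T v) = (Q (s(v,u)) ∩ T v) ∩ Tw := by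
              rw [hQe]; ext c; simp only [Finset.mem_inter]; tauto
            constructor
            · rw [hsd, convD]
              have h1 := hgood.1
              rw [hA1] at h1
              have hαv : αf v = (1+3*ε/4)*A := by simp [hαf, hvs']
              rw [hαv] at h1
              have : (1+3*ε/4)*A - ε*A/4 = (1+ε/2)*A := by ring
              linarith
            · rw [hin, convI]
              have h2 := hgood.2
              rw [hB1] at h2
              have hηv : ηf v = ε^2*A/200 := by simp [hηf, hvs']
              rw [hηv] at h2
              linarith
          · -- u ∈ s', v = w
            subst hvw
            have hune : u ≠ v := hne
            have hgood := hω u ((G.mem_neighborFinset v u).2 hadj.symm)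
            push_neg at hgood
            have hQe : Q e = Q (s(u,v)) := by rw [huv]
            have hA1 : Auf u = Q (s(u,v)) \ T u := by simp [hAuf, hus']
            have hB1 : Buf u = Q (s(u,v)) ∩ T u := by simp [hBuf, hus']
            rw [Function.update_of_ne hune, Function.update_self]
            have hsd : Q e \ (T u ∪ Tw) = (Q (s(u,v)) \ T u) \ Tw := by
              rw [hQe]; ext c; simp only [Finset.mem_sdiff, Finset.mem_union]; tauto
            have hin : Q e ∩ (T u ∩ Tw) = (Q (s(u,v)) ∩ T u) ∩ Tw := by
              rw [hQe]; ext c; simp only [Finset.mem_inter]; tauto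
            constructor
            · rw [hsd, convD]
              have h1 := hgood.1
              rw [hA1] at h1
              have hαv : αf u = (1+3*ε/4)*A := by simp [hαf, hus']
              rw [hαv] at h1
              have : (1+3*ε/4)*A - ε*A/4 = (1+ε/2)*A := by ring
              linarith
            · rw [hin, convI]
              have h2 := hgood.2
              rw [hB1] at h2
              have hηv : ηf u = ε^2*A/200 := by simp [hηf, hus']
              rw [hηv] at h2
              linarith
          · -- both in s'
            have hune : u ≠ w := fun h => hw (h ▸ hus')
            have hvne : v ≠ w := fun h => hw (h ▸ hvs')
            rw [Function.update_of_ne hune, Function.update_of_ne hvne]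
            exact (hT e he u v huv).1 ⟨hus', hvs'⟩
        · rintro ⟨hu, hv⟩
          have hvw : v ≠ w := fun h => hv (h ▸ Finset.mem_insert_self w s')
          have hvs' : v ∉ s' := fun h => hv (Finset.mem_insert_of_mem h)
          rcases Finset.mem_insert.1 hu with huw | hus'
          · -- u = w, v fresh
            subst huw
            have hgood := hω v ((G.mem_neighborFinset u v).2 hadj)
            push_neg at hgood
            have hQe : Q e = Q (s(v,u)) := by rw [huv, Sym2.eq_swap]
            have hA1 : Auf v = Q (s(v,u)) := by simp [hAuf, hvs']
            have hB1 : Buf v = Q (s(v,u)) := by simp [hBuf, hvs']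
            rw [Function.update_self]
            constructor
            · rw [hQe, convD]
              have h1 := hgood.1
              rw [hA1] at h1
              have hαv : αf v = (1+ε)*A := by simp [hαf, hvs']
              rw [hαv] at h1
              have : (1+ε)*A - ε*A/4 = (1+3*ε/4)*A := by ring
              linarith
            · rw [hQe, convI]
              have h2 := hgood.2
              rw [hB1] at h2
              have hηv : ηf v = ε*A/17 := by simp [hηf, hvs']
              rw [hηv] at h2
              linarith
          · -- u ∈ s', v fresh
            have hune : u ≠ w := fun h => hw (h ▸ hus')
            rw [Function.update_of_ne hune]
            exact (hT e he u v huv).2 ⟨hus', hvs'⟩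
  -- conclude
  obtain ⟨T, hT⟩ := key Finset.univ
  refine ⟨fun v b => if b then T v else (T v)ᶜ, ?_, ?_⟩
  · intro v
    constructor
    · simp only [Bool.false_eq_true, if_false, if_true]
      ext c; by_cases h : c ∈ T v <;> simp [h]
    · simp only [Bool.false_eq_true, if_false, if_true]
      exact disjoint_compl_left
  · intro e he
    revert he
    refine Sym2.inductionOn e ?_
    intro u v he
    have h1 := (hT (s(u,v)) he u v rfl).1 ⟨Finset.mem_univ u, Finset.mem_univ v⟩
    constructor
    · refine le_trans h1.1 (Nat.cast_le.2 (Finset.card_le_card ?_))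
      intro c hc
      rw [Finset.mem_filter]
      rw [Finset.mem_sdiff, Finset.mem_union] at hc
      refine ⟨hc.1, ?_⟩
      intro x hx
      rw [Sym2.mem_iff] at hx
      show c ∈ (T x)ᶜ
      rw [Finset.mem_compl]
      rcases hx with rfl | rfl <;> tauto
    · refine le_trans (by linarith [h1.2] : ε^2*A/200 ≤ ((Q (s(u,v)) ∩ (T u ∩ T v)).card : ℝ))
        (Nat.cast_le.2 (Finset.card_le_card ?_))
      intro c hc
      rw [Finset.mem_filter]
      rw [Finset.mem_inter, Finset.mem_inter] at hc
      refine ⟨hc.1, ?_⟩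
      intro x hx
      rw [Sym2.mem_iff] at hx
      show c ∈ T x
      rcases hx with rfl | rfl
      · exact hc.2.1
      · exact hc.2.2
end
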